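/- arXiv:2002.10699 — 10 statements merged into one kernel-verified Lean document; each statement's English description precedes it below -/
import Mathlib

section
/- Let α ≥ 2 and let F(z) = Σ_{k=0}^{α−1} z̄^k A_k(z) be a poly-analytic function of order α on the unit disk U, where each A_k is analytic on U with A_k(0) = 0, A_k′(0) = 1 and |A_k(z)| ≤ M for all z ∈ U and all k. Let ρ₁ ∈ (0,1) be the smallest positive root of the equation 1 − M( ρ(2−ρ)/(1−ρ)² + Σ_{k=1}^{α−1} ρ^k(1+k−ρ)/(1−ρ)² ) = 0 (such a root exists since the left-hand side equals 1 at ρ = 0 and tends to −∞ as ρ → 1⁻). Then F is univalent (injective) on the disk {z : |z| < ρ₁}. -/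
open Complex Metric Finset
open scoped Real NNReal Topology

set_option maxHeartbeats 1000000

private lemma hasPS' {f : ℂ → ℂ} (hf : AnalyticOnNhd ℂ f (ball (0:ℂ) 1))
    {r : ℝ≥0} (h0 : 0 < r) (h1 : (r:ℝ) < 1) :
    HasFPowerSeriesOnBall f (cauchyPowerSeries f 0 r) 0 r := by
  refine DifferentiableOn.hasFPowerSeriesOnBall ?_ h0
  intro z hz
  have hz1 : z ∈ ball (0:ℂ) 1 := by
    rw [mem_closedBall, dist_zero_right] at hz
    rw [mem_ball, dist_zero_right]
    exact lt_of_le_of_lt hz h1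
  exact ((hf z hz1).differentiableAt).differentiableWithinAt

private lemma exists_coeff' {f : ℂ → ℂ} {M : ℝ}
    (hf : AnalyticOnNhd ℂ f (ball (0:ℂ) 1)) (hM : ∀ z ∈ ball (0:ℂ) 1, ‖f z‖ ≤ M) :
    ∃ c : ℕ → ℂ, c 0 = f 0 ∧ c 1 = deriv f 0 ∧ (∀ n, ‖c n‖ ≤ M) ∧
      ∀ z ∈ ball (0:ℂ) 1, HasSum (fun n => c n * z ^ n) (f z) := by
  have hhalf := hasPS' hf (r := (1:ℝ≥0)/2) (by norm_num) (by norm_num)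
  set p := cauchyPowerSeries f 0 (((1:ℝ≥0)/2 : ℝ≥0) : ℝ) with hp
  have heq : ∀ r : ℝ≥0, 0 < r → (r:ℝ) < 1 → cauchyPowerSeries f 0 r = p := fun r h0 h1 =>
    ((hasPS' hf h0 h1).hasFPowerSeriesAt).eq_formalMultilinearSeries hhalf.hasFPowerSeriesAt
  refine ⟨p.coeff, ?_, ?_, ?_, ?_⟩
  · exact hhalf.coeff_zero 1
  · exact (hhalf.hasFPowerSeriesAt.deriv).symm
  · intro n
    have key : ∀ r : ℝ≥0, 0 < r → (r:ℝ) < 1 → ‖p.coeff n‖ * (r:ℝ) ^ n ≤ M := by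
      intro r h0 h1
      have hb := norm_cauchyPowerSeries_le f 0 (r:ℝ) n
      rw [heq r h0 h1] at hb
      have hint : (∫ θ : ℝ in (0)..2 * π, ‖f (circleMap 0 r θ)‖) ≤ M * (2*π) := by
        have h2 : ‖∫ θ : ℝ in (0)..2 * π, ‖f (circleMap 0 r θ)‖‖ ≤ M * |2*π - 0| := by
          apply intervalIntegral.norm_integral_le_of_norm_le_const
          intro θ _
          rw [Real.norm_eq_abs, _root_.abs_of_nonneg (norm_nonneg _)]
          apply hM
          rw [mem_ball, dist_zero_right, norm_circleMap_zero,
            _root_.abs_of_nonneg r.coe_nonneg]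
          exact h1
        rw [sub_zero, abs_of_pos Real.two_pi_pos] at h2
        exact le_trans (le_abs_self _) h2
      have hπ := Real.two_pi_pos
      have h2 : ‖p n‖ ≤ M * ((r:ℝ)⁻¹)^n := by
        refine le_trans hb ?_
        rw [_root_.abs_of_nonneg r.coe_nonneg]
        have : (2*π)⁻¹ * (∫ θ : ℝ in (0)..2 * π, ‖f (circleMap 0 r θ)‖) ≤ M := by
          have h3 : (2*π)⁻¹ * (∫ θ : ℝ in (0)..2 * π, ‖f (circleMap 0 r θ)‖)
              ≤ (2*π)⁻¹ * (M * (2*π)) := by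
            apply mul_le_mul_of_nonneg_left hint
            positivity
          have h4 : (2*π)⁻¹ * (M * (2*π)) = M := by field_simp
          linarith
        apply mul_le_mul_of_nonneg_right this
        positivity
      rw [FormalMultilinearSeries.norm_apply_eq_norm_coef] at h2
      calc ‖p.coeff n‖ * (r:ℝ) ^ n ≤ (M * ((r:ℝ)⁻¹)^n) * (r:ℝ)^n :=
            mul_le_mul_of_nonneg_right h2 (by positivity)
        _ = M := by
            rw [mul_assoc, ← mul_pow, inv_mul_cancel₀ (by exact_mod_cast h0.ne'), one_pow, mul_one]
    have ht : Filter.Tendsto (fun x : ℝ => ‖p.coeff n‖ * x ^ n) (𝓝[<] (1:ℝ))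
        (𝓝 (‖p.coeff n‖)) := by
      have h4 : Filter.Tendsto (fun x : ℝ => ‖p.coeff n‖ * x ^ n) (𝓝 (1:ℝ))
          (𝓝 (‖p.coeff n‖ * 1 ^ n)) := by
        exact (tendsto_const_nhds.mul ((continuous_pow n).tendsto 1))
      simpa using h4.mono_left nhdsWithin_le_nhds
    refine le_of_tendsto ht ?_
    filter_upwards [Ioo_mem_nhdsLT_of_mem (show (1:ℝ) ∈ Set.Ioc (0:ℝ) 1 by constructor <;> norm_num)]
      with x hx
    have hx0 : 0 < x := hx.1
    exact key ⟨x, hx0.le⟩ (by exact_mod_cast hx0) hx.2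
  · intro z hz
    rw [mem_ball, dist_zero_right] at hz
    have hz0 : 0 ≤ ‖z‖ := norm_nonneg _
    set r : ℝ≥0 := ⟨(‖z‖+1)/2, by positivity⟩ with hr
    have hrc : (r:ℝ) = (‖z‖+1)/2 := rfl
    have hzr : ‖z‖ < (r:ℝ) := by rw [hrc]; linarith
    have hr0 : 0 < r := by
      rw [← NNReal.coe_lt_coe, hrc]; push_cast; linarith
    have hr1 : (r:ℝ) < 1 := by rw [hrc]; linarith
    have H := hasPS' hf hr0 hr1
    rw [heq r hr0 hr1] at H
    have hmem : z ∈ Metric.eball (0:ℂ) r := by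
      rw [EMetric.mem_ball, edist_zero_right]
      exact_mod_cast hzr
    have hs := H.hasSum hmem
    simp only [zero_add] at hs
    have hfun : (fun n => p.coeff n * z^n) = fun n => p n fun _ => z := by
      funext n
      rw [FormalMultilinearSeries.apply_eq_pow_smul_coeff, smul_eq_mul, mul_comm]
    rw [hfun]
    exact hs

private lemma norm_hasSum_le' {g : ℕ → ℂ} {T : ℂ} {b : ℕ → ℝ} {S : ℝ}
    (hg : HasSum g T) (hb : HasSum b S) (h : ∀ n, ‖g n‖ ≤ b n) : ‖T‖ ≤ S := by
  have hsg : Summable fun n => ‖g n‖ :=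
    Summable.of_nonneg_of_le (fun n => norm_nonneg _) h hb.summable
  calc ‖T‖ = ‖∑' n, g n‖ := by rw [hg.tsum_eq]
    _ ≤ ∑' n, ‖g n‖ := norm_tsum_le_tsum_norm hsg
    _ ≤ ∑' n, b n := hsg.tsum_le_tsum h hb.summable
    _ = S := hb.tsum_eq

private lemma pow_sub_pow_norm_le' {z₁ z₂ : ℂ} {ρ : ℝ} (h1 : ‖z₁‖ ≤ ρ) (h2 : ‖z₂‖ ≤ ρ) (m : ℕ) :
    ‖z₂ ^ (m+1) - z₁ ^ (m+1)‖ ≤ ((m:ℝ)+1) * ρ ^ m * ‖z₂ - z₁‖ := by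
  have hρ : 0 ≤ ρ := le_trans (norm_nonneg _) h1
  rw [← geom_sum₂_mul z₂ z₁ (m+1), norm_mul]
  have hsum : ‖∑ i ∈ range (m+1), z₂ ^ i * z₁ ^ (m + 1 - 1 - i)‖ ≤ ((m:ℝ)+1) * ρ ^ m := by
    calc ‖∑ i ∈ range (m+1), z₂ ^ i * z₁ ^ (m + 1 - 1 - i)‖
        ≤ ∑ i ∈ range (m+1), ‖z₂ ^ i * z₁ ^ (m + 1 - 1 - i)‖ := norm_sum_le _ _
      _ ≤ ∑ _i ∈ range (m+1), ρ ^ m := by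
          apply Finset.sum_le_sum
          intro i hi
          rw [Finset.mem_range] at hi
          rw [norm_mul, norm_pow, norm_pow]
          calc ‖z₂‖^i * ‖z₁‖^(m+1-1-i) ≤ ρ^i * ρ^(m+1-1-i) := by
                apply mul_le_mul (pow_le_pow_left₀ (norm_nonneg _) h2 i)
                  (pow_le_pow_left₀ (norm_nonneg _) h1 _) (by positivity) (by positivity)
            _ = ρ ^ m := by rw [← pow_add]; congr 1; omega
      _ = ((m:ℝ)+1) * ρ ^ m := by
          rw [Finset.sum_const, Finset.card_range, nsmul_eq_mul]; push_cast; ring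
  exact mul_le_mul_of_nonneg_right hsum (norm_nonneg _)

private lemma hasSum_aux' {ρ : ℝ} (h0 : 0 ≤ ρ) (h1 : ρ < 1) :
    HasSum (fun n : ℕ => ((n:ℝ)+1) * ρ ^ n) (1/(1-ρ)^2) := by
  have hne : (1:ℝ) - ρ ≠ 0 := by intro h; linarith [sub_eq_zero.mp h]
  have hg := hasSum_geometric_of_lt_one h0 h1
  have hn := hasSum_coe_mul_geometric_of_norm_lt_one
    (r := ρ) (by rwa [Real.norm_eq_abs, _root_.abs_of_nonneg h0])
  have hfun : (fun n : ℕ => ((n:ℝ)+1)*ρ^n) = fun n : ℕ => (n:ℝ)*ρ^n + ρ^n := by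
    funext n; ring
  rw [hfun, show (1:ℝ)/(1-ρ)^2 = ρ/(1-ρ)^2 + (1-ρ)⁻¹ by field_simp; ring]
  exact hn.add hg

private lemma master' {f : ℂ → ℂ} {M ρ : ℝ}
    (hf : AnalyticOnNhd ℂ f (ball (0:ℂ) 1))
    (hM : ∀ z ∈ ball (0:ℂ) 1, ‖f z‖ ≤ M)
    (hf0 : f 0 = 0) (hρ0 : 0 ≤ ρ) (hρ1 : ρ < 1)
    {z₁ z₂ : ℂ} (h1 : ‖z₁‖ ≤ ρ) (h2 : ‖z₂‖ ≤ ρ) :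
    ‖f z₂ - f z₁‖ ≤ M * (1/(1-ρ)^2) * ‖z₂ - z₁‖
    ∧ ‖f z₁‖ ≤ M * (ρ/(1-ρ))
    ∧ (deriv f 0 = 1 →
        ‖z₂ - z₁‖ - M * (ρ*(2-ρ)/(1-ρ)^2) * ‖z₂ - z₁‖ ≤ ‖f z₂ - f z₁‖) := by
  have hM0 : 0 ≤ M := le_trans (norm_nonneg _) (hM 0 (by simp))
  have hne : (1:ℝ) - ρ ≠ 0 := by intro h; linarith [sub_eq_zero.mp h]
  obtain ⟨c, hc0, hc1, hcM, hcsum⟩ := exists_coeff' hf hM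
  have hz₁ : z₁ ∈ ball (0:ℂ) 1 := by
    rw [mem_ball, dist_zero_right]; linarith
  have hz₂ : z₂ ∈ ball (0:ℂ) 1 := by
    rw [mem_ball, dist_zero_right]; linarith
  rw [hf0] at hc0
  have S₁ := hcsum z₁ hz₁
  have S₂ := hcsum z₂ hz₂
  have D : HasSum (fun n => c n * (z₂^n - z₁^n)) (f z₂ - f z₁) := by
    have := S₂.sub S₁
    simpa only [mul_sub] using this
  set d := ‖z₂ - z₁‖ with hd
  have hdn : 0 ≤ d := norm_nonneg _
  have hterm : ∀ n : ℕ, ‖c (n+1) * (z₂^(n+1) - z₁^(n+1))‖ ≤ M * (((n:ℝ)+1) * ρ^n) * d := by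
    intro n
    rw [norm_mul]
    calc ‖c (n+1)‖ * ‖z₂^(n+1) - z₁^(n+1)‖
        ≤ M * (((n:ℝ)+1) * ρ^n * d) := by
          apply mul_le_mul (hcM _) (pow_sub_pow_norm_le' h1 h2 n) (norm_nonneg _) hM0
      _ = M * (((n:ℝ)+1) * ρ^n) * d := by ring
  have hlip : ‖f z₂ - f z₁‖ ≤ M * (1/(1-ρ)^2) * d := by
    have D1 := (hasSum_nat_add_iff' (f := fun n => c n * (z₂^n - z₁^n)) 1).mpr D
    have hS := ((hasSum_aux' hρ0 hρ1).mul_left M).mul_right d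
    have hb : HasSum (fun n : ℕ => M * (((n:ℝ)+1) * ρ^n) * d) (M * (1/(1-ρ)^2) * d) := hS
    have := norm_hasSum_le' D1 hb hterm
    simpa using this
  refine ⟨hlip, ?_, ?_⟩
  · -- ‖f z₁‖ ≤ M * (ρ/(1-ρ))
    have S1' := (hasSum_nat_add_iff' (f := fun n => c n * z₁^n) 1).mpr S₁
    have hg := (hasSum_geometric_of_lt_one hρ0 hρ1).mul_left (M*ρ)
    have hb : HasSum (fun n : ℕ => (M*ρ) * ρ^n) ((M*ρ) * (1-ρ)⁻¹) := hg
    have hterm1 : ∀ n : ℕ, ‖c (n+1) * z₁^(n+1)‖ ≤ (M*ρ) * ρ^n := by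
      intro n
      rw [norm_mul, norm_pow]
      calc ‖c (n+1)‖ * ‖z₁‖^(n+1) ≤ M * ρ^(n+1) := by
            apply mul_le_mul (hcM _) (pow_le_pow_left₀ (norm_nonneg _) h1 _) (by positivity) hM0
        _ = (M*ρ) * ρ^n := by rw [pow_succ]; ring
    have := norm_hasSum_le' S1' hb hterm1
    simp only [Finset.range_one, Finset.sum_singleton, pow_zero, mul_one, hc0, zero_mul,
      sub_zero] at this
    calc ‖f z₁‖ ≤ (M*ρ) * (1-ρ)⁻¹ := by simpa using this
      _ = M * (ρ/(1-ρ)) := by rw [div_eq_mul_inv]; ring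
  · intro hder
    rw [← hc1] at hder
    have D2 := (hasSum_nat_add_iff' (f := fun n => c n * (z₂^n - z₁^n)) 2).mpr D
    have hS1 := hasSum_aux' hρ0 hρ1
    have hS2 := (hasSum_nat_add_iff' (f := fun n : ℕ => ((n:ℝ)+1) * ρ^n) 1).mpr hS1
    have hb := (hS2.mul_left M).mul_right d
    -- hb : HasSum (fun n => M * ((↑(n+1)+1) * ρ^(n+1)) * d) (M * (1/(1-ρ)^2 - ∑...) * d)
    have hterm2 : ∀ n : ℕ,
        ‖c (n+2) * (z₂^(n+2) - z₁^(n+2))‖ ≤ M * (((↑(n+1):ℝ)+1) * ρ^(n+1)) * d := by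
      intro n
      have := hterm (n+1)
      push_cast at this ⊢
      convert this using 3
    have hle := norm_hasSum_le' D2 hb hterm2
    have hsum2 : (∑ i ∈ range 2, c i * (z₂^i - z₁^i)) = z₂ - z₁ := by
      rw [Finset.sum_range_succ, Finset.sum_range_one]
      simp [hc0, hder]
    have hsum1 : (∑ i ∈ range 1, ((i:ℝ)+1) * ρ^i) = 1 := by simp
    rw [hsum2] at hle
    rw [hsum1] at hle
    -- hle : ‖(f z₂ - f z₁) - (z₂ - z₁)‖ ≤ M * (1/(1-ρ)^2 - 1) * d
    have heq2 : M * (1/(1-ρ)^2 - 1) * d = M * (ρ*(2-ρ)/(1-ρ)^2) * d := by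
      have e : 1/(1-ρ)^2 - 1 = ρ*(2-ρ)/(1-ρ)^2 := by
        field_simp
        ring
      rw [e]
    have htri : d - ‖f z₂ - f z₁‖ ≤ ‖f z₂ - f z₁ - (z₂ - z₁)‖ := by
      have h5 := norm_sub_le (f z₂ - f z₁) (f z₂ - f z₁ - (z₂ - z₁))
      have h6 : f z₂ - f z₁ - (f z₂ - f z₁ - (z₂ - z₁)) = z₂ - z₁ := by ring
      rw [h6] at h5
      linarith
    rw [heq2] at hle
    linarith

private lemma real_ineq' {M ρ d : ℝ} (hM : 0 ≤ M) (hd : 0 ≤ d) (hρ0 : 0 ≤ ρ) (hρ1 : ρ < 1)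
    (m : ℕ) :
    ρ^(m+1) * (M*(1/(1-ρ)^2)*d) + (((m:ℝ)+1)*ρ^m*d) * (M*(ρ/(1-ρ)))
      ≤ M * (ρ^(m+1)*(1+((m:ℝ)+1)-ρ)/(1-ρ)^2) * d := by
  have hne : (1:ℝ) - ρ ≠ 0 := by intro h; linarith [sub_eq_zero.mp h]
  have hu : 0 ≤ ρ^m := pow_nonneg hρ0 m
  have key : M * (ρ^(m+1)*(1+((m:ℝ)+1)-ρ)/(1-ρ)^2) * d
      - (ρ^(m+1) * (M*(1/(1-ρ)^2)*d) + (((m:ℝ)+1)*ρ^m*d) * (M*(ρ/(1-ρ))))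
      = M * ρ^m * ρ * d * ((m:ℝ)*ρ) / (1-ρ)^2 := by
    rw [pow_succ]
    field_simp
    ring
  have hpos : 0 ≤ M * ρ^m * ρ * d * ((m:ℝ)*ρ) / (1-ρ)^2 :=
    div_nonneg (mul_nonneg (mul_nonneg (mul_nonneg (mul_nonneg hM hu) hρ0) hd)
      (mul_nonneg (Nat.cast_nonneg m) hρ0)) (sq_nonneg _)
  linarith

/-- **Landau's theorem for poly-analytic functions (univalence part).**
Let `F(z) = ∑_{k=0}^{α-1} conj(z)^k * A k z` be poly-analytic of order `α ≥ 2` on the unit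
disk, where each `A k` is analytic with `A k 0 = 0`, `(A k)'(0) = 1` and `‖A k z‖ ≤ M`.
If `ρ₁ ∈ (0,1)` is the smallest positive root of
`1 - M*(ρ(2-ρ)/(1-ρ)² + ∑_{k=1}^{α-1} ρ^k (1+k-ρ)/(1-ρ)²) = 0`,
then `F` is injective on the disk of radius `ρ₁`. -/
theorem polyanalytic_landau_univalent
    (α : ℕ) (hα : 2 ≤ α) (A : ℕ → ℂ → ℂ) (M : ℝ) (F : ℂ → ℂ)
    (hAanal : ∀ k < α, AnalyticOnNhd ℂ (A k) (ball (0 : ℂ) 1))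
    (hA0 : ∀ k < α, A k 0 = 0)
    (hA1 : ∀ k < α, deriv (A k) 0 = 1)
    (hAM : ∀ k < α, ∀ z ∈ ball (0 : ℂ) 1, ‖A k z‖ ≤ M)
    (hF : ∀ z ∈ ball (0 : ℂ) 1,
      F z = ∑ k ∈ range α, (starRingEnd ℂ z) ^ k * A k z)
    (ρ₁ : ℝ) (hρ₁pos : 0 < ρ₁) (hρ₁lt : ρ₁ < 1)
    (hroot : 1 - M * (ρ₁ * (2 - ρ₁) / (1 - ρ₁) ^ 2 +
      ∑ k ∈ Ico 1 α, ρ₁ ^ k * (1 + (k : ℝ) - ρ₁) / (1 - ρ₁) ^ 2) = 0)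
    (hsmallest : ∀ ρ : ℝ, 0 < ρ → ρ < 1 →
      1 - M * (ρ * (2 - ρ) / (1 - ρ) ^ 2 +
        ∑ k ∈ Ico 1 α, ρ ^ k * (1 + (k : ℝ) - ρ) / (1 - ρ) ^ 2) = 0 → ρ₁ ≤ ρ) :
    Set.InjOn F (ball (0 : ℂ) ρ₁) := by
  -- positivity of the defining function below ρ₁
  set G : ℝ → ℝ := fun x => 1 - M * (x * (2 - x) / (1 - x) ^ 2 +
      ∑ k ∈ Ico 1 α, x ^ k * (1 + (k : ℝ) - x) / (1 - x) ^ 2) with hG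
  have hGpos : ∀ ρ : ℝ, 0 < ρ → ρ < ρ₁ → 0 < G ρ := by
    intro ρ hρ0 hρρ₁
    have hρ1 : ρ < 1 := hρρ₁.trans hρ₁lt
    by_contra hle
    push_neg at hle
    have hcont : ContinuousOn G (Set.Icc 0 ρ) := by
      have hden : ∀ x ∈ Set.Icc (0:ℝ) ρ, ((1:ℝ) - x) ^ 2 ≠ 0 := by
        intro x hx
        have := hx.2
        have : (0:ℝ) < 1 - x := by linarith
        positivity
      apply ContinuousOn.sub continuousOn_const
      apply ContinuousOn.mul continuousOn_const
      apply ContinuousOn.add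
      · exact ContinuousOn.div (by fun_prop) (by fun_prop) hden
      · apply continuousOn_finset_sum
        intro k _
        exact ContinuousOn.div (by fun_prop) (by fun_prop) hden
    have hG0 : G 0 = 1 := by
      simp only [hG]
      rw [Finset.sum_eq_zero]
      · norm_num
      · intro k hk
        rw [Finset.mem_Ico] at hk
        rw [zero_pow (by omega)]
        ring
    have h0 : (0:ℝ) ∈ Set.Icc (G ρ) (G 0) := by
      constructor
      · exact hle
      · rw [hG0]; norm_num
    obtain ⟨x, hx, hGx⟩ := intermediate_value_Icc' hρ0.le hcont h0
    have hx0 : x ≠ 0 := by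
      intro h
      rw [h, hG0] at hGx
      norm_num at hGx
    have hxpos : 0 < x := lt_of_le_of_ne hx.1 (Ne.symm hx0)
    have hx1 : x < 1 := lt_of_le_of_lt hx.2 hρ1
    have := hsmallest x hxpos hx1 (by simpa [hG] using hGx)
    linarith [hx.2]
  -- main injectivity argument
  intro z₁ hz₁ z₂ hz₂ hFz
  by_contra hne
  rw [mem_ball, dist_zero_right] at hz₁ hz₂
  set ρ : ℝ := max ‖z₁‖ ‖z₂‖ with hρdef
  have h1 : ‖z₁‖ ≤ ρ := le_max_left _ _
  have h2 : ‖z₂‖ ≤ ρ := le_max_right _ _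
  have hρρ₁ : ρ < ρ₁ := max_lt hz₁ hz₂
  have hρ1 : ρ < 1 := hρρ₁.trans hρ₁lt
  have hρ0 : 0 ≤ ρ := le_trans (norm_nonneg _) h1
  have hΔ : z₂ - z₁ ≠ 0 := sub_ne_zero.mpr (Ne.symm hne)
  have hΔpos : 0 < ‖z₂ - z₁‖ := norm_pos_iff.mpr hΔ
  have hρpos : 0 < ρ := by
    have h3 := norm_sub_le z₂ z₁
    by_contra h
    push_neg at h
    have : ‖z₂‖ ≤ 0 := le_trans h2 h
    have : ‖z₁‖ ≤ 0 := le_trans h1 h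
    nlinarith [norm_nonneg z₁, norm_nonneg z₂]
  have hM0 : 0 ≤ M := by
    have := hAM 0 (by omega) 0 (by simp)
    rw [hA0 0 (by omega)] at this
    simpa using this
  have hz₁' : z₁ ∈ ball (0:ℂ) 1 := by rw [mem_ball, dist_zero_right]; linarith
  have hz₂' : z₂ ∈ ball (0:ℂ) 1 := by rw [mem_ball, dist_zero_right]; linarith
  set d := ‖z₂ - z₁‖ with hd
  -- lower bound from A 0
  obtain ⟨_, _, hlow⟩ := master' (hAanal 0 (by omega)) (hAM 0 (by omega))
    (hA0 0 (by omega)) hρ0 hρ1 h1 h2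
  have H0low := hlow (hA1 0 (by omega))
  -- rewrite the identity F z₂ = F z₁
  have hsum : A 0 z₂ - A 0 z₁ = -(∑ k ∈ Ico 1 α,
      ((starRingEnd ℂ z₂) ^ k * A k z₂ - (starRingEnd ℂ z₁) ^ k * A k z₁)) := by
    have h0 : (0:ℂ) = F z₂ - F z₁ := by rw [hFz]; ring
    rw [hF z₁ hz₁', hF z₂ hz₂', ← Finset.sum_sub_distrib, Finset.range_eq_Ico,
      Finset.sum_eq_sum_Ico_succ_bot (by omega : 0 < α)] at h0
    simp only [pow_zero, one_mul] at h0
    linear_combination -h0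
  -- upper bound on the anti-analytic part
  have key : ‖A 0 z₂ - A 0 z₁‖ ≤
      ∑ k ∈ Ico 1 α, M * (ρ^k * (1 + (k:ℝ) - ρ) / (1-ρ)^2) * d := by
    rw [hsum, norm_neg]
    refine le_trans (norm_sum_le _ _) (Finset.sum_le_sum ?_)
    intro k hk
    rw [Finset.mem_Ico] at hk
    obtain ⟨m, rfl⟩ : ∃ m, k = m + 1 := ⟨k - 1, by omega⟩
    obtain ⟨hlip, hval, _⟩ := master' (hAanal (m+1) hk.2) (hAM (m+1) hk.2)
      (hA0 (m+1) hk.2) hρ0 hρ1 h1 h2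
    have e : (starRingEnd ℂ z₂) ^ (m+1) * A (m+1) z₂ - (starRingEnd ℂ z₁) ^ (m+1) * A (m+1) z₁
        = (starRingEnd ℂ z₂) ^ (m+1) * (A (m+1) z₂ - A (m+1) z₁)
          + ((starRingEnd ℂ z₂) ^ (m+1) - (starRingEnd ℂ z₁) ^ (m+1)) * A (m+1) z₁ := by
      ring
    rw [e]
    refine le_trans (norm_add_le _ _) ?_
    rw [norm_mul, norm_mul, norm_pow]
    have hcz : ‖starRingEnd ℂ z₂‖ = ‖z₂‖ := RCLike.norm_conj _
    have hconj : ‖(starRingEnd ℂ z₂) ^ (m+1) - (starRingEnd ℂ z₁) ^ (m+1)‖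
        ≤ ((m:ℝ)+1) * ρ^m * d := by
      rw [← map_pow, ← map_pow, ← map_sub, RCLike.norm_conj]
      exact pow_sub_pow_norm_le' h1 h2 m
    have step1 : ‖starRingEnd ℂ z₂‖ ^ (m+1) * ‖A (m+1) z₂ - A (m+1) z₁‖
          + ‖(starRingEnd ℂ z₂) ^ (m+1) - (starRingEnd ℂ z₁) ^ (m+1)‖ * ‖A (m+1) z₁‖
        ≤ ρ^(m+1) * (M*(1/(1-ρ)^2)*d) + (((m:ℝ)+1)*ρ^m*d) * (M*(ρ/(1-ρ))) := by
      apply add_le_add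
      · apply mul_le_mul _ hlip (norm_nonneg _) (by positivity)
        rw [hcz]
        exact pow_le_pow_left₀ (norm_nonneg _) h2 _
      · exact mul_le_mul hconj hval (norm_nonneg _)
          (by positivity)
    refine le_trans step1 ?_
    have := real_ineq' hM0 (norm_nonneg (z₂ - z₁)) hρ0 hρ1 m
    calc ρ^(m+1) * (M*(1/(1-ρ)^2)*d) + (((m:ℝ)+1)*ρ^m*d) * (M*(ρ/(1-ρ)))
        ≤ M * (ρ^(m+1)*(1+((m:ℝ)+1)-ρ)/(1-ρ)^2) * d := this
      _ = M * (ρ^(m+1) * (1 + (↑(m+1):ℝ) - ρ) / (1-ρ)^2) * d := by push_cast; ring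
  -- combine
  set B : ℝ := ρ * (2 - ρ) / (1 - ρ)^2 with hB
  set t : ℝ := ∑ k ∈ Ico 1 α, ρ^k * (1 + (k:ℝ) - ρ) / (1-ρ)^2 with ht
  have hsum_eq : (∑ k ∈ Ico 1 α, M * (ρ^k * (1 + (k:ℝ) - ρ) / (1-ρ)^2) * d) = M * t * d := by
    rw [ht, Finset.mul_sum, Finset.sum_mul]
  rw [hsum_eq] at key
  have hGρ : 0 < 1 - M * (B + t) := hGpos ρ hρpos hρρ₁
  have hexp : (1 - M * (B + t)) * d = d - M * B * d - M * t * d := by ring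
  have hfinal : 0 < (1 - M * (B + t)) * d := mul_pos hGρ hΔpos
  rw [hexp] at hfinal
  linarith [le_trans H0low (le_trans (le_refl _) key)]
end

section
/- Let α ≥ 2 and let F(z) = Σ_{k=0}^{α−1} z̄^k A_k(z) be a poly-analytic function of order α on the unit disk U, where each A_k is analytic on U with A_k(0) = 0, A_k′(0) = 1 and |A_k(z)| ≤ M for all z ∈ U and all k. Let ρ₁ ∈ (0,1) be the smallest positive root of 1 − M( ρ(2−ρ)/(1−ρ)² + Σ_{k=1}^{α−1} ρ^k(1+k−ρ)/(1−ρ)² ) = 0, and set R₁ = ρ₁ − ρ₁²(1−ρ₁^{α−1})/(1−ρ₁) − M Σ_{k=0}^{α−1} ρ₁^{k+2}/(1−ρ₁). If R₁ > 0, then the image F({z : |z| < ρ₁}) contains the disk {w : |w| < R₁}. -/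
open Complex Metric Finset ENNReal NNReal

set_option maxHeartbeats 1600000

lemma pow_diff_norm_le (z z' : ℂ) (ρ : ℝ) (n : ℕ) (hz : ‖z‖ ≤ ρ) (hz' : ‖z'‖ ≤ ρ) :
    ‖z ^ n - z' ^ n‖ ≤ n * ρ ^ (n - 1) * ‖z - z'‖ := by
  have hρ : 0 ≤ ρ := le_trans (norm_nonneg z) hz
  rw [← geom_sum₂_mul, norm_mul]
  have hsum : ‖∑ i ∈ range n, z ^ i * z' ^ (n - 1 - i)‖ ≤ n * ρ ^ (n - 1) := by
    calc ‖∑ i ∈ range n, z ^ i * z' ^ (n - 1 - i)‖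
        ≤ ∑ i ∈ range n, ‖z ^ i * z' ^ (n - 1 - i)‖ := norm_sum_le _ _
      _ ≤ ∑ i ∈ range n, ρ ^ (n - 1) := by
          refine Finset.sum_le_sum fun i hi => ?_
          rw [norm_mul, norm_pow, norm_pow]
          calc ‖z‖ ^ i * ‖z'‖ ^ (n - 1 - i) ≤ ρ ^ i * ρ ^ (n - 1 - i) := by gcongr
            _ = ρ ^ (n - 1) := by
                rw [← pow_add]
                congr 1
                have := Finset.mem_range.1 hi
                omega
      _ = n * ρ ^ (n - 1) := by rw [Finset.sum_const, card_range, nsmul_eq_mul]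
  exact mul_le_mul_of_nonneg_right hsum (norm_nonneg _)

lemma exists_coeffs {g : ℂ → ℂ} {M : ℝ} (hg : AnalyticOnNhd ℂ g (ball (0:ℂ) 1))
    (hM : ∀ z ∈ ball (0:ℂ) 1, ‖g z‖ ≤ M) :
    ∃ c : ℕ → ℂ, c 0 = g 0 ∧ c 1 = deriv g 0 ∧ (∀ n, ‖c n‖ ≤ M) ∧
      ∀ z : ℂ, ‖z‖ < 1 → HasSum (fun n => c n * z ^ n) (g z) := by
  have hdiff : DifferentiableOn ℂ g (ball (0:ℂ) 1) :=
    fun z hz => (hg z hz).differentiableAt.differentiableWithinAt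
  have hball : ∀ r : ℝ, 0 < r → r < 1 →
      HasFPowerSeriesOnBall g (cauchyPowerSeries g 0 r) 0 (ENNReal.ofReal r) := by
    intro r hr0 hr1
    have h1 : DifferentiableOn ℂ g (closedBall (0:ℂ) (r.toNNReal : ℝ)) := by
      rw [Real.coe_toNNReal r hr0.le]
      exact hdiff.mono (closedBall_subset_ball (by simpa using hr1))
    have h2 := h1.hasFPowerSeriesOnBall (by simpa using hr0)
    rw [Real.coe_toNNReal r hr0.le] at h2
    have hco : (r.toNNReal : ℝ≥0∞) = ENNReal.ofReal r := rfl
    rwa [hco] at h2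
  set p := cauchyPowerSeries g 0 (1/2) with hpdef
  have hp2 : HasFPowerSeriesOnBall g p 0 (ENNReal.ofReal (1/2)) :=
    hball (1/2) (by norm_num) (by norm_num)
  have huniq : ∀ r : ℝ, 0 < r → r < 1 → cauchyPowerSeries g 0 r = p := fun r hr0 hr1 =>
    (hball r hr0 hr1).hasFPowerSeriesAt.eq_formalMultilinearSeries hp2.hasFPowerSeriesAt
  refine ⟨p.coeff, ?_, ?_, ?_, ?_⟩
  · simpa using hp2.coeff_zero (fun _ => 0)
  · rw [hp2.hasFPowerSeriesAt.deriv]; rfl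
  · intro n
    have hM0 : 0 ≤ M := le_trans (norm_nonneg _) (hM 0 (by simp))
    have hbnd : ∀ r : ℝ, 0 < r → r < 1 → ‖p.coeff n‖ ≤ M * (r⁻¹) ^ n := by
      intro r hr0 hr1
      have hle : ‖cauchyPowerSeries g 0 r n‖ ≤ M * (r⁻¹) ^ n := by
        refine (norm_cauchyPowerSeries_le g 0 r n).trans ?_
        rw [abs_of_pos hr0]
        gcongr
        have hInt : (∫ θ : ℝ in (0)..2 * Real.pi, ‖g (circleMap 0 r θ)‖)
            ≤ ∫ _θ : ℝ in (0)..2 * Real.pi, M := by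
          have hcont : Continuous fun θ : ℝ => ‖g (circleMap 0 r θ)‖ := by
            refine Continuous.norm ?_
            refine continuous_iff_continuousAt.2 fun θ => ?_
            have hmem : circleMap 0 r θ ∈ ball (0:ℂ) 1 := by
              simp [circleMap, abs_of_pos hr0, hr1]
            exact ((hg _ hmem).continuousAt).comp (continuous_circleMap 0 r).continuousAt
          refine intervalIntegral.integral_mono_on Real.two_pi_pos.le
            (hcont.intervalIntegrable _ _) intervalIntegrable_const ?_
          intro θ _
          refine hM _ ?_
          simp [circleMap, abs_of_pos hr0, hr1]
        rw [intervalIntegral.integral_const, smul_eq_mul, sub_zero] at hInt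
        have h2pi : (0:ℝ) < (2 * Real.pi) := Real.two_pi_pos
        calc (2 * Real.pi)⁻¹ * ∫ θ : ℝ in (0)..2 * Real.pi, ‖g (circleMap 0 r θ)‖
            ≤ (2 * Real.pi)⁻¹ * (2 * Real.pi * M) := by gcongr
          _ = M := by field_simp
      calc ‖p.coeff n‖ = ‖p n‖ := (p.norm_apply_eq_norm_coef (n := n)).symm
        _ = ‖cauchyPowerSeries g 0 r n‖ := by rw [huniq r hr0 hr1]
        _ ≤ M * (r⁻¹) ^ n := hle
    have htend : Filter.Tendsto (fun r : ℝ => M * (r⁻¹) ^ n) (nhdsWithin 1 (Set.Iio 1))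
        (nhds (M * ((1:ℝ)⁻¹) ^ n)) := by
      refine Filter.Tendsto.mono_left ?_ nhdsWithin_le_nhds
      exact (Filter.Tendsto.pow (continuousAt_inv₀ (by norm_num)) n).const_mul M
    have hfin : ‖p.coeff n‖ ≤ M * ((1:ℝ)⁻¹) ^ n := by
      refine ge_of_tendsto htend ?_
      filter_upwards [Ioo_mem_nhdsLT_of_mem (by norm_num : (1:ℝ) ∈ Set.Ioc 0 1)] with r hr
      exact hbnd r hr.1 hr.2
    simpa using hfin
  · intro z hz
    obtain ⟨r, hr1, hr2⟩ := exists_between hz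
    have hr0 : 0 < r := lt_of_le_of_lt (norm_nonneg z) hr1
    have hps := hball r hr0 hr2
    rw [huniq r hr0 hr2] at hps
    have hmem : z ∈ Metric.eball (0:ℂ) (ENNReal.ofReal r) := by
      rw [Metric.emetric_ball]
      simpa using hr1
    have hhs := hps.hasSum (y := z) hmem
    simp only [zero_add] at hhs
    have heq : (fun n => p n fun _ => z) = fun n => p.coeff n * z ^ n := by
      funext n
      rw [FormalMultilinearSeries.apply_eq_pow_smul_coeff, smul_eq_mul, mul_comm]
    rwa [heq] at hhs

lemma key_est {g : ℂ → ℂ} {M ρ : ℝ} (hg : AnalyticOnNhd ℂ g (ball (0:ℂ) 1))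
    (h0 : g 0 = 0) (h1 : deriv g 0 = 1) (hM : ∀ z ∈ ball (0:ℂ) 1, ‖g z‖ ≤ M)
    (hρ0 : 0 ≤ ρ) (hρ1 : ρ < 1) :
    1 ≤ M ∧
    (∀ z z' : ℂ, ‖z‖ ≤ ρ → ‖z'‖ ≤ ρ →
       ‖(g z - z) - (g z' - z')‖ ≤ M * (ρ * (2 - ρ) / (1 - ρ) ^ 2) * ‖z - z'‖) ∧
    (∀ z : ℂ, ‖z‖ ≤ ρ → ‖g z - z‖ ≤ M * (ρ ^ 2 / (1 - ρ))) := by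
  obtain ⟨c, hc0, hc1, hcM, hsum⟩ := exists_coeffs hg hM
  rw [h0] at hc0
  rw [h1] at hc1
  have hM1 : 1 ≤ M := by
    have := hcM 1
    rw [hc1] at this
    simpa using this
  have h1ρ : (0:ℝ) < 1 - ρ := by linarith
  have hgeom : HasSum (fun n : ℕ => ρ ^ n) ((1 - ρ)⁻¹) :=
    hasSum_geometric_of_lt_one hρ0 hρ1
  have hmulg : HasSum (fun n : ℕ => (n : ℝ) * ρ ^ n) (ρ / (1 - ρ) ^ 2) :=
    hasSum_coe_mul_geometric_of_norm_lt_one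
      (by rwa [Real.norm_eq_abs, _root_.abs_of_nonneg hρ0])
  have Sb : HasSum (fun n : ℕ => ((n : ℝ) + 2) * ρ ^ (n + 1)) (ρ * (2 - ρ) / (1 - ρ) ^ 2) := by
    have h := (hmulg.mul_left ρ).add (hgeom.mul_left (2 * ρ))
    have heq : (fun n : ℕ => ρ * ((n : ℝ) * ρ ^ n) + 2 * ρ * ρ ^ n)
        = fun n : ℕ => ((n : ℝ) + 2) * ρ ^ (n + 1) := by
      funext n; ring
    rw [heq] at h
    convert h using 1
    · rfl
    field_simp
    ring
  have Sc : HasSum (fun n : ℕ => ρ ^ (n + 2)) (ρ ^ 2 / (1 - ρ)) := by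
    have h := hgeom.mul_left (ρ ^ 2)
    have heq : (fun n : ℕ => ρ ^ 2 * ρ ^ n) = fun n : ℕ => ρ ^ (n + 2) := by
      funext n; ring
    rw [heq] at h
    convert h using 1
    · rfl
    rw [div_eq_mul_inv]
  refine ⟨hM1, ?_, ?_⟩
  · intro z z' hz hz'
    have hz1 : ‖z‖ < 1 := lt_of_le_of_lt hz hρ1
    have hz1' : ‖z'‖ < 1 := lt_of_le_of_lt hz' hρ1
    have hd := (hsum z hz1).sub (hsum z' hz1')
    have hshift := (hasSum_nat_add_iff' (f := fun n => c n * z ^ n - c n * z' ^ n) 2).2 hd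
    have hS : ∑ i ∈ range 2, (c i * z ^ i - c i * z' ^ i) = z - z' := by
      simp [Finset.sum_range_succ, hc0, hc1]
    rw [hS] at hshift
    have hgoal : g z - g z' - (z - z') = (g z - z) - (g z' - z') := by ring
    rw [hgoal] at hshift
    have hb : HasSum (fun n : ℕ => M * (((n : ℝ) + 2) * ρ ^ (n + 1)) * ‖z - z'‖)
        (M * (ρ * (2 - ρ) / (1 - ρ) ^ 2) * ‖z - z'‖) := (Sb.mul_left M).mul_right _
    have hterm : ∀ n : ℕ, ‖c (n + 2) * z ^ (n + 2) - c (n + 2) * z' ^ (n + 2)‖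
        ≤ M * (((n : ℝ) + 2) * ρ ^ (n + 1)) * ‖z - z'‖ := by
      intro n
      rw [← mul_sub, norm_mul]
      have h2 := pow_diff_norm_le z z' ρ (n + 2) hz hz'
      have hcc := hcM (n + 2)
      calc ‖c (n + 2)‖ * ‖z ^ (n + 2) - z' ^ (n + 2)‖
          ≤ M * ((↑(n + 2) : ℝ) * ρ ^ (n + 2 - 1) * ‖z - z'‖) := by
            refine mul_le_mul hcc h2 (norm_nonneg _) (le_trans (by norm_num) hM1)
        _ = M * (((n : ℝ) + 2) * ρ ^ (n + 1)) * ‖z - z'‖ := by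
            push_cast
            ring_nf
    have hsumm : Summable fun n : ℕ => ‖c (n + 2) * z ^ (n + 2) - c (n + 2) * z' ^ (n + 2)‖ :=
      Summable.of_nonneg_of_le (fun n => norm_nonneg _) hterm hb.summable
    calc ‖(g z - z) - (g z' - z')‖
        = ‖∑' n : ℕ, (c (n + 2) * z ^ (n + 2) - c (n + 2) * z' ^ (n + 2))‖ := by
          rw [hshift.tsum_eq]
      _ ≤ ∑' n : ℕ, ‖c (n + 2) * z ^ (n + 2) - c (n + 2) * z' ^ (n + 2)‖ :=
          norm_tsum_le_tsum_norm hsumm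
      _ ≤ ∑' n : ℕ, M * (((n : ℝ) + 2) * ρ ^ (n + 1)) * ‖z - z'‖ :=
          Summable.tsum_le_tsum hterm hsumm hb.summable
      _ = M * (ρ * (2 - ρ) / (1 - ρ) ^ 2) * ‖z - z'‖ := hb.tsum_eq
  · intro z hz
    have hz1 : ‖z‖ < 1 := lt_of_le_of_lt hz hρ1
    have hshift := (hasSum_nat_add_iff' (f := fun n => c n * z ^ n) 2).2 (hsum z hz1)
    have hS : ∑ i ∈ range 2, c i * z ^ i = z := by
      simp [Finset.sum_range_succ, hc0, hc1]
    rw [hS] at hshift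
    have hb : HasSum (fun n : ℕ => M * ρ ^ (n + 2)) (M * (ρ ^ 2 / (1 - ρ))) := Sc.mul_left M
    have hterm : ∀ n : ℕ, ‖c (n + 2) * z ^ (n + 2)‖ ≤ M * ρ ^ (n + 2) := by
      intro n
      rw [norm_mul, norm_pow]
      exact mul_le_mul (hcM _) (pow_le_pow_left₀ (norm_nonneg z) hz _)
        (by positivity) (le_trans (by norm_num) hM1)
    have hsumm : Summable fun n : ℕ => ‖c (n + 2) * z ^ (n + 2)‖ :=
      Summable.of_nonneg_of_le (fun n => norm_nonneg _) hterm hb.summable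
    calc ‖g z - z‖ = ‖∑' n : ℕ, c (n + 2) * z ^ (n + 2)‖ := by rw [hshift.tsum_eq]
      _ ≤ ∑' n : ℕ, ‖c (n + 2) * z ^ (n + 2)‖ := norm_tsum_le_tsum_norm hsumm
      _ ≤ ∑' n : ℕ, M * ρ ^ (n + 2) := Summable.tsum_le_tsum hterm hsumm hb.summable
      _ = M * (ρ ^ 2 / (1 - ρ)) := hb.tsum_eq

lemma alg_ineq (m q ρ M : ℝ) (hq : 0 ≤ q) (hm : 0 ≤ m) (hρ0 : 0 ≤ ρ) (hρ1 : ρ < 1)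
    (hM : 1 ≤ M) :
    q * ρ * (M * (ρ * (2 - ρ) / (1 - ρ) ^ 2) + 1) + (m + 1) * q * (ρ + M * (ρ ^ 2 / (1 - ρ)))
      ≤ M * (q * ρ * (1 + (m + 1) - ρ) / (1 - ρ) ^ 2) := by
  have h1 : 0 < 1 - ρ := by linarith
  have h2 : (0:ℝ) < (1 - ρ) ^ 2 := by positivity
  have hL : q * ρ * (M * (ρ * (2 - ρ) / (1 - ρ) ^ 2) + 1) + (m + 1) * q * (ρ + M * (ρ ^ 2 / (1 - ρ)))
      = (q * (ρ * (M * (ρ * (2 - ρ)) + (1 - ρ) ^ 2) + (m + 1) * (ρ * (1 - ρ) ^ 2 + M * (ρ ^ 2 * (1 - ρ))))) / (1 - ρ) ^ 2 := by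
    field_simp
  have hR : M * (q * ρ * (1 + (m + 1) - ρ) / (1 - ρ) ^ 2)
      = (q * (M * (ρ * (1 + (m + 1) - ρ)))) / (1 - ρ) ^ 2 := by
    field_simp
  rw [hL, hR]
  gcongr
  nlinarith [mul_nonneg hρ0 (sq_nonneg (1-ρ)), mul_nonneg hm hρ0,
    mul_nonneg (mul_nonneg hm hρ0) h1.le, mul_nonneg hρ0 hρ0,
    mul_nonneg (sub_nonneg.2 hM) (mul_nonneg hm hρ0),
    mul_nonneg (sub_nonneg.2 hM) (mul_nonneg (mul_nonneg hm hρ0) hρ0),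
    mul_nonneg (sub_nonneg.2 hM) (mul_nonneg hρ0 (sq_nonneg (1-ρ)))]

/-- **Landau's theorem for poly-analytic functions (covering part).**
With the hypotheses of the univalence part and
`R₁ = ρ₁ - ρ₁²(1-ρ₁^(α-1))/(1-ρ₁) - M ∑_{k=0}^{α-1} ρ₁^(k+2)/(1-ρ₁)`, if `R₁ > 0` then
`F(ball 0 ρ₁)` contains the disk `ball 0 R₁`. -/
theorem polyanalytic_landau_covering
    (α : ℕ) (hα : 2 ≤ α) (A : ℕ → ℂ → ℂ) (M : ℝ) (F : ℂ → ℂ)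
    (hAanal : ∀ k < α, AnalyticOnNhd ℂ (A k) (ball (0 : ℂ) 1))
    (hA0 : ∀ k < α, A k 0 = 0)
    (hA1 : ∀ k < α, deriv (A k) 0 = 1)
    (hAM : ∀ k < α, ∀ z ∈ ball (0 : ℂ) 1, ‖A k z‖ ≤ M)
    (hF : ∀ z ∈ ball (0 : ℂ) 1,
      F z = ∑ k ∈ range α, (starRingEnd ℂ z) ^ k * A k z)
    (ρ₁ : ℝ) (hρ₁pos : 0 < ρ₁) (hρ₁lt : ρ₁ < 1)
    (hroot : 1 - M * (ρ₁ * (2 - ρ₁) / (1 - ρ₁) ^ 2 +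
      ∑ k ∈ Ico 1 α, ρ₁ ^ k * (1 + (k : ℝ) - ρ₁) / (1 - ρ₁) ^ 2) = 0)
    (hsmallest : ∀ ρ : ℝ, 0 < ρ → ρ < 1 →
      1 - M * (ρ * (2 - ρ) / (1 - ρ) ^ 2 +
        ∑ k ∈ Ico 1 α, ρ ^ k * (1 + (k : ℝ) - ρ) / (1 - ρ) ^ 2) = 0 → ρ₁ ≤ ρ)
    (R₁ : ℝ)
    (hR₁ : R₁ = ρ₁ - ρ₁ ^ 2 * (1 - ρ₁ ^ (α - 1)) / (1 - ρ₁) -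
      M * ∑ k ∈ range α, ρ₁ ^ (k + 2) / (1 - ρ₁))
    (hR₁pos : 0 < R₁) :
    ball (0 : ℂ) R₁ ⊆ F '' ball (0 : ℂ) ρ₁ := by
  intro w hw
  rw [mem_ball_zero_iff] at hw
  have hα0 : 0 < α := by omega
  have h1ρ₁ : (0:ℝ) < 1 - ρ₁ := by linarith
  set Rfun : ℝ → ℝ := fun ρ => ρ - (∑ k ∈ Ico 1 α, ρ ^ (k+1)) -
      M * ((∑ k ∈ range α, ρ ^ (k+2)) * (1 - ρ)⁻¹) with hRfun
  -- Rfun ρ₁ = R₁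
  have hgeomid : (∑ k ∈ Ico 1 α, ρ₁ ^ (k+1)) = ρ₁^2 * (1 - ρ₁^(α-1))/(1-ρ₁) := by
    rw [Finset.sum_Ico_eq_sum_range]
    have hc : ∀ i ∈ range (α-1), ρ₁ ^ (1 + i + 1) = ρ₁^2 * ρ₁^i := by intro i _; ring
    rw [Finset.sum_congr rfl hc, ← Finset.mul_sum, geom_sum_eq (ne_of_lt hρ₁lt)]
    have hne1 : ρ₁ - 1 ≠ 0 := by intro h; linarith [sub_eq_zero.1 h]
    have hne2 : (1:ℝ) - ρ₁ ≠ 0 := ne_of_gt h1ρ₁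
    field_simp
    ring
  have hRρ₁ : Rfun ρ₁ = R₁ := by
    simp only [hRfun]
    rw [hgeomid, hR₁, ← Finset.sum_div]
    ring
  -- choose ρ < ρ₁ with ‖w‖ < Rfun ρ
  have hcont : ContinuousAt Rfun ρ₁ := by
    refine ContinuousAt.sub (ContinuousAt.sub continuousAt_id ?_) ?_
    · exact (continuous_finset_sum _ fun k _ => continuous_pow _).continuousAt
    · refine continuousAt_const.mul (ContinuousAt.mul ?_ ?_)
      · exact (continuous_finset_sum _ fun k _ => continuous_pow _).continuousAt
      · exact ContinuousAt.inv₀ (continuousAt_const.sub continuousAt_id)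
          (by simpa using h1ρ₁.ne')
  have htend : Filter.Tendsto Rfun (nhdsWithin ρ₁ (Set.Iio ρ₁)) (nhds R₁) := by
    rw [← hRρ₁]
    exact (hcont.continuousWithinAt (s := Set.Iio ρ₁))
  have hev1 : ∀ᶠ ρ in nhdsWithin ρ₁ (Set.Iio ρ₁), ‖w‖ < Rfun ρ :=
    htend.eventually (eventually_gt_nhds hw)
  have hev2 : ∀ᶠ ρ in nhdsWithin ρ₁ (Set.Iio ρ₁), 0 < ρ :=
    Filter.Eventually.filter_mono nhdsWithin_le_nhds (eventually_gt_nhds hρ₁pos)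
  have hev3 : ∀ᶠ ρ in nhdsWithin ρ₁ (Set.Iio ρ₁), ρ < ρ₁ :=
    eventually_mem_nhdsWithin.mono fun x hx => hx
  obtain ⟨ρ, hwR, hρpos, hρlt⟩ := (hev1.and (hev2.and hev3)).exists
  have hρ1 : ρ < 1 := hρlt.trans hρ₁lt
  have h1ρ : (0:ℝ) < 1 - ρ := by linarith
  -- key estimates
  have hkey := fun k (hk : k < α) =>
    key_est (hAanal k hk) (hA0 k hk) (hA1 k hk) (hAM k hk) hρpos.le hρ1
  have hM1 : 1 ≤ M := (hkey 0 hα0).1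
  set lam : ℝ := M * (ρ * (2 - ρ) / (1 - ρ) ^ 2 +
      ∑ k ∈ Ico 1 α, ρ ^ k * (1 + (k : ℝ) - ρ) / (1 - ρ) ^ 2) with hlam
  have hlam0 : 0 ≤ lam := by
    refine mul_nonneg (by linarith)
      (add_nonneg (div_nonneg (mul_nonneg hρpos.le (by linarith)) (sq_nonneg _)) ?_)
    refine Finset.sum_nonneg fun k _ => ?_
    have hkr : (0:ℝ) ≤ 1 + (k:ℝ) - ρ := by
      have := Nat.cast_nonneg (α := ℝ) k
      linarith
    exact div_nonneg (mul_nonneg (pow_nonneg hρpos.le _) hkr) (sq_nonneg _)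
  have hlamlt : lam < 1 := by
    by_contra hcon
    push_neg at hcon
    set φ : ℝ → ℝ := fun t => 1 - M * (t * (2 - t) / (1 - t) ^ 2 +
        ∑ k ∈ Ico 1 α, t ^ k * (1 + (k : ℝ) - t) / (1 - t) ^ 2) with hφ
    have hφ0 : φ 0 = 1 := by
      have hz : (∑ k ∈ Ico 1 α, (0:ℝ) ^ k * (1 + (k : ℝ) - 0) / (1 - 0) ^ 2) = 0 := by
        refine Finset.sum_eq_zero fun k hk => ?_
        have hk0 : k ≠ 0 := by have := (Finset.mem_Ico.1 hk).1; omega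
        rw [zero_pow hk0]
        ring
      rw [hφ]
      simp only
      rw [hz]
      norm_num
    have hφcont : ContinuousOn φ (Set.Icc 0 ρ) := by
      have hne : ∀ t ∈ Set.Icc (0:ℝ) ρ, (1 - t) ^ 2 ≠ 0 := by
        intro t ht
        have h1t : t < 1 := lt_of_le_of_lt ht.2 hρ1
        exact pow_ne_zero _ (ne_of_gt (by linarith))
      refine ContinuousOn.sub continuousOn_const (continuousOn_const.mul (ContinuousOn.add ?_ ?_))
      · exact ContinuousOn.div (by fun_prop) (by fun_prop) hne
      · exact continuousOn_finset_sum _ fun k _ =>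
          ContinuousOn.div (by fun_prop) (by fun_prop) hne
    have hmem : (0:ℝ) ∈ Set.Icc (φ ρ) (φ 0) := by
      constructor
      · have : φ ρ = 1 - lam := rfl
        rw [this]; linarith
      · rw [hφ0]; norm_num
    obtain ⟨t, ht, hφt⟩ := intermediate_value_Icc' hρpos.le hφcont hmem
    have ht0 : 0 < t := by
      rcases lt_or_eq_of_le ht.1 with h | h
      · exact h
      · exfalso; rw [← h, hφ0] at hφt; norm_num at hφt
    have hts := hsmallest t ht0 (lt_of_le_of_lt ht.2 hρ1) hφt
    linarith [ht.2]
  -- E and its estimates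
  set E : ℂ → ℂ := fun z => F z - z with hE
  have hFsplit : ∀ z : ℂ, ‖z‖ ≤ ρ →
      E z = (A 0 z - z) + ∑ k ∈ Ico 1 α, (starRingEnd ℂ z) ^ k * A k z := by
    intro z hz
    have hz1 : z ∈ ball (0:ℂ) 1 := mem_ball_zero_iff.2 (lt_of_le_of_lt hz hρ1)
    rw [hE]
    simp only
    rw [hF z hz1, Finset.range_eq_Ico, Finset.sum_eq_sum_Ico_succ_bot hα0]
    simp only [pow_zero, one_mul, zero_add]
    ring
  have hAnorm : ∀ k < α, ∀ z : ℂ, ‖z‖ ≤ ρ → ‖A k z‖ ≤ ρ + M * (ρ^2/(1-ρ)) := by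
    intro k hk z hz
    have h := (hkey k hk).2.2 z hz
    calc ‖A k z‖ = ‖z + (A k z - z)‖ := by ring_nf
      _ ≤ ‖z‖ + ‖A k z - z‖ := norm_add_le _ _
      _ ≤ ρ + M * (ρ^2/(1-ρ)) := add_le_add hz h
  have hEbound : ∀ z : ℂ, ‖z‖ ≤ ρ → ‖E z‖ ≤ ρ - Rfun ρ := by
    intro z hz
    rw [hFsplit z hz]
    have hAk : ∀ k ∈ Ico 1 α, ‖(starRingEnd ℂ z) ^ k * A k z‖
        ≤ ρ ^ k * (ρ + M * (ρ^2/(1-ρ))) := by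
      intro k hk
      have hkα : k < α := (Finset.mem_Ico.1 hk).2
      rw [norm_mul, norm_pow, RCLike.norm_conj]
      exact mul_le_mul (pow_le_pow_left₀ (norm_nonneg z) hz k) (hAnorm k hkα z hz)
        (norm_nonneg _) (by positivity)
    calc ‖(A 0 z - z) + ∑ k ∈ Ico 1 α, (starRingEnd ℂ z) ^ k * A k z‖
        ≤ ‖A 0 z - z‖ + ∑ k ∈ Ico 1 α, ‖(starRingEnd ℂ z) ^ k * A k z‖ :=
          (norm_add_le _ _).trans (add_le_add_right (norm_sum_le _ _) _)
      _ ≤ M * (ρ^2/(1-ρ)) + ∑ k ∈ Ico 1 α, ρ ^ k * (ρ + M * (ρ^2/(1-ρ))) :=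
          add_le_add ((hkey 0 hα0).2.2 z hz) (Finset.sum_le_sum hAk)
      _ = ρ - Rfun ρ := by
          have hterm : ∀ k ∈ Ico 1 α, ρ ^ k * (ρ + M * (ρ^2/(1-ρ)))
              = ρ^(k+1) + M * (ρ^(k+2) * (1-ρ)⁻¹) := by
            intro k _
            field_simp
            ring
          have hS2 : ∑ k ∈ range α, ρ^(k+2) = ρ^2 + ∑ k ∈ Ico 1 α, ρ^(k+2) := by
            rw [Finset.range_eq_Ico, Finset.sum_eq_sum_Ico_succ_bot hα0]
          rw [Finset.sum_congr rfl hterm, Finset.sum_add_distrib]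
          simp only [hRfun]
          rw [hS2, ← Finset.mul_sum, ← Finset.sum_mul]
          ring
  have hElip : ∀ z z' : ℂ, ‖z‖ ≤ ρ → ‖z'‖ ≤ ρ → ‖E z - E z'‖ ≤ lam * ‖z - z'‖ := by
    intro z z' hz hz'
    rw [hFsplit z hz, hFsplit z' hz']
    have hsplit : ((A 0 z - z) + ∑ k ∈ Ico 1 α, (starRingEnd ℂ z) ^ k * A k z) -
        ((A 0 z' - z') + ∑ k ∈ Ico 1 α, (starRingEnd ℂ z') ^ k * A k z')
        = ((A 0 z - z) - (A 0 z' - z')) +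
          ∑ k ∈ Ico 1 α, ((starRingEnd ℂ z) ^ k * A k z - (starRingEnd ℂ z') ^ k * A k z') := by
      rw [Finset.sum_sub_distrib]
      ring
    rw [hsplit]
    have h0 : ‖(A 0 z - z) - (A 0 z' - z')‖ ≤ M * (ρ * (2 - ρ) / (1 - ρ) ^ 2) * ‖z - z'‖ :=
      (hkey 0 hα0).2.1 z z' hz hz'
    have hk : ∀ k ∈ Ico 1 α, ‖(starRingEnd ℂ z) ^ k * A k z - (starRingEnd ℂ z') ^ k * A k z'‖
        ≤ M * (ρ ^ k * (1 + (k : ℝ) - ρ) / (1 - ρ) ^ 2) * ‖z - z'‖ := by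
      intro k hk
      obtain ⟨hk1, hkα⟩ := Finset.mem_Ico.1 hk
      obtain ⟨m, rfl⟩ : ∃ m, k = m + 1 := ⟨k - 1, by omega⟩
      have hAlip : ‖A (m+1) z - A (m+1) z'‖
          ≤ (M * (ρ * (2 - ρ) / (1 - ρ) ^ 2) + 1) * ‖z - z'‖ := by
        have h := (hkey (m+1) hkα).2.1 z z' hz hz'
        calc ‖A (m+1) z - A (m+1) z'‖
            = ‖((A (m+1) z - z) - (A (m+1) z' - z')) + (z - z')‖ := by ring_nf
          _ ≤ ‖(A (m+1) z - z) - (A (m+1) z' - z')‖ + ‖z - z'‖ := norm_add_le _ _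
          _ ≤ M * (ρ * (2 - ρ) / (1 - ρ) ^ 2) * ‖z - z'‖ + 1 * ‖z - z'‖ := by
              rw [one_mul]; exact add_le_add h le_rfl
          _ = (M * (ρ * (2 - ρ) / (1 - ρ) ^ 2) + 1) * ‖z - z'‖ := by ring
      have hconj : ‖(starRingEnd ℂ z) ^ (m+1) - (starRingEnd ℂ z') ^ (m+1)‖
          ≤ ((m:ℝ)+1) * ρ ^ m * ‖z - z'‖ := by
        rw [← map_pow, ← map_pow, ← map_sub, RCLike.norm_conj]
        have h := pow_diff_norm_le z z' ρ (m+1) hz hz'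
        simpa using h
      have hdecomp : (starRingEnd ℂ z) ^ (m+1) * A (m+1) z -
          (starRingEnd ℂ z') ^ (m+1) * A (m+1) z'
          = (starRingEnd ℂ z) ^ (m+1) * (A (m+1) z - A (m+1) z') +
            ((starRingEnd ℂ z) ^ (m+1) - (starRingEnd ℂ z') ^ (m+1)) * A (m+1) z' := by
        ring
      rw [hdecomp]
      have hstep : ‖(starRingEnd ℂ z) ^ (m+1) * (A (m+1) z - A (m+1) z') +
            ((starRingEnd ℂ z) ^ (m+1) - (starRingEnd ℂ z') ^ (m+1)) * A (m+1) z'‖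
          ≤ ρ ^ (m+1) * ((M * (ρ * (2 - ρ) / (1 - ρ) ^ 2) + 1) * ‖z - z'‖) +
            (((m:ℝ)+1) * ρ ^ m * ‖z - z'‖) * (ρ + M * (ρ^2/(1-ρ))) := by
        refine (norm_add_le _ _).trans (add_le_add ?_ ?_)
        · rw [norm_mul, norm_pow, RCLike.norm_conj]
          refine mul_le_mul (pow_le_pow_left₀ (norm_nonneg z) hz _) hAlip (norm_nonneg _)
            (by positivity)
        · rw [norm_mul]
          refine mul_le_mul hconj (hAnorm (m+1) hkα z' hz') (norm_nonneg _) ?_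
          have : (0:ℝ) ≤ ρ ^ m := by positivity
          positivity
      refine hstep.trans ?_
      have halg := alg_ineq (m:ℝ) (ρ^m) ρ M (by positivity) (Nat.cast_nonneg m)
        hρpos.le hρ1 hM1
      have hmul := mul_le_mul_of_nonneg_right halg (norm_nonneg (z - z'))
      have hps : ρ ^ (m+1) = ρ ^ m * ρ := pow_succ ρ m
      rw [hps]
      push_cast
      nlinarith [hmul, norm_nonneg (z - z')]
    calc ‖((A 0 z - z) - (A 0 z' - z')) +
          ∑ k ∈ Ico 1 α, ((starRingEnd ℂ z) ^ k * A k z - (starRingEnd ℂ z') ^ k * A k z')‖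
        ≤ ‖(A 0 z - z) - (A 0 z' - z')‖ +
          ∑ k ∈ Ico 1 α, ‖(starRingEnd ℂ z) ^ k * A k z - (starRingEnd ℂ z') ^ k * A k z'‖ :=
          (norm_add_le _ _).trans (add_le_add_right (norm_sum_le _ _) _)
      _ ≤ M * (ρ * (2 - ρ) / (1 - ρ) ^ 2) * ‖z - z'‖ +
          ∑ k ∈ Ico 1 α, M * (ρ ^ k * (1 + (k : ℝ) - ρ) / (1 - ρ) ^ 2) * ‖z - z'‖ :=
          add_le_add h0 (Finset.sum_le_sum hk)
      _ = lam * ‖z - z'‖ := by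
          rw [hlam, mul_add, add_mul, Finset.mul_sum, Finset.sum_mul]
  -- Banach fixed point
  haveI : Nonempty (closedBall (0:ℂ) ρ) := ⟨⟨0, mem_closedBall_self hρpos.le⟩⟩
  haveI : CompleteSpace (closedBall (0:ℂ) ρ) := (isClosed_closedBall).completeSpace_coe
  have hTmem : ∀ x : closedBall (0:ℂ) ρ, w - E x.1 ∈ closedBall (0:ℂ) ρ := by
    intro x
    rw [mem_closedBall_zero_iff]
    have hx := mem_closedBall_zero_iff.1 x.2
    calc ‖w - E x.1‖ ≤ ‖w‖ + ‖E x.1‖ := norm_sub_le _ _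
      _ ≤ ‖w‖ + (ρ - Rfun ρ) := add_le_add_right (hEbound _ hx) _
      _ ≤ ρ := by linarith
  set T : closedBall (0:ℂ) ρ → closedBall (0:ℂ) ρ := fun x => ⟨w - E x.1, hTmem x⟩ with hT
  set K : NNReal := Real.toNNReal lam with hK
  have hKcoe : (K : ℝ) = lam := Real.coe_toNNReal _ hlam0
  have hcontr : ContractingWith K T := by
    constructor
    · rw [← NNReal.coe_lt_coe, hKcoe, NNReal.coe_one]
      exact hlamlt
    · refine LipschitzWith.of_dist_le_mul fun x y => ?_
      have hd : dist (T x) (T y) = ‖E x.1 - E y.1‖ := by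
        rw [Subtype.dist_eq, hT]
        simp only
        rw [dist_eq_norm]
        have hne : (w - E x.1) - (w - E y.1) = -(E x.1 - E y.1) := by ring
        rw [hne, norm_neg]
      rw [hd, Subtype.dist_eq x y, dist_eq_norm, hKcoe]
      exact hElip x.1 y.1 (mem_closedBall_zero_iff.1 x.2) (mem_closedBall_zero_iff.1 y.2)
  set x := ContractingWith.fixedPoint T hcontr with hx
  have hfix : T x = x := hcontr.fixedPoint_isFixedPt
  refine ⟨x.1, ?_, ?_⟩
  · rw [mem_ball_zero_iff]
    exact lt_of_le_of_lt (mem_closedBall_zero_iff.1 x.2) hρlt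
  · have h := congrArg Subtype.val hfix
    rw [hT] at h
    simp only at h
    have h2 : w - (F x.1 - x.1) = x.1 := h
    linear_combination -h2
end

section
/- Let α ≥ 2, let F(z) = Σ_{k=0}^{α−1} z̄^k A_k(z) be a poly-analytic function of order α on the unit disk U, where each A_k is analytic on U with A_k(0) = 0, A_k′(0) = 1 and |A_k(z)| ≤ M for all z ∈ U and all k, and write A_k(z) = Σ_{n=1}^∞ a_{n,k} z^n. Then for every ρ ∈ (0,1) and every pair of points z₁, z₂ with |z₁| < ρ and |z₂| < ρ, one has |F(z₁) − F(z₂)| ≥ |z₁ − z₂| · ( 1 − M( ρ(2−ρ)/(1−ρ)² + Σ_{k=1}^{α−1} ρ^k(1+k−ρ)/(1−ρ)² ) ). -/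
open Complex Metric Finset Filter FormalMultilinearSeries
open scoped NNReal ENNReal

private lemma hasFPS_ofScalars {f : ℂ → ℂ} {c : ℕ → ℂ}
    (h : ∀ z ∈ ball (0:ℂ) 1, HasSum (fun n => c n * z ^ n) (f z))
    {r : ℝ≥0} (hr0 : 0 < r) (hr1 : (r : ℝ) < 1) :
    HasFPowerSeriesOnBall f (ofScalars ℂ c) 0 r := by
  have hrad : (r : ℝ≥0∞) ≤ (ofScalars ℂ c).radius := by
    have hz : ((r : ℝ) : ℂ) ∈ ball (0:ℂ) 1 := by
      simp only [mem_ball_zero_iff, Complex.norm_real, Real.norm_eq_abs,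
        _root_.abs_of_nonneg r.coe_nonneg]
      exact hr1
    have ht := ((h _ hz).summable.tendsto_atTop_zero).norm
    simp only [norm_zero, norm_mul, norm_pow, Complex.norm_real, Real.norm_eq_abs,
      _root_.abs_of_nonneg r.coe_nonneg] at ht
    apply FormalMultilinearSeries.le_radius_of_tendsto _ (l := 0)
    simpa only [FormalMultilinearSeries.ofScalars_norm] using ht
  refine ⟨hrad, by exact_mod_cast hr0, ?_⟩
  intro y hy
  have hy1 : y ∈ ball (0:ℂ) 1 := by
    rw [mem_ball_zero_iff]
    rw [EMetric.mem_ball, edist_zero_right] at hy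
    have h2 : ‖y‖₊ < r := by exact_mod_cast hy
    calc ‖y‖ < (r : ℝ) := by exact_mod_cast h2
      _ < 1 := hr1
  simp only [FormalMultilinearSeries.ofScalars_apply_eq, smul_eq_mul, zero_add]
  exact h y hy1

private lemma cauchy_coeff_bound {f : ℂ → ℂ} {c : ℕ → ℂ} {M : ℝ}
    (hf : AnalyticOnNhd ℂ f (ball (0:ℂ) 1))
    (hM : ∀ z ∈ ball (0:ℂ) 1, ‖f z‖ ≤ M)
    (h : ∀ z ∈ ball (0:ℂ) 1, HasSum (fun n => c n * z ^ n) (f z)) :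
    ∀ n, ‖c n‖ ≤ M := by
  intro n
  have key : ∀ r : ℝ, r ∈ Set.Ioo (0:ℝ) 1 → ‖c n‖ * r ^ n ≤ M := by
    intro r hr
    set R : ℝ≥0 := ⟨r, hr.1.le⟩ with hR
    have hR0 : 0 < R := by exact_mod_cast hr.1
    have hR1 : (R : ℝ) < 1 := hr.2
    have hfps := hasFPS_ofScalars h hR0 hR1
    have hdiff : DifferentiableOn ℂ f (closedBall 0 (R:ℝ)) :=
      hf.differentiableOn.mono (closedBall_subset_ball hR1)
    have h1 := hdiff.hasFPowerSeriesOnBall hR0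
    have heq : ofScalars ℂ c = cauchyPowerSeries f 0 R :=
      hfps.hasFPowerSeriesAt.eq_formalMultilinearSeries h1.hasFPowerSeriesAt
    have hnorm := norm_cauchyPowerSeries_le f 0 (R:ℝ) n
    rw [← heq, FormalMultilinearSeries.ofScalars_norm] at hnorm
    have hmem : ∀ θ : ℝ, circleMap 0 (R:ℝ) θ ∈ ball (0:ℂ) 1 := by
      intro θ
      simp only [mem_ball_zero_iff, norm_circleMap_zero,
        _root_.abs_of_nonneg R.coe_nonneg]
      exact hR1
    have hcont : Continuous fun θ : ℝ => f (circleMap 0 R θ) :=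
      hf.continuousOn.comp_continuous (continuous_circleMap 0 R) hmem
    have hint : (∫ θ : ℝ in (0:ℝ)..2*Real.pi, ‖f (circleMap 0 R θ)‖) ≤ 2 * Real.pi * M := by
      have h4 : (∫ θ : ℝ in (0:ℝ)..2*Real.pi, ‖f (circleMap 0 R θ)‖)
          ≤ ∫ _ : ℝ in (0:ℝ)..2*Real.pi, M := by
        apply intervalIntegral.integral_mono_on Real.two_pi_pos.le
          (hcont.norm.intervalIntegrable _ _) intervalIntegrable_const
        intro θ _
        exact hM _ (hmem θ)
      simpa using h4
    have hM0 : 0 ≤ M := le_trans (norm_nonneg _) (hM 0 (by simp))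
    have hπ : (2*Real.pi) ≠ 0 := Real.two_pi_pos.ne'
    have hrne : r ≠ 0 := hr.1.ne'
    have habs : |(R:ℝ)| = r := _root_.abs_of_nonneg hr.1.le
    calc ‖c n‖ * r ^ n
        ≤ (((2 * Real.pi)⁻¹ * ∫ θ : ℝ in (0:ℝ)..2*Real.pi, ‖f (circleMap 0 (R:ℝ) θ)‖)
            * |(R:ℝ)|⁻¹ ^ n) * r ^ n :=
          mul_le_mul_of_nonneg_right hnorm (pow_nonneg hr.1.le n)
      _ ≤ (((2 * Real.pi)⁻¹ * (2 * Real.pi * M)) * |(R:ℝ)|⁻¹ ^ n) * r ^ n := by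
          apply mul_le_mul_of_nonneg_right _ (pow_nonneg hr.1.le n)
          apply mul_le_mul_of_nonneg_right _ (by positivity)
          exact mul_le_mul_of_nonneg_left hint (by positivity)
      _ = M := by
          rw [habs, mul_assoc, ← mul_pow, inv_mul_cancel₀ hrne, one_pow, mul_one,
            ← mul_assoc, inv_mul_cancel₀ hπ, one_mul]
  have hlim : Tendsto (fun r : ℝ => ‖c n‖ * r ^ n) (nhdsWithin 1 (Set.Iio 1))
      (nhds (‖c n‖ * 1 ^ n)) :=
    tendsto_nhdsWithin_of_tendsto_nhds ((continuous_const.mul (continuous_pow n)).tendsto 1)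
  have := le_of_tendsto hlim (eventually_of_mem
    (Ioo_mem_nhdsLT_of_mem (Set.mem_Ioc.mpr ⟨zero_lt_one, le_refl 1⟩)) key)
  simpa using this

private lemma cauchy_coeff_one {f : ℂ → ℂ} {c : ℕ → ℂ}
    (h : ∀ z ∈ ball (0:ℂ) 1, HasSum (fun n => c n * z ^ n) (f z)) :
    c 1 = deriv f 0 := by
  have hfps := hasFPS_ofScalars h (r := (1/2 : ℝ≥0)) (by norm_num) (by norm_num)
  rw [hfps.hasFPowerSeriesAt.deriv]
  rw [FormalMultilinearSeries.ofScalars_apply_eq]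
  simp

private lemma pow_sub_pow_norm_le {x y : ℂ} {ρ : ℝ} (hx : ‖x‖ ≤ ρ) (hy : ‖y‖ ≤ ρ) (n : ℕ) :
    ‖x ^ n - y ^ n‖ ≤ (n : ℝ) * ρ ^ (n - 1) * ‖x - y‖ := by
  have hρ : 0 ≤ ρ := (norm_nonneg x).trans hx
  rw [← geom_sum₂_mul, norm_mul]
  apply mul_le_mul_of_nonneg_right _ (norm_nonneg _)
  calc ‖∑ i ∈ range n, x ^ i * y ^ (n - 1 - i)‖
      ≤ ∑ i ∈ range n, ‖x ^ i * y ^ (n - 1 - i)‖ := norm_sum_le _ _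
    _ ≤ ∑ _i ∈ range n, ρ ^ (n - 1) := by
        apply Finset.sum_le_sum
        intro i hi
        rw [norm_mul, norm_pow, norm_pow]
        calc ‖x‖ ^ i * ‖y‖ ^ (n - 1 - i) ≤ ρ ^ i * ρ ^ (n - 1 - i) := by
              gcongr
          _ = ρ ^ (n - 1) := by
              rw [← pow_add]; congr 1; have := mem_range.mp hi; omega
    _ = (n : ℝ) * ρ ^ (n - 1) := by rw [Finset.sum_const, card_range, nsmul_eq_mul]

private lemma norm_hasSum_le {f : ℕ → ℂ} {g : ℕ → ℝ} {s : ℂ} {t : ℝ}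
    (hf : HasSum f s) (hg : HasSum g t) (h : ∀ n, ‖f n‖ ≤ g n) : ‖s‖ ≤ t := by
  have hsg : Summable g := hg.summable
  have hsf : Summable fun n => ‖f n‖ := Summable.of_nonneg_of_le (fun n => norm_nonneg _) h hsg
  calc ‖s‖ = ‖∑' n, f n‖ := by rw [hf.tsum_eq]
    _ ≤ ∑' n, ‖f n‖ := norm_tsum_le_tsum_norm hsf
    _ ≤ ∑' n, g n := Summable.tsum_le_tsum h hsf hsg
    _ = t := hg.tsum_eq

private lemma hasSum_n_rho {ρ : ℝ} (h0 : 0 ≤ ρ) (h1 : ρ < 1) :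
    HasSum (fun n : ℕ => (n : ℝ) * ρ ^ (n - 1)) (1 / (1 - ρ) ^ 2) := by
  have hρ : ‖ρ‖ < 1 := by rw [Real.norm_eq_abs, _root_.abs_of_nonneg h0]; exact h1
  have h1ρ : (1 : ℝ) - ρ ≠ 0 := by intro h; nlinarith
  have hgeo : HasSum (fun n : ℕ => ρ ^ n) (1 - ρ)⁻¹ := hasSum_geometric_of_lt_one h0 h1
  have hn : HasSum (fun n : ℕ => (n : ℝ) * ρ ^ n) (ρ / (1 - ρ) ^ 2) :=
    hasSum_coe_mul_geometric_of_norm_lt_one hρ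
  have hs : HasSum (fun n : ℕ => ((n + 1 : ℕ) : ℝ) * ρ ^ ((n + 1) - 1))
      (ρ / (1 - ρ) ^ 2 + (1 - ρ)⁻¹) := by
    have h2 := hn.add hgeo
    convert h2 using 2 with n
    simp only [Nat.add_sub_cancel]
    push_cast
    ring
  have h3 := (hasSum_nat_add_iff (f := fun n : ℕ => (n : ℝ) * ρ ^ (n - 1)) 1).mp hs
  convert h3 using 1
  · rfl
  simp only [range_one, sum_singleton, Nat.cast_zero, zero_mul, add_zero]
  field_simp
  ring

/-- **Distortion estimate for poly-analytic functions.**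
For `F(z) = ∑_{k=0}^{α-1} conj(z)^k A k z` with `A k` analytic, `A k 0 = 0`,
`(A k)'(0) = 1`, `‖A k‖ ≤ M` on the unit disk and `A k z = ∑_{n≥1} a n k zⁿ`,
for all `ρ ∈ (0,1)` and `z₁, z₂` with `‖z₁‖ < ρ`, `‖z₂‖ < ρ`:
`‖F z₁ - F z₂‖ ≥ ‖z₁ - z₂‖ (1 - M(ρ(2-ρ)/(1-ρ)² + ∑_{k=1}^{α-1} ρᵏ(1+k-ρ)/(1-ρ)²))`. -/
theorem polyanalytic_distortion
    (α : ℕ) (hα : 2 ≤ α) (A : ℕ → ℂ → ℂ) (a : ℕ → ℕ → ℂ) (M : ℝ) (F : ℂ → ℂ)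
    (hAanal : ∀ k < α, AnalyticOnNhd ℂ (A k) (ball (0 : ℂ) 1))
    (hA0 : ∀ k < α, A k 0 = 0)
    (hA1 : ∀ k < α, deriv (A k) 0 = 1)
    (hAM : ∀ k < α, ∀ z ∈ ball (0 : ℂ) 1, ‖A k z‖ ≤ M)
    (ha : ∀ k < α, a 0 k = 0)
    (haA : ∀ k < α, ∀ z ∈ ball (0 : ℂ) 1, HasSum (fun n : ℕ => a n k * z ^ n) (A k z))
    (hF : ∀ z ∈ ball (0 : ℂ) 1,
      F z = ∑ k ∈ range α, (starRingEnd ℂ z) ^ k * A k z)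
    (ρ : ℝ) (hρpos : 0 < ρ) (hρlt : ρ < 1)
    (z₁ z₂ : ℂ) (hz₁ : ‖z₁‖ < ρ) (hz₂ : ‖z₂‖ < ρ) :
    ‖z₁ - z₂‖ * (1 - M * (ρ * (2 - ρ) / (1 - ρ) ^ 2 +
        ∑ k ∈ Ico 1 α, ρ ^ k * (1 + (k : ℝ) - ρ) / (1 - ρ) ^ 2)) ≤
      ‖F z₁ - F z₂‖ := by
  have h0α : 0 < α := by omega
  have hρ0 : (0:ℝ) ≤ ρ := hρpos.le
  have h1ρ : (0:ℝ) < 1 - ρ := by linarith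
  have h1ρ' : (1:ℝ) - ρ ≠ 0 := h1ρ.ne'
  have hz₁b : z₁ ∈ ball (0:ℂ) 1 := mem_ball_zero_iff.mpr (hz₁.trans hρlt)
  have hz₂b : z₂ ∈ ball (0:ℂ) 1 := mem_ball_zero_iff.mpr (hz₂.trans hρlt)
  have hD0 : (0:ℝ) ≤ ‖z₁ - z₂‖ := norm_nonneg _
  have hcoeff : ∀ k, k < α → ∀ n, ‖a n k‖ ≤ M := fun k hk =>
    cauchy_coeff_bound (hAanal k hk) (hAM k hk) (haA k hk)
  have hone : ∀ k, k < α → a 1 k = 1 := fun k hk =>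
    (cauchy_coeff_one (haA k hk)).trans (hA1 k hk)
  have hM1 : (1:ℝ) ≤ M := by
    have h := hcoeff 0 h0α 1
    rwa [hone 0 h0α, norm_one] at h
  have hM0 : (0:ℝ) ≤ M := le_trans zero_le_one hM1
  have Srho := hasSum_n_rho hρ0 hρlt
  have hgeo : HasSum (fun n : ℕ => ρ ^ n) (1 - ρ)⁻¹ := hasSum_geometric_of_lt_one hρ0 hρlt
  have hsdiff : ∀ k, k < α → HasSum (fun n => a n k * (z₁ ^ n - z₂ ^ n)) (A k z₁ - A k z₂) := by
    intro k hk
    have h2 := (haA k hk z₁ hz₁b).sub (haA k hk z₂ hz₂b)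
    convert h2 using 2 with n
    · rfl
    ring
  have hterm_bnd : ∀ k, k < α → ∀ n : ℕ,
      ‖a n k * (z₁ ^ n - z₂ ^ n)‖ ≤ M * ((n : ℝ) * ρ ^ (n - 1)) * ‖z₁ - z₂‖ := by
    intro k hk n
    rw [norm_mul, mul_assoc]
    exact mul_le_mul (hcoeff k hk n) (pow_sub_pow_norm_le hz₁.le hz₂.le n) (norm_nonneg _) hM0
  have hAdiff : ∀ k, k < α → ‖A k z₁ - A k z₂‖ ≤ M * (1 / (1 - ρ) ^ 2) * ‖z₁ - z₂‖ := by
    intro k hk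
    exact norm_hasSum_le (hsdiff k hk) ((Srho.mul_left M).mul_right _) (hterm_bnd k hk)
  have hA0diff : ‖A 0 z₁ - A 0 z₂ - (z₁ - z₂)‖
      ≤ M * (1 / (1 - ρ) ^ 2) * ‖z₁ - z₂‖ - M * ‖z₁ - z₂‖ := by
    have hs := (hsdiff 0 h0α).sub (hasSum_ite_eq 1 (z₁ - z₂))
    have hg := ((Srho.mul_left M).mul_right ‖z₁ - z₂‖).sub (hasSum_ite_eq 1 (M * ‖z₁ - z₂‖))
    refine norm_hasSum_le hs hg ?_
    intro n
    by_cases hn : n = 1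
    · subst hn
      simp [hone 0 h0α]
    · simp only [if_neg hn, sub_zero]
      exact hterm_bnd 0 h0α n
  have hAval : ∀ k, k < α → ‖A k z₂‖ ≤ M * (1 - ρ)⁻¹ - M := by
    intro k hk
    refine norm_hasSum_le (haA k hk z₂ hz₂b) ((hgeo.mul_left M).sub (hasSum_ite_eq 0 M)) ?_
    intro n
    by_cases hn : n = 0
    · subst hn
      simp [ha k hk]
    · simp only [if_neg hn, sub_zero, norm_mul, norm_pow]
      exact mul_le_mul (hcoeff k hk n) (pow_le_pow_left₀ (norm_nonneg _) hz₂.le n)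
        (by positivity) hM0
  have hconj : ∀ k : ℕ, ‖(starRingEnd ℂ z₁) ^ k - (starRingEnd ℂ z₂) ^ k‖
      ≤ (k:ℝ) * ρ ^ (k - 1) * ‖z₁ - z₂‖ := by
    intro k
    have h1 : ‖starRingEnd ℂ z₁‖ ≤ ρ := by rw [RCLike.norm_conj]; exact hz₁.le
    have h2 : ‖starRingEnd ℂ z₂‖ ≤ ρ := by rw [RCLike.norm_conj]; exact hz₂.le
    have h3 := pow_sub_pow_norm_le h1 h2 k
    rwa [← map_sub, RCLike.norm_conj] at h3
  have hkey : F z₁ - F z₂ = (z₁ - z₂) + ((A 0 z₁ - A 0 z₂ - (z₁ - z₂)) +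
      ∑ k ∈ Ico 1 α, ((starRingEnd ℂ z₁) ^ k * (A k z₁ - A k z₂) +
        ((starRingEnd ℂ z₁) ^ k - (starRingEnd ℂ z₂) ^ k) * A k z₂)) := by
    have hsplit : ∑ k ∈ Ico 1 α, ((starRingEnd ℂ z₁) ^ k * (A k z₁ - A k z₂) +
          ((starRingEnd ℂ z₁) ^ k - (starRingEnd ℂ z₂) ^ k) * A k z₂)
        = ∑ k ∈ Ico 1 α, ((starRingEnd ℂ z₁) ^ k * A k z₁ - (starRingEnd ℂ z₂) ^ k * A k z₂) :=
      Finset.sum_congr rfl fun k _ => by ring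
    rw [hF z₁ hz₁b, hF z₂ hz₂b, ← Finset.sum_sub_distrib, Finset.range_eq_Ico,
      Finset.sum_eq_sum_Ico_succ_bot h0α, hsplit]
    simp only [pow_zero, one_mul]
    ring
  have hTbound : ∀ k ∈ Ico 1 α,
      ‖(starRingEnd ℂ z₁) ^ k * (A k z₁ - A k z₂) +
        ((starRingEnd ℂ z₁) ^ k - (starRingEnd ℂ z₂) ^ k) * A k z₂‖
      ≤ M * (ρ ^ k * (1 + (k:ℝ) - ρ) / (1 - ρ) ^ 2) * ‖z₁ - z₂‖ := by
    intro k hk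
    obtain ⟨hk1, hkα⟩ := mem_Ico.mp hk
    obtain ⟨m, rfl⟩ : ∃ m, k = m + 1 := ⟨k - 1, by omega⟩
    have hb1 : ‖(starRingEnd ℂ z₁) ^ (m+1) * (A (m+1) z₁ - A (m+1) z₂)‖
        ≤ ρ ^ (m+1) * (M * (1 / (1 - ρ) ^ 2) * ‖z₁ - z₂‖) := by
      rw [norm_mul, norm_pow, RCLike.norm_conj]
      exact mul_le_mul (pow_le_pow_left₀ (norm_nonneg _) hz₁.le _) (hAdiff _ hkα)
        (norm_nonneg _) (pow_nonneg hρ0 _)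
    have hb2 : ‖((starRingEnd ℂ z₁) ^ (m+1) - (starRingEnd ℂ z₂) ^ (m+1)) * A (m+1) z₂‖
        ≤ (((m+1 : ℕ):ℝ) * ρ ^ m * ‖z₁ - z₂‖) * (M * (1 - ρ)⁻¹ - M) := by
      rw [norm_mul]
      have hc := hconj (m+1)
      simp only [Nat.add_sub_cancel] at hc
      refine mul_le_mul hc (hAval _ hkα) (norm_nonneg _) (by positivity)
    have halg : ρ ^ (m+1) * (M * (1 / (1 - ρ) ^ 2) * ‖z₁ - z₂‖)
        + (((m+1 : ℕ):ℝ) * ρ ^ m * ‖z₁ - z₂‖) * (M * (1 - ρ)⁻¹ - M)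
        ≤ M * (ρ ^ (m+1) * (1 + ((m+1 : ℕ):ℝ) - ρ) / (1 - ρ) ^ 2) * ‖z₁ - z₂‖ := by
      have heq : M * (ρ ^ (m+1) * (1 + ((m+1 : ℕ):ℝ) - ρ) / (1 - ρ) ^ 2) * ‖z₁ - z₂‖
          - (ρ ^ (m+1) * (M * (1 / (1 - ρ) ^ 2) * ‖z₁ - z₂‖)
            + (((m+1 : ℕ):ℝ) * ρ ^ m * ‖z₁ - z₂‖) * (M * (1 - ρ)⁻¹ - M))
          = M * ‖z₁ - z₂‖ * ρ ^ m * ρ * ρ * (m:ℝ) / (1 - ρ) ^ 2 := by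
        push_cast
        field_simp
        ring
      have hpos : (0:ℝ) ≤ M * ‖z₁ - z₂‖ * ρ ^ m * ρ * ρ * (m:ℝ) / (1 - ρ) ^ 2 := by positivity
      linarith
    calc ‖(starRingEnd ℂ z₁) ^ (m+1) * (A (m+1) z₁ - A (m+1) z₂) +
          ((starRingEnd ℂ z₁) ^ (m+1) - (starRingEnd ℂ z₂) ^ (m+1)) * A (m+1) z₂‖
        ≤ ‖(starRingEnd ℂ z₁) ^ (m+1) * (A (m+1) z₁ - A (m+1) z₂)‖ +
          ‖((starRingEnd ℂ z₁) ^ (m+1) - (starRingEnd ℂ z₂) ^ (m+1)) * A (m+1) z₂‖ :=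
          norm_add_le _ _
      _ ≤ ρ ^ (m+1) * (M * (1 / (1 - ρ) ^ 2) * ‖z₁ - z₂‖)
          + (((m+1 : ℕ):ℝ) * ρ ^ m * ‖z₁ - z₂‖) * (M * (1 - ρ)⁻¹ - M) := add_le_add hb1 hb2
      _ ≤ M * (ρ ^ (m+1) * (1 + ((m+1 : ℕ):ℝ) - ρ) / (1 - ρ) ^ 2) * ‖z₁ - z₂‖ := halg
  have hEb : ‖(A 0 z₁ - A 0 z₂ - (z₁ - z₂)) +
      ∑ k ∈ Ico 1 α, ((starRingEnd ℂ z₁) ^ k * (A k z₁ - A k z₂) +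
        ((starRingEnd ℂ z₁) ^ k - (starRingEnd ℂ z₂) ^ k) * A k z₂)‖
      ≤ M * (ρ * (2 - ρ) / (1 - ρ) ^ 2) * ‖z₁ - z₂‖
      + ∑ k ∈ Ico 1 α, M * (ρ ^ k * (1 + (k:ℝ) - ρ) / (1 - ρ) ^ 2) * ‖z₁ - z₂‖ := by
    refine (norm_add_le _ _).trans
      (add_le_add ?_ ((norm_sum_le _ _).trans (Finset.sum_le_sum hTbound)))
    have heq : M * (1 / (1 - ρ) ^ 2) * ‖z₁ - z₂‖ - M * ‖z₁ - z₂‖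
        = M * (ρ * (2 - ρ) / (1 - ρ) ^ 2) * ‖z₁ - z₂‖ := by
      field_simp
      ring
    linarith [hA0diff]
  have hlow : ‖z₁ - z₂‖ - ‖(A 0 z₁ - A 0 z₂ - (z₁ - z₂)) +
      ∑ k ∈ Ico 1 α, ((starRingEnd ℂ z₁) ^ k * (A k z₁ - A k z₂) +
        ((starRingEnd ℂ z₁) ^ k - (starRingEnd ℂ z₂) ^ k) * A k z₂)‖ ≤ ‖F z₁ - F z₂‖ := by
    rw [hkey]
    have h7 := norm_sub_norm_le (z₁ - z₂) (-((A 0 z₁ - A 0 z₂ - (z₁ - z₂)) +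
      ∑ k ∈ Ico 1 α, ((starRingEnd ℂ z₁) ^ k * (A k z₁ - A k z₂) +
        ((starRingEnd ℂ z₁) ^ k - (starRingEnd ℂ z₂) ^ k) * A k z₂)))
    simp only [sub_neg_eq_add, norm_neg] at h7
    linarith
  have hsum_eq : M * (ρ * (2 - ρ) / (1 - ρ) ^ 2 +
        ∑ k ∈ Ico 1 α, ρ ^ k * (1 + (k : ℝ) - ρ) / (1 - ρ) ^ 2) * ‖z₁ - z₂‖
      = M * (ρ * (2 - ρ) / (1 - ρ) ^ 2) * ‖z₁ - z₂‖
      + ∑ k ∈ Ico 1 α, M * (ρ ^ k * (1 + (k:ℝ) - ρ) / (1 - ρ) ^ 2) * ‖z₁ - z₂‖ := by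
    rw [mul_add, add_mul, Finset.mul_sum, Finset.sum_mul]
  nlinarith [hEb, hlow, hsum_eq]
end

section
/- Let α ≥ 2 and let F(z) = Σ_{k=0}^{α−1} z̄^k A_k(z) be a poly-analytic function of order α on the unit disk U, where each A_k is analytic on U with A_k(0) = 0, A_k′(0) = 1 and |A_k(z)| ≤ M for all z ∈ U and all k. Then for every ρ ∈ (0,1) and every z with |z| = ρ, one has |F(z)| ≥ ρ − ρ²(1−ρ^{α−1})/(1−ρ) − M Σ_{k=0}^{α−1} ρ^{k+2}/(1−ρ). -/
open Complex Metric Finset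

/-- Cauchy estimate: if `A` is analytic on the unit ball with `‖A‖ ≤ M`, then the
coefficients of its `cauchyPowerSeries` at radius `r < 1` are bounded by `M / r ^ n`. -/
lemma cauchy_coeff_bound_s3 {A : ℂ → ℂ} {M : ℝ}
    (hAanal : AnalyticOnNhd ℂ A (ball (0 : ℂ) 1))
    (hAM : ∀ z ∈ ball (0 : ℂ) 1, ‖A z‖ ≤ M)
    {r : ℝ} (hr0 : 0 < r) (hr1 : r < 1) (n : ℕ) :
    ‖(cauchyPowerSeries A 0 r).coeff n‖ ≤ M / r ^ n := by
  have hM0 : 0 ≤ M := le_trans (norm_nonneg _) (hAM 0 (by simp))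
  have hcont : Continuous fun θ : ℝ => ‖A (circleMap 0 r θ)‖ := by
    have hco : ContinuousOn A (ball (0 : ℂ) 1) :=
      fun x hx => ((hAanal x hx).continuousAt).continuousWithinAt
    have hmap : ∀ θ : ℝ, circleMap 0 r θ ∈ ball (0 : ℂ) 1 := by
      intro θ
      simp only [mem_ball_zero_iff, norm_circleMap_zero]
      rwa [abs_of_pos hr0]
    exact (hco.comp_continuous (continuous_circleMap 0 r) hmap).norm
  have hint : (∫ θ : ℝ in (0)..2 * Real.pi, ‖A (circleMap 0 r θ)‖) ≤ 2 * Real.pi * M := by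
    calc (∫ θ : ℝ in (0)..2 * Real.pi, ‖A (circleMap 0 r θ)‖)
        ≤ ∫ _θ : ℝ in (0)..2 * Real.pi, M := by
          apply intervalIntegral.integral_mono_on Real.two_pi_pos.le
            (hcont.intervalIntegrable _ _) intervalIntegrable_const
          intro θ _
          apply hAM
          simp only [mem_ball_zero_iff, norm_circleMap_zero]
          rwa [abs_of_pos hr0]
      _ = 2 * Real.pi * M := by simp [mul_comm]
  have hnorm : ‖cauchyPowerSeries A 0 r n‖ ≤ M / r ^ n := by
    refine (norm_cauchyPowerSeries_le A 0 r n).trans ?_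
    rw [abs_of_pos hr0]
    have h1 : (2 * Real.pi)⁻¹ * (∫ θ : ℝ in (0)..2 * Real.pi, ‖A (circleMap 0 r θ)‖) ≤ M := by
      rw [inv_mul_le_iff₀ Real.two_pi_pos]
      linarith [hint]
    have h2 : (0:ℝ) < r⁻¹ ^ n := pow_pos (inv_pos.2 hr0) n
    calc (2 * Real.pi)⁻¹ * (∫ θ : ℝ in (0)..2 * Real.pi, ‖A (circleMap 0 r θ)‖) * r⁻¹ ^ n
        ≤ M * r⁻¹ ^ n := by
          apply mul_le_mul_of_nonneg_right h1 h2.le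
      _ = M / r ^ n := by rw [inv_pow]; ring
  rw [← FormalMultilinearSeries.norm_apply_eq_norm_coef]
  exact hnorm

/-- Key estimate: if `A` is analytic on the unit ball with `A 0 = 0`, `A' 0 = 1` and
`‖A‖ ≤ M`, then `‖A z - z‖ ≤ M ‖z‖² / (1 - ‖z‖)`. -/
lemma key_estimate {A : ℂ → ℂ} {M : ℝ}
    (hAanal : AnalyticOnNhd ℂ A (ball (0 : ℂ) 1))
    (h0 : A 0 = 0) (h1 : deriv A 0 = 1)
    (hAM : ∀ z ∈ ball (0 : ℂ) 1, ‖A z‖ ≤ M)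
    {z : ℂ} (hz : ‖z‖ < 1) :
    ‖A z - z‖ ≤ M * ‖z‖ ^ 2 / (1 - ‖z‖) := by
  have hM0 : 0 ≤ M := le_trans (norm_nonneg _) (hAM 0 (by simp))
  set ρ : ℝ := ‖z‖ with hρ
  have hρ0 : 0 ≤ ρ := norm_nonneg z
  -- power series at a fixed radius containing z
  have hps : ∀ r : ℝ, 0 < r → r < 1 →
      HasFPowerSeriesOnBall A (cauchyPowerSeries A 0 r) 0 (ENNReal.ofReal r) := by
    intro r hr0 hr1
    have hd : DifferentiableOn ℂ A (closedBall (0 : ℂ) r) := by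
      apply (hAanal.differentiableOn).mono
      intro x hx
      simp only [mem_closedBall_zero_iff] at hx
      simp only [mem_ball_zero_iff]
      exact lt_of_le_of_lt hx hr1
    have := hd.hasFPowerSeriesOnBall (R := ⟨r, hr0.le⟩) (by exact_mod_cast hr0)
    convert this using 2
    · rfl
    · rfl
    · show ((Real.toNNReal r : NNReal) : ENNReal) = _
      rw [Real.toNNReal_of_nonneg hr0.le]
      rfl
  set r₀ : ℝ := (ρ + 1) / 2 with hr₀def
  have hr₀0 : 0 < r₀ := by positivity
  have hr₀1 : r₀ < 1 := by simp only [hr₀def]; linarith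
  have hρr₀ : ρ < r₀ := by simp only [hr₀def]; linarith
  set p := cauchyPowerSeries A 0 r₀ with hp
  have hpsr₀ := hps r₀ hr₀0 hr₀1
  -- coefficients are bounded by M
  have hcoeff : ∀ n : ℕ, ‖p.coeff n‖ ≤ M := by
    intro n
    have hle : ∀ r : ℝ, 0 < r → r < 1 → ‖p.coeff n‖ ≤ M / r ^ n := by
      intro r hr0 hr1
      have heq : p = cauchyPowerSeries A 0 r :=
        (hpsr₀.hasFPowerSeriesAt).eq_formalMultilinearSeries
          ((hps r hr0 hr1).hasFPowerSeriesAt)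
      rw [heq]
      exact cauchy_coeff_bound_s3 hAanal hAM hr0 hr1 n
    have htend : Filter.Tendsto (fun r : ℝ => M / r ^ n) (nhdsWithin 1 (Set.Iio 1)) (nhds M) := by
      have : Filter.Tendsto (fun r : ℝ => M / r ^ n) (nhds 1) (nhds M) := by
        have hc : Continuous fun r : ℝ => r ^ n := continuous_pow n
        have : Filter.Tendsto (fun r : ℝ => M / r ^ n) (nhds 1) (nhds (M / 1 ^ n)) :=
          Filter.Tendsto.div tendsto_const_nhds (hc.tendsto 1) (by norm_num)
        simpa using this
      exact this.mono_left nhdsWithin_le_nhds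
    refine ge_of_tendsto htend ?_
    filter_upwards [Ioo_mem_nhdsLT_of_mem (by constructor <;> norm_num :
      (1:ℝ) ∈ Set.Ioc (1/2) 1)] with r hr
    exact hle r (by linarith [hr.1]) hr.2
  -- coefficient 0 and 1
  have hc0 : p.coeff 0 = 0 := (hpsr₀.coeff_zero 1).trans h0
  have hc1 : p.coeff 1 = 1 := hpsr₀.hasFPowerSeriesAt.deriv.symm.trans h1
  -- sum representation
  have hzmem : z ∈ Metric.eball (0 : ℂ) (ENNReal.ofReal r₀) := by
    rw [Metric.mem_eball, edist_zero_right, ← ofReal_norm]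
    exact ENNReal.ofReal_lt_ofReal_iff_of_nonneg (norm_nonneg z) |>.2 hρr₀
  have hsum : HasSum (fun n : ℕ => z ^ n • p.coeff n) (A z) := by
    have := hpsr₀.hasSum hzmem
    simp only [FormalMultilinearSeries.apply_eq_pow_smul_coeff, zero_add] at this
    exact this
  -- drop the first two terms
  have htail : HasSum (fun n : ℕ => z ^ (n + 2) • p.coeff (n + 2)) (A z - z) := by
    have h2 : (∑ i ∈ range 2, z ^ i • p.coeff i) = z := by
      simp [Finset.sum_range_succ, hc0, hc1, smul_eq_mul]
    have := (hasSum_nat_add_iff' (f := fun n : ℕ => z ^ n • p.coeff n) 2).2 hsum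
    rwa [h2] at this
  -- bound the tail
  have hsummable : Summable (fun n : ℕ => M * ρ ^ 2 * ρ ^ n) :=
    (summable_geometric_of_lt_one hρ0 hz).mul_left _
  have hbound : ∀ n : ℕ, ‖z ^ (n + 2) • p.coeff (n + 2)‖ ≤ M * ρ ^ 2 * ρ ^ n := by
    intro n
    rw [norm_smul, norm_pow]
    calc ρ ^ (n + 2) * ‖p.coeff (n + 2)‖ ≤ ρ ^ (n + 2) * M :=
          mul_le_mul_of_nonneg_left (hcoeff (n + 2)) (pow_nonneg hρ0 _)
      _ = M * ρ ^ 2 * ρ ^ n := by ring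
  have hnorm : ‖A z - z‖ ≤ ∑' n : ℕ, M * ρ ^ 2 * ρ ^ n := by
    refine htail.norm_le_of_bounded hsummable.hasSum hbound
  calc ‖A z - z‖ ≤ ∑' n : ℕ, M * ρ ^ 2 * ρ ^ n := hnorm
    _ = M * ρ ^ 2 * (1 - ρ)⁻¹ := by
        rw [tsum_mul_left, tsum_geometric_of_lt_one hρ0 hz]
    _ = M * ρ ^ 2 / (1 - ρ) := by ring

/-- **Lower modulus bound for poly-analytic functions on circles.**
For `F(z) = ∑_{k=0}^{α-1} conj(z)^k A k z` with `A k` analytic, `A k 0 = 0`,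
`(A k)'(0) = 1` and `‖A k‖ ≤ M` on the unit disk, for every `ρ ∈ (0,1)` and `‖z‖ = ρ`:
`‖F z‖ ≥ ρ - ρ²(1-ρ^(α-1))/(1-ρ) - M ∑_{k=0}^{α-1} ρ^(k+2)/(1-ρ)`. -/
theorem polyanalytic_modulus_lower_bound
    (α : ℕ) (hα : 2 ≤ α) (A : ℕ → ℂ → ℂ) (M : ℝ) (F : ℂ → ℂ)
    (hAanal : ∀ k < α, AnalyticOnNhd ℂ (A k) (ball (0 : ℂ) 1))
    (hA0 : ∀ k < α, A k 0 = 0)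
    (hA1 : ∀ k < α, deriv (A k) 0 = 1)
    (hAM : ∀ k < α, ∀ z ∈ ball (0 : ℂ) 1, ‖A k z‖ ≤ M)
    (hF : ∀ z ∈ ball (0 : ℂ) 1,
      F z = ∑ k ∈ range α, (starRingEnd ℂ z) ^ k * A k z)
    (ρ : ℝ) (hρpos : 0 < ρ) (hρlt : ρ < 1)
    (z : ℂ) (hz : ‖z‖ = ρ) :
    ρ - ρ ^ 2 * (1 - ρ ^ (α - 1)) / (1 - ρ) -
        M * ∑ k ∈ range α, ρ ^ (k + 2) / (1 - ρ) ≤ ‖F z‖ := by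
  have hzb : z ∈ ball (0 : ℂ) 1 := by rw [mem_ball_zero_iff, hz]; exact_mod_cast hρlt
  have hz1 : ‖z‖ < 1 := by rw [hz]; exact hρlt
  have hρ1 : (1 : ℝ) - ρ > 0 := by linarith
  have hconj : ‖starRingEnd ℂ z‖ = ρ := by rw [← hz]; exact RCLike.norm_conj z
  -- decompose F
  have hFz : F z = z + (∑ k ∈ Finset.Ico 1 α, (starRingEnd ℂ z) ^ k * z)
      + ∑ k ∈ range α, (starRingEnd ℂ z) ^ k * (A k z - z) := by
    rw [hF z hzb]
    have hsplit : ∑ k ∈ range α, (starRingEnd ℂ z) ^ k * A k z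
        = (∑ k ∈ range α, (starRingEnd ℂ z) ^ k * z)
          + ∑ k ∈ range α, (starRingEnd ℂ z) ^ k * (A k z - z) := by
      rw [← Finset.sum_add_distrib]
      congr 1; ext k; ring
    rw [hsplit]
    congr 1
    rw [Finset.range_eq_Ico, Finset.sum_eq_sum_Ico_succ_bot (by omega : 0 < α)]
    simp
  set S1 := ∑ k ∈ Finset.Ico 1 α, (starRingEnd ℂ z) ^ k * z with hS1
  set S2 := ∑ k ∈ range α, (starRingEnd ℂ z) ^ k * (A k z - z) with hS2
  -- bound S1
  have hS1bound : ‖S1‖ ≤ ρ ^ 2 * (1 - ρ ^ (α - 1)) / (1 - ρ) := by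
    have h1 : ‖S1‖ ≤ ∑ k ∈ Finset.Ico 1 α, ρ ^ k * ρ := by
      refine (norm_sum_le _ _).trans ?_
      apply Finset.sum_le_sum
      intro k _
      rw [norm_mul, norm_pow, hconj, hz]
    have h2 : (∑ k ∈ Finset.Ico 1 α, ρ ^ k * ρ) = ρ ^ 2 * (1 - ρ ^ (α - 1)) / (1 - ρ) := by
      have hgeo : ∑ k ∈ Finset.Ico 1 α, ρ ^ k
          = (∑ k ∈ range α, ρ ^ k) - 1 := by
        rw [Finset.range_eq_Ico, Finset.sum_eq_sum_Ico_succ_bot (by omega : 0 < α)]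
        simp
      have hgs : (∑ k ∈ range α, ρ ^ k) = (ρ ^ α - 1) / (ρ - 1) :=
        geom_sum_eq (by intro h; rw [h] at hρlt; exact lt_irrefl 1 hρlt) α
      have hαsplit : ρ ^ α = ρ * ρ ^ (α - 1) := by
        conv_lhs => rw [show α = 1 + (α - 1) by omega]
        rw [pow_add, pow_one]
      have hne : ρ - 1 ≠ 0 := by
        intro h
        nlinarith
      have hne' : (1:ℝ) - ρ ≠ 0 := by
        intro h
        nlinarith
      rw [← Finset.sum_mul, hgeo, hgs, hαsplit]
      field_simp
      ring
    linarith [h1, h2 ▸ h1]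
  -- bound S2
  have hM0 : 0 ≤ M := le_trans (norm_nonneg _) (hAM 0 (by omega) 0 (by simp))
  have hS2bound : ‖S2‖ ≤ M * ∑ k ∈ range α, ρ ^ (k + 2) / (1 - ρ) := by
    have h1 : ‖S2‖ ≤ ∑ k ∈ range α, ρ ^ k * (M * ρ ^ 2 / (1 - ρ)) := by
      refine (norm_sum_le _ _).trans ?_
      apply Finset.sum_le_sum
      intro k hk
      rw [norm_mul, norm_pow, hconj]
      apply mul_le_mul_of_nonneg_left _ (pow_nonneg hρpos.le k)
      have := key_estimate (hAanal k (Finset.mem_range.1 hk))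
        (hA0 k (Finset.mem_range.1 hk)) (hA1 k (Finset.mem_range.1 hk))
        (hAM k (Finset.mem_range.1 hk)) hz1
      rwa [hz] at this
    refine h1.trans (le_of_eq ?_)
    have hne' : (1:ℝ) - ρ ≠ 0 := by
      intro h
      nlinarith
    rw [Finset.mul_sum]
    congr 1; ext k
    rw [pow_add]
    field_simp
  -- combine
  have hdecomp : ‖z‖ ≤ ‖F z‖ + ‖S1‖ + ‖S2‖ := by
    have : z = F z - S1 - S2 := by rw [hFz]; ring
    calc ‖z‖ = ‖F z - S1 - S2‖ := by rw [← this]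
      _ ≤ ‖F z - S1‖ + ‖S2‖ := norm_sub_le _ _
      _ ≤ ‖F z‖ + ‖S1‖ + ‖S2‖ := by linarith [norm_sub_le (F z) S1]
  rw [hz] at hdecomp
  linarith [hS1bound, hS2bound]
end

section
/- Let F(z) = z̄ A(z) + B(z) be a bi-analytic function on the unit disk U, where A and B are analytic on U with A(0) = B(0) = 0, A′(0) = B′(0) = 1, and |A(z)| ≤ M and |B(z)| ≤ M for all z ∈ U. Let ρ₁ ∈ (0,1) be the root of 1 − 2M(2ρ − ρ²)/(1−ρ)² = 0, namely ρ₁ = 1 − √(2M/(2M+1)). Then F is univalent (injective) on the disk {z : |z| < ρ₁}. -/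
open Complex Metric
open Filter
open scoped NNReal ENNReal


lemma coeff_bound (f : ℂ → ℂ) (M : ℝ)
    (hanal : AnalyticOnNhd ℂ f (ball (0 : ℂ) 1))
    (hM : ∀ z ∈ ball (0 : ℂ) 1, ‖f z‖ ≤ M) :
    ∃ c : ℕ → ℂ, c 0 = f 0 ∧ c 1 = deriv f 0 ∧ (∀ n, ‖c n‖ ≤ M) ∧
      ∀ z : ℂ, ‖z‖ < 1/2 → HasSum (fun n => c n * z ^ n) (f z) := by
  have hdiff : DifferentiableOn ℂ f (ball (0 : ℂ) 1) :=
    fun z hz => (hanal z hz).differentiableAt.differentiableWithinAt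
  have hball : ∀ r : ℝ≥0, (r : ℝ) < 1 → 0 < r →
      HasFPowerSeriesOnBall f (cauchyPowerSeries f 0 r) 0 r := by
    intro r hr hr0
    exact (hdiff.mono (closedBall_subset_ball (by exact_mod_cast hr))).hasFPowerSeriesOnBall hr0
  have hp : HasFPowerSeriesOnBall f (cauchyPowerSeries f 0 ((1/2 : ℝ≥0) : ℝ)) 0 (1/2 : ℝ≥0) :=
    hball (1/2) (by norm_num) (by norm_num)
  set p := cauchyPowerSeries f 0 ((1/2 : ℝ≥0) : ℝ) with hpdef
  have hcoeffval : ∀ n, ‖p.coeff n‖ = ‖p n‖ := by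
    intro n; exact (FormalMultilinearSeries.norm_apply_eq_norm_coef).symm
  refine ⟨fun n => p.coeff n, ?_, ?_, ?_, ?_⟩
  · have h0 := hp.hasFPowerSeriesAt.coeff_zero (fun _ => 1)
    rw [← h0]
    show p.coeff 0 = _
    rw [FormalMultilinearSeries.coeff]
    rfl
  · rw [hp.hasFPowerSeriesAt.deriv]
    rw [FormalMultilinearSeries.apply_eq_pow_smul_coeff]
    simp
  · intro n
    -- bound via all radii r < 1
    have key : ∀ r : ℝ≥0, 1/2 ≤ (r:ℝ) → (r:ℝ) < 1 → ‖p.coeff n‖ * (r:ℝ)^n ≤ M := by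
      intro r hr2 hr1
      have hr0 : 0 < r := by
        rw [← NNReal.coe_pos]; linarith
      have hq := hball r hr1 hr0
      have heq : cauchyPowerSeries f 0 r = p :=
        hq.hasFPowerSeriesAt.eq_formalMultilinearSeries hp.hasFPowerSeriesAt
      have hcont : Continuous fun θ : ℝ => ‖f (circleMap 0 r θ)‖ := by
        apply Continuous.norm
        apply (hanal.continuousOn (s := ball 0 1)).comp_continuous (continuous_circleMap 0 r)
        intro θ
        rw [mem_ball_zero_iff]
        have : ‖circleMap 0 (r:ℝ) θ‖ = |(r:ℝ)| := by
          simpa using Complex.abs_circleMap_zero (r:ℝ) θ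
        rw [this, _root_.abs_of_nonneg r.coe_nonneg]; exact hr1
      have hint : (∫ θ : ℝ in (0)..2 * Real.pi, ‖f (circleMap 0 r θ)‖) ≤ 2 * Real.pi * M := by
        have hle : ∀ θ ∈ Set.Icc (0:ℝ) (2*Real.pi), ‖f (circleMap 0 r θ)‖ ≤ M := by
          intro θ _
          apply hM
          rw [mem_ball_zero_iff]
          have : ‖circleMap 0 (r:ℝ) θ‖ = |(r:ℝ)| := by
            simpa using Complex.abs_circleMap_zero (r:ℝ) θ
          rw [this, _root_.abs_of_nonneg r.coe_nonneg]; exact hr1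
        calc (∫ θ : ℝ in (0)..2 * Real.pi, ‖f (circleMap 0 r θ)‖)
            ≤ ∫ _ : ℝ in (0)..2 * Real.pi, M := by
              apply intervalIntegral.integral_mono_on Real.two_pi_pos.le
                (hcont.intervalIntegrable _ _) intervalIntegrable_const hle
          _ = 2 * Real.pi * M := by simp [mul_comm]
      have hbound := norm_cauchyPowerSeries_le f 0 (r:ℝ) n
      rw [heq] at hbound
      have hMnonneg : 0 ≤ M := le_trans (norm_nonneg _) (hM 0 (by simp))
      have h2pi : (0:ℝ) < (2*Real.pi)⁻¹ := by positivity
      have hb2 : ‖p n‖ ≤ M * ((r:ℝ)⁻¹)^n := by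
        calc ‖p n‖ ≤ ((2 * Real.pi)⁻¹ * ∫ θ : ℝ in (0)..2 * Real.pi, ‖f (circleMap 0 r θ)‖) * |(r:ℝ)|⁻¹ ^ n := hbound
          _ ≤ ((2 * Real.pi)⁻¹ * (2 * Real.pi * M)) * |(r:ℝ)|⁻¹ ^ n := by
              apply mul_le_mul_of_nonneg_right
              · exact mul_le_mul_of_nonneg_left hint h2pi.le
              · positivity
          _ = M * ((r:ℝ)⁻¹)^n := by
              rw [_root_.abs_of_nonneg r.coe_nonneg]
              have h2 : (2*Real.pi)⁻¹*(2*Real.pi*M) = M := by field_simp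
              rw [h2]
      rw [hcoeffval]
      have hrpos : (0:ℝ) < (r:ℝ) := by linarith
      calc ‖p n‖ * (r:ℝ)^n ≤ (M * ((r:ℝ)⁻¹)^n) * (r:ℝ)^n :=
            mul_le_mul_of_nonneg_right hb2 (by positivity)
        _ = M := by
            field_simp
            rw [one_div, inv_pow, mul_assoc, inv_mul_cancel₀ (by positivity), mul_one]
    -- take the limit r → 1
    have hseq : ∀ k : ℕ, ‖p.coeff n‖ * (1 - ((k:ℝ)+2)⁻¹)^n ≤ M := by
      intro k
      have hk2 : (2:ℝ) ≤ (k:ℝ)+2 := by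
        have : (0:ℝ) ≤ (k:ℝ) := Nat.cast_nonneg k
        linarith
      have hinv : ((k:ℝ)+2)⁻¹ ≤ 1/2 := by
        rw [inv_le_comm₀ (by linarith) (by norm_num)]
        linarith
      have hinvpos : 0 < ((k:ℝ)+2)⁻¹ := by positivity
      have := key ⟨1 - ((k:ℝ)+2)⁻¹, by linarith⟩ (by show (1:ℝ)/2 ≤ 1 - ((k:ℝ)+2)⁻¹; linarith)
        (by show 1 - ((k:ℝ)+2)⁻¹ < 1; linarith)
      exact this
    have htend : Tendsto (fun k : ℕ => ‖p.coeff n‖ * (1 - ((k:ℝ)+2)⁻¹)^n) atTop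
        (nhds (‖p.coeff n‖)) := by
      have t1 : Tendsto (fun k : ℕ => ((k:ℝ)+2)⁻¹) atTop (nhds 0) := by
        apply Tendsto.comp tendsto_inv_atTop_zero
        exact tendsto_atTop_add_const_right _ 2 tendsto_natCast_atTop_atTop
      have t2 : Tendsto (fun k : ℕ => ‖p.coeff n‖ * (1 - ((k:ℝ)+2)⁻¹)^n) atTop
          (nhds (‖p.coeff n‖ * (1 - 0)^n)) :=
        ((tendsto_const_nhds.sub t1).pow n).const_mul _
      simpa using t2
    exact le_of_tendsto htend (Filter.Eventually.of_forall hseq)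
  · intro z hz
    have hmem : z ∈ Metric.eball (0:ℂ) ((1/2 : ℝ≥0) : ℝ≥0∞) := by
      rw [Metric.emetric_ball_nnreal, mem_ball_zero_iff]
      push_cast
      simpa using hz
    have := hp.hasSum hmem
    simp only [FormalMultilinearSeries.apply_eq_pow_smul_coeff, smul_eq_mul, zero_add] at this
    simpa [mul_comm] using this

lemma pow_sub_pow_bound {ρ : ℝ} {x y : ℂ} (hx : ‖x‖ ≤ ρ) (hy : ‖y‖ ≤ ρ) :
    ∀ n : ℕ, ‖x ^ (n+1) - y ^ (n+1)‖ ≤ ((n:ℝ)+1) * ρ ^ n * ‖x - y‖ := by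
  have hρ0 : 0 ≤ ρ := le_trans (norm_nonneg x) hx
  intro n
  induction n with
  | zero => simp
  | succ n ih =>
    have hid : x ^ (n+1+1) - y ^ (n+1+1) = x * (x^(n+1) - y^(n+1)) + (x - y) * y^(n+1) := by
      ring
    push_cast
    calc ‖x ^ (n+1+1) - y ^ (n+1+1)‖
        = ‖x * (x^(n+1) - y^(n+1)) + (x - y) * y^(n+1)‖ := by rw [hid]
      _ ≤ ‖x * (x^(n+1) - y^(n+1))‖ + ‖(x - y) * y^(n+1)‖ := norm_add_le _ _
      _ ≤ ρ * (((n:ℝ)+1) * ρ ^ n * ‖x - y‖) + ‖x - y‖ * ρ^(n+1) := by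
          rw [norm_mul, norm_mul]
          have hb : ‖y^(n+1)‖ ≤ ρ^(n+1) := by
            rw [norm_pow]; exact pow_le_pow_left₀ (norm_nonneg y) hy _
          have := mul_le_mul hx ih (norm_nonneg _) hρ0
          have h2 := mul_le_mul_of_nonneg_left hb (norm_nonneg (x - y))
          linarith
      _ = ((n:ℝ)+1+1) * ρ^(n+1) * ‖x - y‖ := by ring

lemma sum_aux {ρ : ℝ} (hρ0 : 0 ≤ ρ) (hρ1 : ρ < 1) :
    Summable (fun n : ℕ => ((n:ℝ)+2) * ρ^(n+1)) ∧
    ∑' n : ℕ, ((n:ℝ)+2) * ρ^(n+1) = (2*ρ - ρ^2)/(1-ρ)^2 := by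
  have hnorm : ‖ρ‖ < 1 := by rw [Real.norm_eq_abs, _root_.abs_of_nonneg hρ0]; exact hρ1
  have h1 : Summable (fun n : ℕ => (n:ℝ) * ρ^n) := by
    simpa using summable_pow_mul_geometric_of_norm_lt_one 1 hnorm
  have h2 : Summable (fun n : ℕ => ρ^n) := summable_geometric_of_lt_one hρ0 hρ1
  have heq : (fun n : ℕ => ((n:ℝ)+2) * ρ^(n+1)) = fun n : ℕ => ρ * ((n:ℝ) * ρ^n) + (2*ρ) * ρ^n := by
    funext n; ring
  constructor
  · rw [heq]; exact (h1.mul_left ρ).add (h2.mul_left (2*ρ))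
  · rw [heq, Summable.tsum_add (h1.mul_left ρ) (h2.mul_left (2*ρ)), tsum_mul_left, tsum_mul_left,
      tsum_coe_mul_geometric_of_norm_lt_one hnorm, tsum_geometric_of_lt_one hρ0 hρ1]
    have hne : (1:ℝ) - ρ ≠ 0 := by linarith
    field_simp
    ring

lemma tail_norm_bound {c : ℕ → ℂ} {M ρ : ℝ} (hM : ∀ n, ‖c n‖ ≤ M) (hρ0 : 0 ≤ ρ) (hρ1 : ρ < 1)
    {z₁ z₂ : ℂ} (h1 : ‖z₁‖ ≤ ρ) (h2 : ‖z₂‖ ≤ ρ) :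
    ‖∑' n : ℕ, (c (n+2) * z₂^(n+2) - c (n+2) * z₁^(n+2))‖
      ≤ M * ((2*ρ - ρ^2)/(1-ρ)^2) * ‖z₂ - z₁‖ := by
  obtain ⟨hS, hSval⟩ := sum_aux hρ0 hρ1
  have hM0 : 0 ≤ M := le_trans (norm_nonneg _) (hM 0)
  have hterm : ∀ n : ℕ, ‖c (n+2) * z₂^(n+2) - c (n+2) * z₁^(n+2)‖
      ≤ M * (((n:ℝ)+2) * ρ^(n+1)) * ‖z₂ - z₁‖ := by
    intro n
    have hpow := pow_sub_pow_bound h2 h1 (n+1)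
    push_cast at hpow
    calc ‖c (n+2) * z₂^(n+2) - c (n+2) * z₁^(n+2)‖
        = ‖c (n+2)‖ * ‖z₂^(n+2) - z₁^(n+2)‖ := by rw [← mul_sub, norm_mul]
      _ ≤ M * (((n:ℝ)+1+1) * ρ^(n+1) * ‖z₂ - z₁‖) := by
          apply mul_le_mul (hM _) ?_ (norm_nonneg _) hM0
          exact hpow
      _ = M * (((n:ℝ)+2) * ρ^(n+1)) * ‖z₂ - z₁‖ := by ring
  have hSb : Summable (fun n : ℕ => M * (((n:ℝ)+2) * ρ^(n+1)) * ‖z₂ - z₁‖) :=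
    (hS.mul_left M).mul_right _
  have hsnorm : Summable (fun n : ℕ => ‖c (n+2) * z₂^(n+2) - c (n+2) * z₁^(n+2)‖) :=
    Summable.of_nonneg_of_le (fun n => norm_nonneg _) hterm hSb
  calc ‖∑' n : ℕ, (c (n+2) * z₂^(n+2) - c (n+2) * z₁^(n+2))‖
      ≤ ∑' n : ℕ, ‖c (n+2) * z₂^(n+2) - c (n+2) * z₁^(n+2)‖ := norm_tsum_le_tsum_norm hsnorm
    _ ≤ ∑' n : ℕ, M * (((n:ℝ)+2) * ρ^(n+1)) * ‖z₂ - z₁‖ := Summable.tsum_le_tsum hterm hsnorm hSb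
    _ = M * ((2*ρ - ρ^2)/(1-ρ)^2) * ‖z₂ - z₁‖ := by
        rw [show (fun n : ℕ => M * (((n:ℝ)+2) * ρ^(n+1)) * ‖z₂ - z₁‖)
            = fun n : ℕ => (M * ‖z₂ - z₁‖) * (((n:ℝ)+2) * ρ^(n+1)) from funext (fun n => by ring),
          tsum_mul_left, hSval]
        ring

lemma tail_norm_bound0 {c : ℕ → ℂ} {M ρ : ℝ} (hM : ∀ n, ‖c n‖ ≤ M) (hρ0 : 0 ≤ ρ) (hρ1 : ρ < 1)
    {z : ℂ} (h1 : ‖z‖ ≤ ρ) :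
    ‖∑' n : ℕ, (c (n+2) * z^(n+2) - c (n+2) * (0:ℂ)^(n+2))‖ ≤ M * (ρ^2/(1-ρ)) := by
  have hM0 : 0 ≤ M := le_trans (norm_nonneg _) (hM 0)
  have h2 : Summable (fun n : ℕ => ρ^n) := summable_geometric_of_lt_one hρ0 hρ1
  have hSb : Summable (fun n : ℕ => M * (ρ^2 * ρ^n)) := (h2.mul_left (ρ^2)).mul_left M
  have hterm : ∀ n : ℕ, ‖c (n+2) * z^(n+2) - c (n+2) * (0:ℂ)^(n+2)‖ ≤ M * (ρ^2 * ρ^n) := by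
    intro n
    have h0 : ((0:ℂ))^(n+2) = 0 := by simp
    rw [h0, mul_zero, sub_zero, norm_mul]
    calc ‖c (n+2)‖ * ‖z^(n+2)‖ ≤ M * ρ^(n+2) := by
          apply mul_le_mul (hM _) ?_ (norm_nonneg _) hM0
          rw [norm_pow]; exact pow_le_pow_left₀ (norm_nonneg z) h1 _
      _ = M * (ρ^2 * ρ^n) := by ring
  have hsnorm : Summable (fun n : ℕ => ‖c (n+2) * z^(n+2) - c (n+2) * (0:ℂ)^(n+2)‖) :=
    Summable.of_nonneg_of_le (fun n => norm_nonneg _) hterm hSb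
  calc ‖∑' n : ℕ, (c (n+2) * z^(n+2) - c (n+2) * (0:ℂ)^(n+2))‖
      ≤ ∑' n : ℕ, ‖c (n+2) * z^(n+2) - c (n+2) * (0:ℂ)^(n+2)‖ := norm_tsum_le_tsum_norm hsnorm
    _ ≤ ∑' n : ℕ, M * (ρ^2 * ρ^n) := Summable.tsum_le_tsum hterm hsnorm hSb
    _ = M * (ρ^2/(1-ρ)) := by
        rw [show (fun n : ℕ => M * (ρ^2 * ρ^n)) = fun n : ℕ => (M * ρ^2) * ρ^n from
          funext (fun n => by ring), tsum_mul_left, tsum_geometric_of_lt_one hρ0 hρ1]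
        field_simp

lemma tail_hasSum {c : ℕ → ℂ} {f : ℂ → ℂ}
    (hsum : ∀ z : ℂ, ‖z‖ < 1/2 → HasSum (fun n => c n * z ^ n) (f z))
    (hc0 : c 0 = 0) (hc1 : c 1 = 1) {z₁ z₂ : ℂ} (h1 : ‖z₁‖ < 1/2) (h2 : ‖z₂‖ < 1/2) :
    HasSum (fun n => c (n+2) * z₂^(n+2) - c (n+2) * z₁^(n+2))
      (f z₂ - f z₁ - (z₂ - z₁)) := by
  have h := (hsum z₂ h2).sub (hsum z₁ h1)
  have h3 := (hasSum_nat_add_iff' (f := fun n => c n * z₂ ^ n - c n * z₁ ^ n) 2).2 h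
  simp only [Finset.sum_range_succ, Finset.sum_range_zero, hc0, hc1, zero_add, zero_mul,
    pow_zero, pow_one, mul_one, one_mul, sub_zero, add_zero, zero_sub, sub_self] at h3
  convert h3 using 1

lemma numeric {M ρ ρ₁ : ℝ} (hM : 1 ≤ M) (h0 : 0 ≤ ρ) (hlt : ρ < ρ₁) (hhalf : ρ₁ < 1/2)
    (hroot : (1-ρ₁)^2 = 2*M*(2*ρ₁ - ρ₁^2)) :
    M * ((2*ρ - ρ^2)/(1-ρ)^2) + ρ * (1 + M * ((2*ρ - ρ^2)/(1-ρ)^2))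
      + (ρ + M * (ρ^2/(1-ρ))) < 1 := by
  have hρh : ρ < 1/2 := lt_trans hlt hhalf
  have hd : (0:ℝ) < 1 - ρ := by linarith
  have hprod : (0:ℝ) < (ρ₁ - ρ) * (2 - ρ - ρ₁) := by
    apply mul_pos (by linarith) (by linarith)
  have key : 2*M*(2*ρ - ρ^2) < (1-ρ)^2 := by nlinarith [hprod, hroot]
  have expand : M * ((2*ρ - ρ^2)/(1-ρ)^2) + ρ * (1 + M * ((2*ρ - ρ^2)/(1-ρ)^2))
      + (ρ + M * (ρ^2/(1-ρ)))
      = (M*(2*ρ-ρ^2)*(1+ρ) + M*ρ^2*(1-ρ) + 2*ρ*(1-ρ)^2) / (1-ρ)^2 := by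
    field_simp
    ring
  rw [expand, div_lt_one (by positivity)]
  nlinarith [key, mul_nonneg (mul_nonneg h0 (sub_nonneg.2 hM)) (sq_nonneg (1-ρ))]

/-- **Landau's theorem for bi-analytic functions (univalence part).**
For `F(z) = conj(z) A z + B z` with `A, B` analytic on the unit disk,
`A 0 = B 0 = 0`, `A'(0) = B'(0) = 1`, `‖A‖ ≤ M` and `‖B‖ ≤ M`, the function `F` is
injective on the disk of radius `ρ₁ = 1 - √(2M/(2M+1))`, the root of
`1 - 2M(2ρ - ρ²)/(1-ρ)² = 0`. -/
theorem bianalytic_landau_univalent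
    (A B : ℂ → ℂ) (M : ℝ) (F : ℂ → ℂ)
    (hAanal : AnalyticOnNhd ℂ A (ball (0 : ℂ) 1))
    (hBanal : AnalyticOnNhd ℂ B (ball (0 : ℂ) 1))
    (hA0 : A 0 = 0) (hB0 : B 0 = 0)
    (hA1 : deriv A 0 = 1) (hB1 : deriv B 0 = 1)
    (hAM : ∀ z ∈ ball (0 : ℂ) 1, ‖A z‖ ≤ M)
    (hBM : ∀ z ∈ ball (0 : ℂ) 1, ‖B z‖ ≤ M)
    (hF : ∀ z ∈ ball (0 : ℂ) 1, F z = (starRingEnd ℂ z) * A z + B z)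
    (ρ₁ : ℝ) (hρ₁ : ρ₁ = 1 - Real.sqrt (2 * M / (2 * M + 1)))
    (hroot : 1 - 2 * M * (2 * ρ₁ - ρ₁ ^ 2) / (1 - ρ₁) ^ 2 = 0) :
    Set.InjOn F (ball (0 : ℂ) ρ₁) := by
  obtain ⟨a, ha0, ha1, haM, haS⟩ := coeff_bound A M hAanal hAM
  obtain ⟨b, hb0, hb1, hbM, hbS⟩ := coeff_bound B M hBanal hBM
  rw [hA0] at ha0; rw [hA1] at ha1; rw [hB0] at hb0; rw [hB1] at hb1
  have hM1 : (1:ℝ) ≤ M := by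
    have := haM 1; rw [ha1] at this; simpa using this
  have hM0 : (0:ℝ) ≤ M := by linarith
  have hρ₁half : ρ₁ < 1/2 := by
    rw [hρ₁]
    have hq' : ((1:ℝ)/2)^2 < 2*M/(2*M+1) := by
      rw [lt_div_iff₀ (by linarith)]
      nlinarith
    have hs : (1:ℝ)/2 < Real.sqrt (2*M/(2*M+1)) :=
      (Real.lt_sqrt (by norm_num)).2 hq'
    linarith
  have h1ρ₁ : (0:ℝ) < 1 - ρ₁ := by linarith
  have hroot' : (1-ρ₁)^2 = 2*M*(2*ρ₁ - ρ₁^2) := by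
    have hne : ((1:ℝ)-ρ₁)^2 ≠ 0 := by positivity
    field_simp at hroot
    linarith
  intro z₁ hz₁ z₂ hz₂ hFeq
  by_contra hne
  rw [mem_ball_zero_iff] at hz₁ hz₂
  set ρ := max ‖z₁‖ ‖z₂‖ with hρdef
  have hρρ₁ : ρ < ρ₁ := max_lt hz₁ hz₂
  have hρ0 : 0 ≤ ρ := le_trans (norm_nonneg z₁) (le_max_left _ _)
  have hρhalf : ρ < 1/2 := lt_trans hρρ₁ hρ₁half
  have hρ1 : ρ < 1 := by linarith
  have h1ρ : ‖z₁‖ ≤ ρ := le_max_left _ _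
  have h2ρ : ‖z₂‖ ≤ ρ := le_max_right _ _
  have h1h : ‖z₁‖ < 1/2 := lt_of_le_of_lt h1ρ hρhalf
  have h2h : ‖z₂‖ < 1/2 := lt_of_le_of_lt h2ρ hρhalf
  have h0h : ‖(0:ℂ)‖ < 1/2 := by norm_num
  have h1b : z₁ ∈ ball (0:ℂ) 1 := by rw [mem_ball_zero_iff]; linarith
  have h2b : z₂ ∈ ball (0:ℂ) 1 := by rw [mem_ball_zero_iff]; linarith
  set d := ‖z₂ - z₁‖ with hddef
  have hdpos : 0 < d := by
    rw [hddef, norm_pos_iff, sub_ne_zero]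
    exact fun h => hne (h.symm)
  set S := (2*ρ - ρ^2)/(1-ρ)^2 with hSdef
  set T := ρ^2/(1-ρ) with hTdef
  -- estimate for A difference
  have hAd : ‖A z₂ - A z₁ - (z₂ - z₁)‖ ≤ M * S * d := by
    rw [← (tail_hasSum haS ha0 ha1 h1h h2h).tsum_eq]
    exact tail_norm_bound haM hρ0 hρ1 h1ρ h2ρ
  have hAdiff : ‖A z₂ - A z₁‖ ≤ (1 + M * S) * d := by
    have h := norm_add_le (A z₂ - A z₁ - (z₂ - z₁)) (z₂ - z₁)
    simp only [sub_add_cancel] at h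
    calc ‖A z₂ - A z₁‖ ≤ ‖A z₂ - A z₁ - (z₂ - z₁)‖ + ‖z₂ - z₁‖ := h
      _ ≤ M * S * d + d := by rw [← hddef]; linarith
      _ = (1 + M * S) * d := by ring
  -- estimate for B difference
  have hBd : ‖B z₂ - B z₁ - (z₂ - z₁)‖ ≤ M * S * d := by
    rw [← (tail_hasSum hbS hb0 hb1 h1h h2h).tsum_eq]
    exact tail_norm_bound hbM hρ0 hρ1 h1ρ h2ρ
  -- estimate for ‖A z₁‖
  have hA1n : ‖A z₁‖ ≤ ρ + M * T := by
    have hrepr := (tail_hasSum haS ha0 ha1 h0h h1h).tsum_eq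
    rw [hA0, sub_zero, sub_zero] at hrepr
    have hb := tail_norm_bound0 haM hρ0 hρ1 h1ρ
    rw [hrepr] at hb
    calc ‖A z₁‖ = ‖z₁ + (A z₁ - z₁)‖ := by ring_nf
      _ ≤ ‖z₁‖ + ‖A z₁ - z₁‖ := norm_add_le _ _
      _ ≤ ρ + M * T := add_le_add h1ρ hb
  -- the identity
  have hid : z₂ - z₁ = -((B z₂ - B z₁ - (z₂ - z₁)) + (starRingEnd ℂ z₂) * (A z₂ - A z₁)
      + ((starRingEnd ℂ z₂) - (starRingEnd ℂ z₁)) * A z₁) := by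
    have e1 := hF z₁ h1b
    have e2 := hF z₂ h2b
    rw [e1, e2] at hFeq
    linear_combination -hFeq
  -- norm estimates
  have hconj2 : ‖starRingEnd ℂ z₂‖ ≤ ρ := by rw [RCLike.norm_conj]; exact h2ρ
  have hconjd : ‖starRingEnd ℂ z₂ - starRingEnd ℂ z₁‖ = d := by
    rw [← map_sub, RCLike.norm_conj]
  have hnum := numeric hM1 hρ0 hρρ₁ hρ₁half hroot'
  have hmain : d ≤ (M * S + ρ * (1 + M * S) + (ρ + M * T)) * d := by
    calc d = ‖-((B z₂ - B z₁ - (z₂ - z₁)) + (starRingEnd ℂ z₂) * (A z₂ - A z₁)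
        + ((starRingEnd ℂ z₂) - (starRingEnd ℂ z₁)) * A z₁)‖ := by
          rw [hddef]; exact congrArg Norm.norm hid
      _ = ‖(B z₂ - B z₁ - (z₂ - z₁)) + (starRingEnd ℂ z₂) * (A z₂ - A z₁)
        + ((starRingEnd ℂ z₂) - (starRingEnd ℂ z₁)) * A z₁‖ := norm_neg _
      _ ≤ ‖B z₂ - B z₁ - (z₂ - z₁)‖ + ‖(starRingEnd ℂ z₂) * (A z₂ - A z₁)‖
        + ‖((starRingEnd ℂ z₂) - (starRingEnd ℂ z₁)) * A z₁‖ := norm_add₃_le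
      _ ≤ M * S * d + ρ * ((1 + M * S) * d) + d * (ρ + M * T) := by
          rw [norm_mul, norm_mul, hconjd]
          have t1 : ‖starRingEnd ℂ z₂‖ * ‖A z₂ - A z₁‖ ≤ ρ * ((1 + M * S) * d) := by
            apply mul_le_mul hconj2 hAdiff (norm_nonneg _) hρ0
          have t2 : d * ‖A z₁‖ ≤ d * (ρ + M * T) :=
            mul_le_mul_of_nonneg_left hA1n hdpos.le
          linarith
      _ = (M * S + ρ * (1 + M * S) + (ρ + M * T)) * d := by ring
  have hlt : (M * S + ρ * (1 + M * S) + (ρ + M * T)) * d < 1 * d :=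
    mul_lt_mul_of_pos_right hnum hdpos
  rw [one_mul] at hlt
  linarith
end

section
/- Let F(z) = z̄ A(z) + B(z) be a bi-analytic function on the unit disk U, where A and B are analytic on U with A(0) = B(0) = 0, A′(0) = B′(0) = 1, and |A(z)| ≤ M and |B(z)| ≤ M for all z ∈ U. Let ρ₁ = 1 − √(2M/(2M+1)) and set R₁ = ρ₁ − ρ₁² − M(ρ₁³ + ρ₁²)/(1−ρ₁). If R₁ > 0, then the image F({z : |z| < ρ₁}) contains the disk {w : |w| < R₁}. -/
open Complex Metric NNReal Filter

section aux

lemma bianalytic_aux_pow_diff (x y : ℂ) (r : ℝ) (hx : ‖x‖ ≤ r) (hy : ‖y‖ ≤ r) (m : ℕ) :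
    ‖x ^ (m + 2) - y ^ (m + 2)‖ ≤ ((m : ℝ) + 2) * r ^ (m + 1) * ‖x - y‖ := by
  have h0 : 0 ≤ r := (norm_nonneg x).trans hx
  rw [← geom_sum₂_mul x y (m + 2), norm_mul]
  refine mul_le_mul_of_nonneg_right ?_ (norm_nonneg _)
  refine (norm_sum_le _ _).trans ?_
  have hbound : ∀ i ∈ Finset.range (m + 2), ‖x ^ i * y ^ (m + 2 - 1 - i)‖ ≤ r ^ (m + 1) := by
    intro i hi
    rw [Finset.mem_range] at hi
    have hi' : i ≤ m + 1 := Nat.lt_succ_iff.mp hi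
    rw [norm_mul, norm_pow, norm_pow]
    calc ‖x‖ ^ i * ‖y‖ ^ (m + 2 - 1 - i)
        ≤ r ^ i * r ^ (m + 2 - 1 - i) := by
          apply mul_le_mul (pow_le_pow_left₀ (norm_nonneg x) hx i)
            (pow_le_pow_left₀ (norm_nonneg y) hy _) (by positivity) (by positivity)
      _ = r ^ (m + 1) := by
          rw [← pow_add]
          congr 1
          omega
  calc ∑ i ∈ Finset.range (m + 2), ‖x ^ i * y ^ (m + 2 - 1 - i)‖
      ≤ (m + 2) * r ^ (m + 1) := by
        have := Finset.sum_le_card_nsmul (Finset.range (m + 2)) _ (r ^ (m + 1)) hbound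
        simpa [nsmul_eq_mul] using this
    _ = ((m : ℝ) + 2) * r ^ (m + 1) := by push_cast; ring

lemma bianalytic_aux_tail (c : ℕ → ℂ) (M r : ℝ) (hc : ∀ n, ‖c n‖ ≤ M)
    (hr0 : 0 ≤ r) (hr1 : r < 1) (z S : ℂ) (hz : ‖z‖ ≤ r)
    (hs : HasSum (fun n => c n * z ^ n) S) :
    ‖S - c 0 - c 1 * z‖ ≤ M * r ^ 2 / (1 - r) := by
  have hM0 : 0 ≤ M := (norm_nonneg (c 0)).trans (hc 0)
  have h2 : HasSum (fun n => c (n + 2) * z ^ (n + 2))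
      (S - ∑ i ∈ Finset.range 2, c i * z ^ i) := (hasSum_nat_add_iff' 2).2 hs
  have hsum2 : ∑ i ∈ Finset.range 2, c i * z ^ i = c 0 + c 1 * z := by
    simp [Finset.sum_range_succ]
  rw [hsum2] at h2
  have hg : HasSum (fun n : ℕ => M * r ^ 2 * r ^ n) (M * r ^ 2 * (1 - r)⁻¹) :=
    (hasSum_geometric_of_lt_one hr0 hr1).mul_left _
  have hb : ∀ n : ℕ, ‖c (n + 2) * z ^ (n + 2)‖ ≤ M * r ^ 2 * r ^ n := by
    intro n
    rw [norm_mul, norm_pow]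
    calc ‖c (n + 2)‖ * ‖z‖ ^ (n + 2)
        ≤ M * r ^ (n + 2) := by
          apply mul_le_mul (hc _) (pow_le_pow_left₀ (norm_nonneg z) hz _)
            (by positivity) hM0
      _ = M * r ^ 2 * r ^ n := by ring
  have := tsum_of_norm_bounded hg hb
  rw [h2.tsum_eq] at this
  calc ‖S - c 0 - c 1 * z‖ = ‖S - (c 0 + c 1 * z)‖ := by ring_nf
    _ ≤ M * r ^ 2 * (1 - r)⁻¹ := this
    _ = M * r ^ 2 / (1 - r) := by rw [div_eq_mul_inv]

lemma bianalytic_aux_lip (c : ℕ → ℂ) (M r : ℝ) (hc : ∀ n, ‖c n‖ ≤ M)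
    (hr0 : 0 ≤ r) (hr1 : r < 1) (z₁ z₂ S₁ S₂ : ℂ) (hz₁ : ‖z₁‖ ≤ r) (hz₂ : ‖z₂‖ ≤ r)
    (hs₁ : HasSum (fun n => c n * z₁ ^ n) S₁) (hs₂ : HasSum (fun n => c n * z₂ ^ n) S₂) :
    ‖S₁ - S₂ - c 1 * (z₁ - z₂)‖ ≤ M * ((1 - r)⁻¹ ^ 2 - 1) * ‖z₁ - z₂‖ := by
  have hM0 : 0 ≤ M := (norm_nonneg (c 0)).trans (hc 0)
  have hne : (1 : ℝ) - r ≠ 0 := by linarith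
  set d := ‖z₁ - z₂‖ with hd
  have hshift : ∀ (z : ℂ) (S : ℂ), HasSum (fun n => c n * z ^ n) S →
      HasSum (fun n => c (n + 2) * z ^ (n + 2)) (S - (c 0 + c 1 * z)) := by
    intro z S hs
    have h2 := (hasSum_nat_add_iff' (f := fun n => c n * z ^ n) 2).2 hs
    have hsum2 : ∑ i ∈ Finset.range 2, c i * z ^ i = c 0 + c 1 * z := by
      simp [Finset.sum_range_succ]
    rwa [hsum2] at h2
  have h := (hshift z₁ S₁ hs₁).sub (hshift z₂ S₂ hs₂)
  have h' : HasSum (fun n => c (n + 2) * (z₁ ^ (n + 2) - z₂ ^ (n + 2)))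
      (S₁ - S₂ - c 1 * (z₁ - z₂)) := by
    convert h using 1
    · rfl
    · funext n; ring
    · ring
  have hrn : ‖r‖ < 1 := by rw [Real.norm_eq_abs, _root_.abs_of_nonneg hr0]; exact hr1
  have hg1 : HasSum (fun n : ℕ => (n : ℝ) * r ^ n) (r / (1 - r) ^ 2) :=
    hasSum_coe_mul_geometric_of_norm_lt_one hrn
  have hg1' : HasSum (fun n : ℕ => ((n : ℝ) + 1) * r ^ (n + 1)) (r / (1 - r) ^ 2) := by
    have := (hasSum_nat_add_iff' (f := fun n : ℕ => (n : ℝ) * r ^ n) 1).2 hg1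
    simp only [Finset.sum_range_one, Nat.cast_zero, zero_mul, sub_zero] at this
    convert this using 1
    · rfl
    funext n; push_cast; ring
  have hg2 : HasSum (fun n : ℕ => r ^ (n + 1)) ((1 - r)⁻¹ - 1) := by
    have := (hasSum_nat_add_iff' (f := fun n : ℕ => r ^ n) 1).2
      (hasSum_geometric_of_lt_one hr0 hr1)
    simpa using this
  have hg3 : HasSum (fun n : ℕ => (M * d) * (((n : ℝ) + 1) * r ^ (n + 1) + r ^ (n + 1)))
      ((M * d) * (r / (1 - r) ^ 2 + ((1 - r)⁻¹ - 1))) := (hg1'.add hg2).mul_left _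
  have hval : (M * d) * (r / (1 - r) ^ 2 + ((1 - r)⁻¹ - 1)) = M * ((1 - r)⁻¹ ^ 2 - 1) * d := by
    field_simp
    ring
  rw [hval] at hg3
  have hb : ∀ n : ℕ, ‖c (n + 2) * (z₁ ^ (n + 2) - z₂ ^ (n + 2))‖ ≤
      (M * d) * (((n : ℝ) + 1) * r ^ (n + 1) + r ^ (n + 1)) := by
    intro n
    rw [norm_mul]
    calc ‖c (n + 2)‖ * ‖z₁ ^ (n + 2) - z₂ ^ (n + 2)‖
        ≤ M * (((n : ℝ) + 2) * r ^ (n + 1) * d) := by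
          apply mul_le_mul (hc _) (bianalytic_aux_pow_diff z₁ z₂ r hz₁ hz₂ n) (norm_nonneg _) hM0
      _ = (M * d) * (((n : ℝ) + 1) * r ^ (n + 1) + r ^ (n + 1)) := by ring
  have := tsum_of_norm_bounded hg3 hb
  rwa [h'.tsum_eq] at this

lemma bianalytic_aux_coeff (f : ℂ → ℂ) (M : ℝ)
    (hf : AnalyticOnNhd ℂ f (ball (0 : ℂ) 1))
    (hM : ∀ z ∈ ball (0 : ℂ) 1, ‖f z‖ ≤ M) :
    ∃ c : ℕ → ℂ, c 0 = f 0 ∧ c 1 = deriv f 0 ∧ (∀ n, ‖c n‖ ≤ M) ∧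
      ∀ z : ℂ, ‖z‖ < 1 → HasSum (fun n => c n * z ^ n) (f z) := by
  have hd : DifferentiableOn ℂ f (ball (0 : ℂ) 1) :=
    fun z hz => (hf z hz).differentiableAt.differentiableWithinAt
  have key : ∀ r : ℝ≥0, 0 < r → (r : ℝ) < 1 →
      HasFPowerSeriesOnBall f (cauchyPowerSeries f 0 r) 0 r := by
    intro r hr hr1
    refine (hd.mono ?_).hasFPowerSeriesOnBall hr
    intro z hz
    simp only [mem_closedBall, mem_ball] at *
    linarith
  set p := cauchyPowerSeries f 0 ((1/2 : ℝ≥0) : ℝ) with hp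
  have hp2 : HasFPowerSeriesOnBall f p 0 (1/2 : ℝ≥0) := key _ (by norm_num) (by norm_num)
  refine ⟨fun n => p.coeff n, ?_, ?_, ?_, ?_⟩
  · simpa using hp2.hasFPowerSeriesAt.coeff_zero (fun _ => 1)
  · rw [hp2.hasFPowerSeriesAt.deriv]
    rfl
  · intro n
    have hle : ∀ r : ℝ, 0 < r → r < 1 → ‖p.coeff n‖ ≤ M / r ^ n := by
      intro r hr hr1
      lift r to ℝ≥0 using hr.le with r'
      have hps := key r' (by exact_mod_cast hr) (by exact_mod_cast hr1)
      have hpq : cauchyPowerSeries f 0 (r' : ℝ) = p :=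
        hps.hasFPowerSeriesAt.eq_formalMultilinearSeries hp2.hasFPowerSeriesAt
      rw [← FormalMultilinearSeries.norm_apply_eq_norm_coef, ← hpq]
      refine (norm_cauchyPowerSeries_le f 0 (r' : ℝ) n).trans ?_
      have hr0 : (0:ℝ) < r' := by exact_mod_cast hr
      have hint : (∫ θ : ℝ in (0)..2 * Real.pi, ‖f (circleMap 0 r' θ)‖) ≤ 2 * Real.pi * M := by
        have hcont : Continuous fun θ : ℝ => ‖f (circleMap 0 r' θ)‖ := by
          apply Continuous.norm
          refine continuous_iff_continuousAt.2 fun θ => ?_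
          have hmem : circleMap 0 r' θ ∈ ball (0 : ℂ) 1 := by
            simp only [mem_ball, dist_zero_right]
            rw [norm_circleMap_zero, _root_.abs_of_pos hr0]
            exact_mod_cast hr1
          exact ((hf _ hmem).differentiableAt.continuousAt).comp
            (continuous_circleMap 0 r').continuousAt
        calc (∫ θ : ℝ in (0)..2 * Real.pi, ‖f (circleMap 0 r' θ)‖)
            ≤ ∫ _ : ℝ in (0)..2 * Real.pi, M := by
              apply intervalIntegral.integral_mono_on Real.two_pi_pos.le
                (hcont.intervalIntegrable _ _) intervalIntegrable_const
              intro θ _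
              apply hM
              simp only [mem_ball, dist_zero_right]
              rw [norm_circleMap_zero, _root_.abs_of_pos hr0]
              exact_mod_cast hr1
          _ = 2 * Real.pi * M := by simp [mul_comm]
      have habs : |(r' : ℝ)|⁻¹ ^ n = ((r' : ℝ) ^ n)⁻¹ := by
        rw [_root_.abs_of_pos hr0, inv_pow]
      rw [habs, div_eq_mul_inv]
      apply mul_le_mul_of_nonneg_right _ (by positivity)
      calc (2 * Real.pi)⁻¹ * ∫ θ : ℝ in (0)..2 * Real.pi, ‖f (circleMap 0 r' θ)‖
          ≤ (2 * Real.pi)⁻¹ * (2 * Real.pi * M) := by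
            apply mul_le_mul_of_nonneg_left hint (by positivity)
        _ = M := by field_simp
    have hlim : Tendsto (fun r : ℝ => M / r ^ n) (nhdsWithin 1 (Set.Iio 1)) (nhds M) := by
      have : Tendsto (fun r : ℝ => M / r ^ n) (nhds 1) (nhds (M / 1 ^ n)) := by
        apply Tendsto.div tendsto_const_nhds
        · exact (continuous_pow n).tendsto 1
        · norm_num
      simpa using this.mono_left nhdsWithin_le_nhds
    refine ge_of_tendsto hlim ?_
    filter_upwards [Ioo_mem_nhdsLT_of_mem (by norm_num : (1:ℝ) ∈ Set.Ioc (0:ℝ) 1)] with r hr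
    exact hle r hr.1 hr.2
  · intro z hz
    obtain ⟨r, hzr, hr1⟩ := exists_between hz
    have hr0 : 0 < r := lt_of_le_of_lt (norm_nonneg z) hzr
    lift r to ℝ≥0 using hr0.le with r'
    have hps := key r' (by exact_mod_cast hr0) (by exact_mod_cast hr1)
    have hpq : cauchyPowerSeries f 0 (r' : ℝ) = p :=
      hps.hasFPowerSeriesAt.eq_formalMultilinearSeries hp2.hasFPowerSeriesAt
    rw [hpq] at hps
    have hzmem : z ∈ Metric.eball (0 : ℂ) r' := by
      simp only [Metric.mem_eball, edist_zero_right]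
      exact_mod_cast ENNReal.coe_lt_coe.2 (by exact_mod_cast hzr : ‖z‖₊ < r')
    have := hps.hasSum hzmem
    simp only [FormalMultilinearSeries.apply_eq_pow_smul_coeff, smul_eq_mul] at this
    simpa [mul_comm] using this

lemma bianalytic_aux_key_poly (s u : ℝ) (h32 : 2 ≤ 3 * s ^ 2) (hsu : s < u) (hu1 : u ≤ 1)
    (hs0 : 0 < s) :
    s ^ 2 * (1 - u ^ 2) * (2 - u) + 4 * (1 - u) * u ^ 2 * (1 - s ^ 2) + s ^ 2 * u * (1 - u) ^ 2
      < 2 * u ^ 2 * (1 - s ^ 2) := by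
  have hu0 : 0 < u := hs0.trans hsu
  have h1 : 0 < (u ^ 2 - s ^ 2) * (3 * u ^ 3 - 3 * u ^ 2 + 1) := by
    apply mul_pos
    · nlinarith
    · nlinarith [sq_nonneg (3 * u - 2), sq_nonneg u, mul_pos hu0 hu0]
  have h2 : 0 ≤ u ^ 2 * (1 - u) * (3 * u ^ 2 - 2) := by
    apply mul_nonneg (mul_nonneg (sq_nonneg u) (by linarith))
    nlinarith
  nlinarith [h1, h2]

lemma bianalytic_aux_lip_lt_one (M s r : ℝ) (hM : 1 ≤ M) (hs : s ^ 2 * (2 * M + 1) = 2 * M)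
    (hs0 : 0 < s) (hr0 : 0 ≤ r) (hr : r < 1 - s) :
    M * ((1 - r)⁻¹ ^ 2 - 1) * (1 + r) + 2 * r + M * r ^ 2 / (1 - r) < 1 := by
  set u : ℝ := 1 - r with hu
  have hsu : s < u := by simp only [hu]; linarith
  have hu1 : u ≤ 1 := by simp only [hu]; linarith
  have hu0 : 0 < u := hs0.trans hsu
  have hs1 : s < 1 := lt_of_lt_of_le hsu hu1
  have h32 : 2 ≤ 3 * s ^ 2 := by nlinarith
  have hM' : 2 * M * (1 - s ^ 2) = s ^ 2 := by nlinarith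
  have key := bianalytic_aux_key_poly s u h32 hsu hu1 hs0
  have h2pos : (0 : ℝ) < 2 * (1 - s ^ 2) := by nlinarith
  have e1 : M * (1 - u ^ 2) * (2 - u) * (2 * (1 - s ^ 2)) = s ^ 2 * (1 - u ^ 2) * (2 - u) := by
    linear_combination (1 - u ^ 2) * (2 - u) * hM'
  have e3 : M * u * (1 - u) ^ 2 * (2 * (1 - s ^ 2)) = s ^ 2 * u * (1 - u) ^ 2 := by
    linear_combination u * (1 - u) ^ 2 * hM'
  have hnum : M * (1 - u ^ 2) * (2 - u) + 2 * (1 - u) * u ^ 2 + M * u * (1 - u) ^ 2 < u ^ 2 := by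
    have hprod : (M * (1 - u ^ 2) * (2 - u) + 2 * (1 - u) * u ^ 2 + M * u * (1 - u) ^ 2)
        * (2 * (1 - s ^ 2)) < u ^ 2 * (2 * (1 - s ^ 2)) := by nlinarith [key, e1, e3]
    exact lt_of_mul_lt_mul_right hprod h2pos.le
  have hexp : M * ((1 - r)⁻¹ ^ 2 - 1) * (1 + r) + 2 * r + M * r ^ 2 / (1 - r)
      = (M * (1 - u ^ 2) * (2 - u) + 2 * (1 - u) * u ^ 2 + M * u * (1 - u) ^ 2) / u ^ 2 := by
    have h : (1 : ℝ) - r = u := hu.symm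
    rw [h]
    field_simp
    ring
  rw [hexp, div_lt_one (by positivity)]
  exact hnum

end aux

/-- **Landau's theorem for bi-analytic functions (covering part).**
For `F(z) = conj(z) A z + B z` with `A, B` analytic on the unit disk,
`A 0 = B 0 = 0`, `A'(0) = B'(0) = 1`, `‖A‖ ≤ M`, `‖B‖ ≤ M`,
`ρ₁ = 1 - √(2M/(2M+1))` and `R₁ = ρ₁ - ρ₁² - M(ρ₁³ + ρ₁²)/(1-ρ₁)`, if `R₁ > 0`
then `F(ball 0 ρ₁)` contains the disk `ball 0 R₁`. -/
theorem bianalytic_landau_covering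
    (A B : ℂ → ℂ) (M : ℝ) (F : ℂ → ℂ)
    (hAanal : AnalyticOnNhd ℂ A (ball (0 : ℂ) 1))
    (hBanal : AnalyticOnNhd ℂ B (ball (0 : ℂ) 1))
    (hA0 : A 0 = 0) (hB0 : B 0 = 0)
    (hA1 : deriv A 0 = 1) (hB1 : deriv B 0 = 1)
    (hAM : ∀ z ∈ ball (0 : ℂ) 1, ‖A z‖ ≤ M)
    (hBM : ∀ z ∈ ball (0 : ℂ) 1, ‖B z‖ ≤ M)
    (hF : ∀ z ∈ ball (0 : ℂ) 1, F z = (starRingEnd ℂ z) * A z + B z)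
    (ρ₁ : ℝ) (hρ₁ : ρ₁ = 1 - Real.sqrt (2 * M / (2 * M + 1)))
    (R₁ : ℝ) (hR₁ : R₁ = ρ₁ - ρ₁ ^ 2 - M * (ρ₁ ^ 3 + ρ₁ ^ 2) / (1 - ρ₁))
    (hR₁pos : 0 < R₁) :
    ball (0 : ℂ) R₁ ⊆ F '' ball (0 : ℂ) ρ₁ := by
  -- M ≥ 1 via the Schwarz lemma
  have hM1 : (1 : ℝ) ≤ M := by
    have hAd : DifferentiableOn ℂ A (ball (0 : ℂ) 1) :=
      fun z hz => (hAanal z hz).differentiableAt.differentiableWithinAt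
    have h : ∀ ε : ℝ, 0 < ε → (1 : ℝ) ≤ M + ε := by
      intro ε hε
      have hmaps : Set.MapsTo A (ball (0 : ℂ) 1) (ball (A 0) (M + ε)) := by
        intro z hz
        simp only [mem_ball, hA0, dist_zero_right]
        calc ‖A z‖ ≤ M := hAM z hz
          _ < M + ε := by linarith
      have := Complex.norm_deriv_le_div_of_mapsTo_ball hAd (hmaps.mono_right ball_subset_closedBall) one_pos
      rw [hA1] at this
      simpa using this
    by_contra hc
    push_neg at hc
    have := h ((1 - M) / 2) (by linarith)
    linarith
  have hM0 : (0 : ℝ) < M := by linarith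
  -- properties of s = √(2M/(2M+1)) and ρ₁
  set s : ℝ := Real.sqrt (2 * M / (2 * M + 1)) with hsdef
  have hden : (0 : ℝ) < 2 * M + 1 := by linarith
  have harg : (0 : ℝ) < 2 * M / (2 * M + 1) := by positivity
  have hsq : s ^ 2 = 2 * M / (2 * M + 1) := Real.sq_sqrt harg.le
  have hs0 : 0 < s := Real.sqrt_pos.2 harg
  have hs : s ^ 2 * (2 * M + 1) = 2 * M := by
    rw [hsq]; field_simp
  have hs1 : s < 1 := by
    have h2 : s ^ 2 < 1 := by rw [hsq, div_lt_one hden]; linarith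
    by_contra h
    push_neg at h
    nlinarith
  have hρpos : 0 < ρ₁ := by rw [hρ₁]; linarith
  have hρlt : ρ₁ < 1 := by rw [hρ₁]; linarith
  have hρs : ρ₁ = 1 - s := hρ₁
  -- coefficient expansions
  obtain ⟨a, ha0', ha1', haM, haSum⟩ := bianalytic_aux_coeff A M hAanal hAM
  obtain ⟨b, hb0', hb1', hbM, hbSum⟩ := bianalytic_aux_coeff B M hBanal hBM
  have ha0 : a 0 = 0 := ha0'.trans hA0
  have ha1 : a 1 = 1 := ha1'.trans hA1
  have hb0 : b 0 = 0 := hb0'.trans hB0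
  have hb1 : b 1 = 1 := hb1'.trans hB1
  intro w hw
  rw [mem_ball, dist_zero_right] at hw
  -- choose a radius r < ρ₁ that still works
  set φ : ℝ → ℝ := fun ρ => ρ - ρ ^ 2 - M * (ρ ^ 3 + ρ ^ 2) / (1 - ρ) with hφdef
  have hφcont : ContinuousAt φ ρ₁ := by
    apply ContinuousAt.sub (ContinuousAt.sub (continuousAt_id) (by fun_prop))
    apply ContinuousAt.div (by fun_prop) (by fun_prop)
    rw [hρs]; intro h; linarith [hs0, sub_eq_zero.mp h]
  have hφρ : φ ρ₁ = R₁ := by rw [hφdef, hR₁]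
  have hev : ∀ᶠ ρ in nhds ρ₁, ‖w‖ < φ ρ ∧ 0 < ρ := by
    have h1 : ∀ᶠ ρ in nhds ρ₁, φ ρ ∈ Set.Ioi ‖w‖ :=
      hφcont.eventually_mem (isOpen_Ioi.mem_nhds (by rw [hφρ]; exact hw))
    exact h1.and (eventually_gt_nhds hρpos)
  obtain ⟨r, hrw, hrρ⟩ : ∃ r, (‖w‖ < φ r ∧ 0 < r) ∧ r < ρ₁ := by
    have h2 := hev.filter_mono (nhdsWithin_le_nhds (s := Set.Iio ρ₁))
    rcases (h2.and self_mem_nhdsWithin).exists with ⟨r, hr1, hr2⟩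
    exact ⟨r, hr1, hr2⟩
  obtain ⟨hwφ, hr0⟩ := hrw
  have hr1 : r < 1 := lt_trans hrρ hρlt
  have hrs : r < 1 - s := by rw [← hρs]; exact hrρ
  have hone_sub : (0:ℝ) < 1 - r := by linarith
  -- bounds from the power series
  have hAt : ∀ z : ℂ, ‖z‖ ≤ r → ‖A z - z‖ ≤ M * r ^ 2 / (1 - r) := by
    intro z hz
    have := bianalytic_aux_tail a M r haM hr0.le hr1 z (A z) hz
      (haSum z (lt_of_le_of_lt hz hr1))
    simpa [ha0, ha1] using this
  have hBt : ∀ z : ℂ, ‖z‖ ≤ r → ‖B z - z‖ ≤ M * r ^ 2 / (1 - r) := by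
    intro z hz
    have := bianalytic_aux_tail b M r hbM hr0.le hr1 z (B z) hz
      (hbSum z (lt_of_le_of_lt hz hr1))
    simpa [hb0, hb1] using this
  have hAn : ∀ z : ℂ, ‖z‖ ≤ r → ‖A z‖ ≤ r + M * r ^ 2 / (1 - r) := by
    intro z hz
    calc ‖A z‖ = ‖z + (A z - z)‖ := by ring_nf
      _ ≤ ‖z‖ + ‖A z - z‖ := norm_add_le _ _
      _ ≤ r + M * r ^ 2 / (1 - r) := add_le_add hz (hAt z hz)
  have hAl : ∀ z₁ z₂ : ℂ, ‖z₁‖ ≤ r → ‖z₂‖ ≤ r →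
      ‖A z₁ - A z₂ - (z₁ - z₂)‖ ≤ M * ((1 - r)⁻¹ ^ 2 - 1) * ‖z₁ - z₂‖ := by
    intro z₁ z₂ h1 h2
    have := bianalytic_aux_lip a M r haM hr0.le hr1 z₁ z₂ (A z₁) (A z₂) h1 h2
      (haSum z₁ (lt_of_le_of_lt h1 hr1)) (haSum z₂ (lt_of_le_of_lt h2 hr1))
    rwa [ha1, one_mul] at this
  have hBl : ∀ z₁ z₂ : ℂ, ‖z₁‖ ≤ r → ‖z₂‖ ≤ r →
      ‖B z₁ - B z₂ - (z₁ - z₂)‖ ≤ M * ((1 - r)⁻¹ ^ 2 - 1) * ‖z₁ - z₂‖ := by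
    intro z₁ z₂ h1 h2
    have := bianalytic_aux_lip b M r hbM hr0.le hr1 z₁ z₂ (B z₁) (B z₂) h1 h2
      (hbSum z₁ (lt_of_le_of_lt h1 hr1)) (hbSum z₂ (lt_of_le_of_lt h2 hr1))
    rwa [hb1, one_mul] at this
  set μ : ℝ := M * ((1 - r)⁻¹ ^ 2 - 1) with hμdef
  have hμ0 : 0 ≤ μ := by
    have h1 : (1:ℝ) ≤ (1 - r)⁻¹ := by
      rw [le_inv_comm₀] <;> linarith
    have h2 : (1:ℝ) ≤ (1 - r)⁻¹ ^ 2 := by nlinarith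
    rw [hμdef]; nlinarith
  -- the contraction map
  set T : ℂ → ℂ := fun z => w - (B z - z) - (starRingEnd ℂ z) * A z with hTdef
  have hmaps : Set.MapsTo T (closedBall (0 : ℂ) r) (closedBall (0 : ℂ) r) := by
    intro z hz
    rw [mem_closedBall, dist_zero_right] at hz ⊢
    have h1 : ‖T z‖ ≤ ‖w‖ + ‖B z - z‖ + ‖z‖ * ‖A z‖ := by
      calc ‖T z‖ ≤ ‖w - (B z - z)‖ + ‖(starRingEnd ℂ z) * A z‖ := norm_sub_le _ _
        _ ≤ (‖w‖ + ‖B z - z‖) + ‖(starRingEnd ℂ z)‖ * ‖A z‖ := by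
            rw [norm_mul]; exact add_le_add_left (norm_sub_le _ _) _
        _ = ‖w‖ + ‖B z - z‖ + ‖z‖ * ‖A z‖ := by rw [RCLike.norm_conj]
    have h2 : ‖z‖ * ‖A z‖ ≤ r * (r + M * r ^ 2 / (1 - r)) := by
      apply mul_le_mul hz (hAn z hz) (norm_nonneg _) hr0.le
    have h3 : M * r ^ 2 / (1 - r) + r * (r + M * r ^ 2 / (1 - r))
        = r ^ 2 + M * (r ^ 3 + r ^ 2) / (1 - r) := by
      field_simp
      ring
    have h4 : ‖w‖ < r - r ^ 2 - M * (r ^ 3 + r ^ 2) / (1 - r) := by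
      have := hwφ
      rw [hφdef] at this
      simpa using this
    calc ‖T z‖ ≤ ‖w‖ + ‖B z - z‖ + ‖z‖ * ‖A z‖ := h1
      _ ≤ ‖w‖ + M * r ^ 2 / (1 - r) + r * (r + M * r ^ 2 / (1 - r)) :=
          add_le_add (add_le_add_right (hBt z hz) _) h2
      _ = ‖w‖ + (r ^ 2 + M * (r ^ 3 + r ^ 2) / (1 - r)) := by rw [add_assoc, h3]
      _ ≤ r := by linarith
  set L : ℝ := μ * (1 + r) + 2 * r + M * r ^ 2 / (1 - r) with hLdef
  have hL1 : L < 1 := by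
    have := bianalytic_aux_lip_lt_one M s r hM1 hs hs0 hr0.le hrs
    rw [hLdef, hμdef]; linarith
  have hL0 : 0 ≤ L := by
    have h1 : 0 ≤ M * r ^ 2 / (1 - r) := by positivity
    have h2 : 0 ≤ μ * (1 + r) := mul_nonneg hμ0 (by linarith)
    rw [hLdef]; linarith
  have hdist : ∀ z₁ ∈ closedBall (0 : ℂ) r, ∀ z₂ ∈ closedBall (0 : ℂ) r,
      dist (T z₁) (T z₂) ≤ L * dist z₁ z₂ := by
    intro z₁ h₁ z₂ h₂
    rw [mem_closedBall, dist_zero_right] at h₁ h₂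
    rw [dist_eq_norm, dist_eq_norm]
    set d := ‖z₁ - z₂‖ with hd
    have hTsub : T z₁ - T z₂ =
        -((B z₁ - B z₂) - (z₁ - z₂)) - ((starRingEnd ℂ z₁ - starRingEnd ℂ z₂) * A z₁
          + starRingEnd ℂ z₂ * (A z₁ - A z₂)) := by
      rw [hTdef]; ring
    have hconj : ‖starRingEnd ℂ z₁ - starRingEnd ℂ z₂‖ = d := by
      rw [← map_sub, RCLike.norm_conj]
    calc ‖T z₁ - T z₂‖
        ≤ ‖(B z₁ - B z₂) - (z₁ - z₂)‖ + (‖starRingEnd ℂ z₁ - starRingEnd ℂ z₂‖ * ‖A z₁‖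
            + ‖starRingEnd ℂ z₂‖ * ‖A z₁ - A z₂‖) := by
          rw [hTsub]
          refine (norm_sub_le _ _).trans ?_
          rw [norm_neg]
          exact add_le_add_right ((norm_add_le _ _).trans
            (add_le_add (norm_mul_le _ _) (norm_mul_le _ _))) _
      _ ≤ μ * d + (d * (r + M * r ^ 2 / (1 - r)) + r * ((μ + 1) * d)) := by
          refine add_le_add ?_ (add_le_add ?_ ?_)
          · have := hBl z₁ z₂ h₁ h₂
            simpa using this
          · rw [hconj]
            exact mul_le_mul_of_nonneg_left (hAn z₁ h₁) (norm_nonneg _)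
          · rw [RCLike.norm_conj]
            refine mul_le_mul h₂ ?_ (norm_nonneg _) hr0.le
            calc ‖A z₁ - A z₂‖ = ‖(A z₁ - A z₂ - (z₁ - z₂)) + (z₁ - z₂)‖ := by ring_nf
              _ ≤ ‖A z₁ - A z₂ - (z₁ - z₂)‖ + d := norm_add_le _ _
              _ ≤ μ * d + d := add_le_add_left (hAl z₁ z₂ h₁ h₂) _
              _ = (μ + 1) * d := by ring
      _ = (μ * (1 + r) + (r + M * r ^ 2 / (1 - r)) + r) * d := by ring
      _ = L * d := by rw [hLdef]; ring
  -- Banach fixed point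
  set K : ℝ≥0 := L.toNNReal with hK
  have hKL : (K : ℝ) = L := Real.coe_toNNReal L hL0
  have hlip : LipschitzOnWith K T (closedBall (0 : ℂ) r) := by
    apply LipschitzOnWith.of_dist_le_mul
    intro x hx y hy
    rw [hKL]
    exact hdist x hx y hy
  have hcontr : ContractingWith K (hmaps.restrict T _ _) := by
    constructor
    · rw [← NNReal.coe_lt_coe, hKL]
      exact hL1.trans_le (by norm_num)
    · exact lipschitzOnWith_iff_restrict.mp hlip
  have h0mem : (0 : ℂ) ∈ closedBall (0 : ℂ) r := by
    rw [mem_closedBall, dist_self]; exact hr0.le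
  obtain ⟨z, hzmem, hzfix, -⟩ := hcontr.exists_fixedPoint'
    (isClosed_closedBall.isComplete) hmaps h0mem (edist_ne_top _ _)
  rw [mem_closedBall, dist_zero_right] at hzmem
  refine ⟨z, ?_, ?_⟩
  · rw [mem_ball, dist_zero_right]
    exact lt_of_le_of_lt hzmem hrρ
  · have hz1 : z ∈ ball (0 : ℂ) 1 := by
      rw [mem_ball, dist_zero_right]
      exact lt_of_le_of_lt hzmem hr1
    have hfix : w - (B z - z) - (starRingEnd ℂ z) * A z = z := hzfix
    rw [hF z hz1]
    linear_combination -hfix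
end

section
/- Let α ≥ 2 and let F(z) = Σ_{k=1}^{α−1} z̄^k A_k(z) be a poly-analytic function on the unit disk U such that each A_k (k = 1, …, α−1) is a starlike analytic function on U, and suppose M : (0,1) → (0,∞) satisfies |A_k(z)| ≤ M(r) for all |z| = r and all k. Let L(r) = ∫₀^{2π} |z F_z(z) − z̄ F_{z̄}(z)| dθ (with z = r e^{iθ}) denote the arclength of the image of the circle |z| = r under F. Then for every r ∈ (0,1): L(r) ≤ (2π M(r) r/(1−r)) · [ (1+r)((α−1) r^α − α r^{α−1} + 1)/(1−r)² − 1 + r^{α−1} ]. -/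
open Complex Metric Finset Real Set

open Filter Topology in
private lemma halfplane_bound {q : ℂ → ℂ} (hd : DifferentiableOn ℂ q (ball 0 1))
    (h0 : q 0 = 1) (hre : ∀ z ∈ ball (0:ℂ) 1, 0 < (q z).re)
    {z : ℂ} (hz : z ∈ ball (0:ℂ) 1) :
    ‖q z - 1‖ ≤ ‖z‖ * (‖q z - 1‖ + 2) := by
  have hlt : ∀ x ∈ ball (0:ℂ) 1, ‖q x - 1‖ < ‖q x + 1‖ := by
    intro x hx
    have h := hre x hx
    have h1 : Complex.normSq (q x - 1) < Complex.normSq (q x + 1) := by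
      simp only [Complex.normSq_apply, Complex.sub_re, Complex.add_re, Complex.sub_im,
        Complex.add_im, Complex.one_re, Complex.one_im]
      nlinarith
    have e1 : ‖q x - 1‖ = Real.sqrt (Complex.normSq (q x - 1)) := by
      rw [Complex.norm_def]
    have e2 : ‖q x + 1‖ = Real.sqrt (Complex.normSq (q x + 1)) := by
      rw [Complex.norm_def]
    rw [e1, e2]
    exact Real.sqrt_lt_sqrt (Complex.normSq_nonneg _) h1
  have hne : ∀ x ∈ ball (0:ℂ) 1, q x + 1 ≠ 0 := by
    intro x hx h
    have := hlt x hx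
    rw [h] at this
    simp at this
    linarith [norm_nonneg (q x - 1)]
  set w : ℂ → ℂ := fun x => (q x - 1) / (q x + 1) with hw
  have hdw : DifferentiableOn ℂ w (ball 0 1) :=
    (hd.sub (differentiableOn_const 1)).div (hd.add (differentiableOn_const 1)) hne
  have hmaps : Set.MapsTo w (ball 0 1) (ball 0 1) := by
    intro x hx
    rw [mem_ball_zero_iff]
    have hpos : 0 < ‖q x + 1‖ := norm_pos_iff.mpr (hne x hx)
    calc ‖w x‖ = ‖q x - 1‖ / ‖q x + 1‖ := norm_div _ _
      _ < 1 := (div_lt_one hpos).mpr (hlt x hx)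
  have hw0 : w 0 = 0 := by simp [hw, h0]
  have hsch : ‖w z‖ ≤ ‖z‖ := by
    refine Complex.norm_le_norm_of_mapsTo_ball hdw (hmaps.mono_right ball_subset_closedBall) hw0 ?_
    simpa [mem_ball_zero_iff] using hz
  have heq : q z - 1 = w z * (q z + 1) := by
    simp only [hw]
    rw [div_mul_cancel₀ _ (hne z hz)]
  calc ‖q z - 1‖ = ‖w z‖ * ‖q z + 1‖ := by rw [heq, norm_mul]
    _ ≤ ‖z‖ * ‖q z + 1‖ := by
        apply mul_le_mul_of_nonneg_right _ (norm_nonneg _)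
        simpa using hsch
    _ ≤ ‖z‖ * (‖q z - 1‖ + 2) := by
        apply mul_le_mul_of_nonneg_left _ (norm_nonneg _)
        calc ‖q z + 1‖ = ‖(q z - 1) + 2‖ := by ring_nf
          _ ≤ ‖q z - 1‖ + ‖(2:ℂ)‖ := norm_add_le _ _
          _ = ‖q z - 1‖ + 2 := by norm_num

open Filter Topology in
private lemma starlike_key {A : ℂ → ℂ} (hA : AnalyticOnNhd ℂ A (ball 0 1))
    (hinj : Set.InjOn A (ball 0 1)) (h0 : A 0 = 0) (h1 : deriv A 0 = 1)
    (hs : ∀ z ∈ ball (0:ℂ) 1 \ {0}, 0 < (z * deriv A z / A z).re)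
    {z : ℂ} (hz : z ∈ ball (0:ℂ) 1) (hz0 : z ≠ 0) :
    ‖z * deriv A z - A z‖ ≤ ‖A z‖ * (2 * ‖z‖ / (1 - ‖z‖)) := by
  have hball : ball (0:ℂ) 1 ∈ 𝓝 (0:ℂ) := isOpen_ball.mem_nhds (mem_ball_self one_pos)
  have hAdiff : DifferentiableOn ℂ A (ball 0 1) := hA.differentiableOn
  have hAx : ∀ x ∈ ball (0:ℂ) 1, x ≠ 0 → A x ≠ 0 := by
    intro x hx hx0 h
    exact hx0 (hinj hx (mem_ball_self one_pos) (by rw [h, h0]))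
  set g : ℂ → ℂ := dslope A 0 with hgdef
  have hg : DifferentiableOn ℂ g (ball 0 1) :=
    (Complex.differentiableOn_dslope hball).mpr hAdiff
  have hg0 : g 0 = 1 := by rw [hgdef, dslope_same, h1]
  have hgx : ∀ x : ℂ, x ≠ 0 → g x = A x / x := by
    intro x hx0
    rw [hgdef, dslope_of_ne A hx0, slope_def_field, h0, sub_zero, sub_zero]
  have hgne : ∀ x ∈ ball (0:ℂ) 1, g x ≠ 0 := by
    intro x hx
    rcases eq_or_ne x 0 with rfl | hx0
    · rw [hg0]; exact one_ne_zero
    · rw [hgx x hx0]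
      exact div_ne_zero (hAx x hx hx0) hx0
  set q : ℂ → ℂ := fun x => deriv A x / g x with hqdef
  have hq : DifferentiableOn ℂ q (ball 0 1) :=
    (hA.deriv.differentiableOn).div hg hgne
  have hq0 : q 0 = 1 := by simp [hqdef, hg0, h1]
  have hqx : ∀ x ∈ ball (0:ℂ) 1, x ≠ 0 → q x = x * deriv A x / A x := by
    intro x hx hx0
    rw [hqdef]
    simp only
    rw [hgx x hx0]
    field_simp
  have hqre : ∀ x ∈ ball (0:ℂ) 1, 0 < (q x).re := by
    intro x hx
    rcases eq_or_ne x 0 with rfl | hx0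
    · rw [hq0]; norm_num
    · rw [hqx x hx hx0]
      exact hs x ⟨hx, hx0⟩
  have key := halfplane_bound hq hq0 hqre hz
  have hr1 : ‖z‖ < 1 := by rwa [← mem_ball_zero_iff]
  have hqz : q z - 1 = (z * deriv A z - A z) / A z := by
    rw [hqx z hz hz0]
    field_simp [hAx z hz hz0]
  have hAz : A z ≠ 0 := hAx z hz hz0
  have hAzpos : 0 < ‖A z‖ := norm_pos_iff.mpr hAz
  have hnorm : ‖q z - 1‖ = ‖z * deriv A z - A z‖ / ‖A z‖ := by
    rw [hqz, norm_div]
  rw [hnorm] at key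
  set t : ℝ := ‖z * deriv A z - A z‖ / ‖A z‖ with htdef
  have ht : t ≤ 2 * ‖z‖ / (1 - ‖z‖) := by
    have h1s : (0:ℝ) < 1 - ‖z‖ := by linarith
    rw [le_div_iff₀ h1s]
    nlinarith [norm_nonneg z]
  have heq : ‖z * deriv A z - A z‖ = ‖A z‖ * t := by
    rw [htdef, mul_div_cancel₀ _ (ne_of_gt hAzpos)]
  rw [heq]
  exact mul_le_mul_of_nonneg_left ht (le_of_lt hAzpos)

private lemma geom1 (r : ℝ) : ∀ n : ℕ, 1 ≤ n →
    (1 - r) * ∑ k ∈ Ico 1 n, r^k = r - r^n := by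
  refine Nat.le_induction ?_ ?_
  · simp
  · intro n hn ih
    rw [Finset.sum_Ico_succ_top (by omega : 1 ≤ n)]
    rw [mul_add, ih]
    ring

private lemma geom2 (r : ℝ) : ∀ n : ℕ, 1 ≤ n →
    (1 - r)^2 * ∑ k ∈ Ico 1 n, (k:ℝ) * r^k
      = r * (1 - (n:ℝ) * r^(n-1) + ((n:ℝ)-1) * r^n) := by
  refine Nat.le_induction ?_ ?_
  · simp
  · intro n hn ih
    obtain ⟨j, rfl⟩ : ∃ j, n = j + 1 := ⟨n - 1, by omega⟩
    rw [Finset.sum_Ico_succ_top (by omega : 1 ≤ j + 1)]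
    rw [mul_add, ih]
    simp only [Nat.add_sub_cancel]
    push_cast
    ring

/-- **Arclength estimate for poly-analytic functions with starlike analytic parts.**
Let `F(z) = ∑_{k=1}^{α-1} conj(z)^k A k z` where each `A k` (`1 ≤ k < α`) is a starlike
analytic function on the unit disk and `‖A k z‖ ≤ M r` for `‖z‖ = r`.  Then the length
`L(r) = ∫₀^{2π} ‖z F_z - conj(z) F_z̄‖ dθ` of the image of the circle `‖z‖ = r` satisfies
`L(r) ≤ (2π M(r) r/(1-r)) [ (1+r)((α-1)r^α - α r^(α-1) + 1)/(1-r)² - 1 + r^(α-1) ]`. -/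
theorem polyanalytic_starlike_arclength
    (α : ℕ) (hα : 2 ≤ α) (A : ℕ → ℂ → ℂ) (M : ℝ → ℝ)
    (hAanal : ∀ k, 1 ≤ k → k < α → AnalyticOnNhd ℂ (A k) (ball (0 : ℂ) 1))
    (hAinj : ∀ k, 1 ≤ k → k < α → Set.InjOn (A k) (ball (0 : ℂ) 1))
    (hA0 : ∀ k, 1 ≤ k → k < α → A k 0 = 0)
    (hA1 : ∀ k, 1 ≤ k → k < α → deriv (A k) 0 = 1)
    (hstar : ∀ k, 1 ≤ k → k < α → ∀ z ∈ ball (0 : ℂ) 1 \ {0},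
      0 < (z * deriv (A k) z / A k z).re)
    (hMpos : ∀ r ∈ Ioo (0 : ℝ) 1, 0 < M r)
    (hMbound : ∀ r ∈ Ioo (0 : ℝ) 1, ∀ z : ℂ, ‖z‖ = r →
      ∀ k, 1 ≤ k → k < α → ‖A k z‖ ≤ M r) :
    ∀ r ∈ Ioo (0 : ℝ) 1,
      (∫ θ in (0 : ℝ)..(2 * π),
        ‖((r : ℂ) * Complex.exp (θ * Complex.I)) *
            (∑ k ∈ Ico 1 α, (starRingEnd ℂ ((r : ℂ) * Complex.exp (θ * Complex.I))) ^ k *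
              deriv (A k) ((r : ℂ) * Complex.exp (θ * Complex.I))) -
          (starRingEnd ℂ ((r : ℂ) * Complex.exp (θ * Complex.I))) *
            (∑ k ∈ Ico 1 α, (k : ℂ) *
              (starRingEnd ℂ ((r : ℂ) * Complex.exp (θ * Complex.I))) ^ (k - 1) *
              A k ((r : ℂ) * Complex.exp (θ * Complex.I)))‖) ≤
      2 * π * M r * r / (1 - r) *
        ((1 + r) * (((α : ℝ) - 1) * r ^ α - (α : ℝ) * r ^ (α - 1) + 1) / (1 - r) ^ 2 -
          1 + r ^ (α - 1)) := by
  intro r hr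
  obtain ⟨hr0, hr1⟩ := hr
  have h1r : (0:ℝ) < 1 - r := by linarith
  set C : ℝ := M r * ∑ k ∈ Ico 1 α, r^k * (2*r/(1-r) + ((k:ℝ)-1)) with hC
  -- pointwise bound on the integrand
  have key : ∀ z : ℂ, ‖z‖ = r →
      ‖z * (∑ k ∈ Ico 1 α, (starRingEnd ℂ z)^k * deriv (A k) z)
        - (starRingEnd ℂ z) * (∑ k ∈ Ico 1 α, (k:ℂ) * (starRingEnd ℂ z)^(k-1) * A k z)‖
        ≤ C := by
    intro z hzr
    have hzball : z ∈ ball (0:ℂ) 1 := by rw [mem_ball_zero_iff]; rw [hzr]; exact hr1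
    have hz0 : z ≠ 0 := by
      intro h; rw [h] at hzr; simp at hzr; linarith
    have e1 : z * (∑ k ∈ Ico 1 α, (starRingEnd ℂ z)^k * deriv (A k) z)
        = ∑ k ∈ Ico 1 α, (starRingEnd ℂ z)^k * (z * deriv (A k) z) := by
      rw [Finset.mul_sum]; exact Finset.sum_congr rfl fun k _ => by ring
    have e2 : (starRingEnd ℂ z) * (∑ k ∈ Ico 1 α, (k:ℂ) * (starRingEnd ℂ z)^(k-1) * A k z)
        = ∑ k ∈ Ico 1 α, (starRingEnd ℂ z)^k * ((k:ℂ) * A k z) := by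
      rw [Finset.mul_sum]
      refine Finset.sum_congr rfl fun k hk => ?_
      obtain ⟨j, rfl⟩ : ∃ j, k = j + 1 :=
        ⟨k - 1, by have := (Finset.mem_Ico.mp hk).1; omega⟩
      simp only [Nat.add_sub_cancel]
      rw [pow_succ]
      ring
    rw [e1, e2, ← Finset.sum_sub_distrib]
    calc ‖∑ k ∈ Ico 1 α, ((starRingEnd ℂ z)^k * (z * deriv (A k) z)
            - (starRingEnd ℂ z)^k * ((k:ℂ) * A k z))‖
        ≤ ∑ k ∈ Ico 1 α, ‖(starRingEnd ℂ z)^k * (z * deriv (A k) z)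
            - (starRingEnd ℂ z)^k * ((k:ℂ) * A k z)‖ := norm_sum_le _ _
      _ ≤ ∑ k ∈ Ico 1 α, r^k * (M r * (2*r/(1-r) + ((k:ℝ)-1))) := by
          refine Finset.sum_le_sum fun k hk => ?_
          obtain ⟨hk1, hk2⟩ := Finset.mem_Ico.mp hk
          have hterm : (starRingEnd ℂ z)^k * (z * deriv (A k) z)
              - (starRingEnd ℂ z)^k * ((k:ℂ) * A k z)
              = (starRingEnd ℂ z)^k * (z * deriv (A k) z - (k:ℂ) * A k z) := by ring
          rw [hterm, norm_mul, norm_pow, RCLike.norm_conj, hzr]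
          refine mul_le_mul_of_nonneg_left ?_ (by positivity)
          have hsplit : z * deriv (A k) z - (k:ℂ) * A k z
              = (z * deriv (A k) z - A k z) - ((k:ℂ) - 1) * A k z := by ring
          have hb1 : ‖z * deriv (A k) z - A k z‖ ≤ M r * (2*r/(1-r)) := by
            have hsk := starlike_key (hAanal k hk1 hk2) (hAinj k hk1 hk2) (hA0 k hk1 hk2)
              (hA1 k hk1 hk2) (hstar k hk1 hk2) hzball hz0
            rw [hzr] at hsk
            calc ‖z * deriv (A k) z - A k z‖ ≤ ‖A k z‖ * (2*r/(1-r)) := hsk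
              _ ≤ M r * (2*r/(1-r)) := by
                  apply mul_le_mul_of_nonneg_right
                    (hMbound r ⟨hr0, hr1⟩ z hzr k hk1 hk2)
                  positivity
          have hb2 : ‖((k:ℂ) - 1) * A k z‖ ≤ ((k:ℝ)-1) * M r := by
            rw [norm_mul]
            have hnk : ‖(k:ℂ) - 1‖ = (k:ℝ) - 1 := by
              obtain ⟨j, rfl⟩ : ∃ j, k = j + 1 := ⟨k-1, by omega⟩
              push_cast
              simp
            rw [hnk]
            apply mul_le_mul_of_nonneg_left (hMbound r ⟨hr0, hr1⟩ z hzr k hk1 hk2)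
            have : (1:ℝ) ≤ (k:ℝ) := by exact_mod_cast hk1
            linarith
          calc ‖z * deriv (A k) z - (k:ℂ) * A k z‖
              ≤ ‖z * deriv (A k) z - A k z‖ + ‖((k:ℂ)-1) * A k z‖ := by
                rw [hsplit]; exact norm_sub_le _ _
            _ ≤ M r * (2*r/(1-r)) + ((k:ℝ)-1) * M r := add_le_add hb1 hb2
            _ = M r * (2*r/(1-r) + ((k:ℝ)-1)) := by ring
      _ = C := by
          rw [hC, Finset.mul_sum]
          exact Finset.sum_congr rfl fun k _ => by ring
  have hznorm : ∀ θ : ℝ, ‖(r:ℂ) * Complex.exp (θ * Complex.I)‖ = r := by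
    intro θ
    rw [norm_mul, Complex.norm_exp]
    simp [abs_of_pos hr0]
  -- integral bound
  have hint : (∫ θ in (0:ℝ)..(2*π),
        ‖((r : ℂ) * Complex.exp (θ * Complex.I)) *
            (∑ k ∈ Ico 1 α, (starRingEnd ℂ ((r : ℂ) * Complex.exp (θ * Complex.I))) ^ k *
              deriv (A k) ((r : ℂ) * Complex.exp (θ * Complex.I))) -
          (starRingEnd ℂ ((r : ℂ) * Complex.exp (θ * Complex.I))) *
            (∑ k ∈ Ico 1 α, (k : ℂ) *
              (starRingEnd ℂ ((r : ℂ) * Complex.exp (θ * Complex.I))) ^ (k - 1) *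
              A k ((r : ℂ) * Complex.exp (θ * Complex.I)))‖) ≤ 2 * π * C := by
    have hb := intervalIntegral.norm_integral_le_of_norm_le_const (C := C) (a := (0:ℝ))
      (b := 2*π) (f := fun θ : ℝ =>
        ‖((r : ℂ) * Complex.exp (θ * Complex.I)) *
            (∑ k ∈ Ico 1 α, (starRingEnd ℂ ((r : ℂ) * Complex.exp (θ * Complex.I))) ^ k *
              deriv (A k) ((r : ℂ) * Complex.exp (θ * Complex.I))) -
          (starRingEnd ℂ ((r : ℂ) * Complex.exp (θ * Complex.I))) *
            (∑ k ∈ Ico 1 α, (k : ℂ) *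
              (starRingEnd ℂ ((r : ℂ) * Complex.exp (θ * Complex.I))) ^ (k - 1) *
              A k ((r : ℂ) * Complex.exp (θ * Complex.I)))‖)
      (fun x _ => by
        rw [Real.norm_eq_abs, _root_.abs_of_nonneg (norm_nonneg _)]
        exact key _ (hznorm x))
    calc (∫ θ in (0:ℝ)..(2*π), _) ≤ |∫ θ in (0:ℝ)..(2*π), _| := le_abs_self _
      _ ≤ C * |2*π - 0| := hb
      _ = 2 * π * C := by
          rw [sub_zero, abs_of_pos (by positivity)]
          ring
  refine hint.trans ?_
  -- final algebra
  have hα1 : 1 ≤ α := by omega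
  have hP := geom1 r α hα1
  have hQ := geom2 r α hα1
  set P : ℝ := ∑ k ∈ Ico 1 α, r^k with hPdef
  set Q : ℝ := ∑ k ∈ Ico 1 α, (k:ℝ) * r^k with hQdef
  have hCle : C ≤ M r * ((1+r)/(1-r) * Q - P) := by
    rw [hC]
    apply mul_le_mul_of_nonneg_left _ (le_of_lt (hMpos r ⟨hr0, hr1⟩))
    have hrw : (1+r)/(1-r) * Q - P = ∑ k ∈ Ico 1 α, r^k * ((k:ℝ)*(1+r)/(1-r) - 1) := by
      rw [hQdef, hPdef, Finset.mul_sum, ← Finset.sum_sub_distrib]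
      exact Finset.sum_congr rfl fun k _ => by ring
    rw [hrw]
    refine Finset.sum_le_sum fun k hk => ?_
    have hk1 : 1 ≤ k := (Finset.mem_Ico.mp hk).1
    have hk1' : (1:ℝ) ≤ (k:ℝ) := by exact_mod_cast hk1
    apply mul_le_mul_of_nonneg_left _ (by positivity)
    rw [← sub_nonneg]
    have hdiff : (k:ℝ)*(1+r)/(1-r) - 1 - (2*r/(1-r) + ((k:ℝ)-1))
        = 2*r*((k:ℝ)-1)/(1-r) := by
      field_simp
      ring
    rw [hdiff]
    apply div_nonneg _ h1r.le
    nlinarith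
  have htwoPi : (0:ℝ) < 2 * π := by positivity
  have hCle2 : 2 * π * C ≤ 2 * π * (M r * ((1+r)/(1-r) * Q - P)) := by
    apply mul_le_mul_of_nonneg_left hCle htwoPi.le
  refine hCle2.trans ?_
  -- equality of the closed form
  have hPval : P = (r - r^α) / (1-r) := by
    rw [eq_div_iff (ne_of_gt h1r)]
    linarith [hP]
  have hQval : Q = r * (1 - (α:ℝ)*r^(α-1) + ((α:ℝ)-1)*r^α) / (1-r)^2 := by
    rw [eq_div_iff (by positivity : ((1:ℝ)-r)^2 ≠ 0)]
    linarith [hQ]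
  apply le_of_eq
  have hpow : r^α = r^(α-1) * r := by
    conv_lhs => rw [show α = (α-1) + 1 by omega]
    rw [pow_succ]
  have h1ne : (1:ℝ) - r ≠ 0 := ne_of_gt h1r
  rw [hPval, hQval, hpow]
  field_simp
  ring
end

section
/- Let F(z) = z̄ A(z) be a bi-analytic function on the unit disk U such that A is a starlike analytic function on U, and suppose M : (0,1) → (0,∞) satisfies |A(z)| ≤ M(r) for all |z| = r. Let L(r) = ∫₀^{2π} |z F_z(z) − z̄ F_{z̄}(z)| dθ (with z = r e^{iθ}) denote the arclength of the image of the circle |z| = r under F. Then for every r ∈ (0,1): L(r) ≤ 4π M(r) r²/(1−r). -/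
open Complex Metric Real Set

/-- **Arclength estimate for bi-analytic functions with a starlike analytic part.**
Let `F(z) = conj(z) A z` where `A` is starlike analytic on the unit disk and
`‖A z‖ ≤ M r` for `‖z‖ = r`.  Then the length
`L(r) = ∫₀^{2π} ‖z F_z - conj(z) F_z̄‖ dθ` of the image of the circle `‖z‖ = r`
(where `F_z = conj(z) A'(z)` and `F_z̄ = A z`) satisfies `L(r) ≤ 4π M(r) r²/(1-r)`. -/
theorem bianalytic_starlike_arclength
    (A : ℂ → ℂ) (M : ℝ → ℝ)
    (hAanal : AnalyticOnNhd ℂ A (ball (0 : ℂ) 1))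
    (hAinj : Set.InjOn A (ball (0 : ℂ) 1))
    (hA0 : A 0 = 0) (hA1 : deriv A 0 = 1)
    (hstar : ∀ z ∈ ball (0 : ℂ) 1 \ {0}, 0 < (z * deriv A z / A z).re)
    (hMpos : ∀ r ∈ Ioo (0 : ℝ) 1, 0 < M r)
    (hMbound : ∀ r ∈ Ioo (0 : ℝ) 1, ∀ z : ℂ, ‖z‖ = r → ‖A z‖ ≤ M r) :
    ∀ r ∈ Ioo (0 : ℝ) 1,
      (∫ θ in (0 : ℝ)..(2 * π),
        ‖((r : ℂ) * Complex.exp (θ * Complex.I)) *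
            ((starRingEnd ℂ ((r : ℂ) * Complex.exp (θ * Complex.I))) *
              deriv A ((r : ℂ) * Complex.exp (θ * Complex.I))) -
          (starRingEnd ℂ ((r : ℂ) * Complex.exp (θ * Complex.I))) *
            A ((r : ℂ) * Complex.exp (θ * Complex.I))‖) ≤
      4 * π * M r * r ^ 2 / (1 - r) := by
  intro r hr
  obtain ⟨hr0, hr1⟩ := hr
  -- the analytic function g with A z = z * g z
  set g : ℂ → ℂ := dslope A 0 with hgdef
  have hball : ball (0 : ℂ) 1 ∈ nhds (0 : ℂ) := ball_mem_nhds _ one_pos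
  have hAdiff : DifferentiableOn ℂ A (ball (0 : ℂ) 1) := fun z hz =>
    (hAanal z hz).differentiableAt.differentiableWithinAt
  have hgdiff : DifferentiableOn ℂ g (ball (0 : ℂ) 1) :=
    (Complex.differentiableOn_dslope hball).mpr hAdiff
  have hg0 : g 0 = 1 := by simp [hgdef, dslope_same, hA1]
  have hAz : ∀ z : ℂ, A z = z * g z := by
    intro z
    have h := sub_smul_dslope A 0 z
    simp only [sub_zero, hA0, smul_eq_mul] at h
    rw [← hgdef] at h
    rw [← h]
  have hAne : ∀ z ∈ ball (0 : ℂ) 1, z ≠ 0 → A z ≠ 0 := by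
    intro z hz hz0 hA
    exact hz0 (hAinj hz (mem_ball_self one_pos) (by rw [hA, hA0]))
  have hgne : ∀ z ∈ ball (0 : ℂ) 1, g z ≠ 0 := by
    intro z hz
    rcases eq_or_ne z 0 with rfl | h
    · simp [hg0]
    · intro h0
      exact hAne z hz h (by rw [hAz z, h0, mul_zero])
  set p : ℂ → ℂ := fun z => deriv A z / g z with hpdef
  have hpdiff : DifferentiableOn ℂ p (ball (0 : ℂ) 1) := by
    apply DifferentiableOn.div
    · exact fun z hz => ((hAanal.deriv) z hz).differentiableAt.differentiableWithinAt
    · exact hgdiff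
    · exact hgne
  have hp0 : p 0 = 1 := by simp [hpdef, hA1, hg0]
  have hpeq : ∀ z : ℂ, z ∈ ball (0 : ℂ) 1 → z ≠ 0 → p z = z * deriv A z / A z := by
    intro z hz hz0
    have hg : g z ≠ 0 := hgne z hz
    have hA : A z ≠ 0 := hAne z hz hz0
    rw [hpdef]
    field_simp
    rw [hAz z]; ring
  have hRep : ∀ z ∈ ball (0 : ℂ) 1, 0 < (p z).re := by
    intro z hz
    rcases eq_or_ne z 0 with rfl | h
    · rw [hp0]; norm_num
    · rw [hpeq z hz h]
      exact hstar z ⟨hz, h⟩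
  have hp1 : ∀ z ∈ ball (0 : ℂ) 1, p z + 1 ≠ 0 := by
    intro z hz h0
    have := hRep z hz
    have : (p z + 1).re = (p z).re + 1 := by simp
    rw [h0] at this
    simp at this
    linarith [hRep z hz]
  -- the Schwarz function
  set w : ℂ → ℂ := fun z => (p z - 1) / (p z + 1) with hwdef
  have hwdiff : DifferentiableOn ℂ w (ball (0 : ℂ) 1) :=
    DifferentiableOn.div (hpdiff.sub (differentiableOn_const 1))
      (hpdiff.add (differentiableOn_const 1)) hp1
  have hw0 : w 0 = 0 := by simp [hwdef, hp0]
  have hwmaps : MapsTo w (ball (0 : ℂ) 1) (ball (0 : ℂ) 1) := by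
    intro z hz
    rw [mem_ball_zero_iff]
    have hre := hRep z hz
    have hne := hp1 z hz
    rw [hwdef]
    simp only
    rw [norm_div]
    rw [div_lt_one (norm_pos_iff.mpr hne)]
    have h1 : ‖p z - 1‖ ^ 2 < ‖p z + 1‖ ^ 2 := by
      rw [Complex.sq_norm, Complex.sq_norm]
      simp only [Complex.normSq_apply, Complex.sub_re, Complex.sub_im, Complex.add_re,
        Complex.add_im, Complex.one_re, Complex.one_im]
      nlinarith
    nlinarith [norm_nonneg (p z - 1), norm_nonneg (p z + 1)]
  -- Schwarz lemma bound
  have hschwarz : ∀ z : ℂ, ‖z‖ = r → ‖p z - 1‖ ≤ 2 * r / (1 - r) := by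
    intro z hz
    have hzball : z ∈ ball (0 : ℂ) 1 := by
      rw [mem_ball_zero_iff, hz]; exact hr1
    have habs : ‖w z‖ ≤ ‖z‖ :=
      Complex.norm_le_norm_of_mapsTo_ball hwdiff (hwmaps.mono_right ball_subset_closedBall) hw0
        (by rw [hz]; exact hr1)
    rw [hz] at habs
    have hne := hp1 z hzball
    have h1 : ‖p z - 1‖ ≤ r * ‖p z + 1‖ := by
      have := habs
      rw [hwdef] at this
      simp only at this
      rw [norm_div] at this
      exact (div_le_iff₀ (norm_pos_iff.mpr hne)).mp this
    have h2 : ‖p z + 1‖ ≤ ‖p z - 1‖ + 2 := by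
      calc ‖p z + 1‖ = ‖(p z - 1) + 2‖ := by ring_nf
        _ ≤ ‖p z - 1‖ + ‖(2 : ℂ)‖ := norm_add_le _ _
        _ = ‖p z - 1‖ + 2 := by norm_num
    have h3 : (1 - r) * ‖p z - 1‖ ≤ 2 * r := by nlinarith
    rw [le_div_iff₀ (by linarith)]
    linarith [h3]
  -- pointwise bound on the integrand
  set c : ℝ → ℂ := fun θ => (r : ℂ) * Complex.exp (θ * Complex.I) with hcdef
  have hcnorm : ∀ θ : ℝ, ‖c θ‖ = r := by
    intro θ
    rw [hcdef]
    simp [Complex.norm_exp, abs_of_pos hr0]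
  have hcball : ∀ θ : ℝ, c θ ∈ ball (0 : ℂ) 1 := by
    intro θ
    rw [mem_ball_zero_iff, hcnorm]; exact hr1
  set C : ℝ := r * (M r * (2 * r / (1 - r))) with hCdef
  have hbound : ∀ θ : ℝ,
      ‖c θ * ((starRingEnd ℂ (c θ)) * deriv A (c θ)) - (starRingEnd ℂ (c θ)) * A (c θ)‖ ≤ C := by
    intro θ
    have hz := hcball θ
    have hzr := hcnorm θ
    have hz0 : c θ ≠ 0 := by
      intro h; rw [h] at hzr; simp at hzr; linarith
    have key : c θ * ((starRingEnd ℂ (c θ)) * deriv A (c θ)) - (starRingEnd ℂ (c θ)) * A (c θ)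
        = (starRingEnd ℂ (c θ)) * (A (c θ) * (p (c θ) - 1)) := by
      have hg : g (c θ) ≠ 0 := hgne _ hz
      have : A (c θ) * p (c θ) = c θ * deriv A (c θ) := by
        rw [hpdef]
        simp only
        rw [hAz (c θ)]
        field_simp
      rw [mul_sub, this]; ring
    rw [key, norm_mul, norm_mul]
    rw [RCLike.norm_conj, hzr]
    have hAb : ‖A (c θ)‖ ≤ M r := hMbound r ⟨hr0, hr1⟩ _ hzr
    have hpb : ‖p (c θ) - 1‖ ≤ 2 * r / (1 - r) := hschwarz _ hzr
    rw [hCdef]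
    apply mul_le_mul_of_nonneg_left _ hr0.le
    apply mul_le_mul hAb hpb (norm_nonneg _) ((hMpos r ⟨hr0, hr1⟩).le)
  -- continuity hence integrability
  have hccont : Continuous c := by
    apply continuous_const.mul
    exact Complex.continuous_exp.comp (Complex.continuous_ofReal.mul continuous_const)
  have hcont : Continuous fun θ : ℝ =>
      ‖c θ * ((starRingEnd ℂ (c θ)) * deriv A (c θ)) - (starRingEnd ℂ (c θ)) * A (c θ)‖ := by
    rw [continuous_iff_continuousAt]
    intro θ
    have hA : ContinuousAt A (c θ) := (hAanal _ (hcball θ)).continuousAt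
    have hA' : ContinuousAt (deriv A) (c θ) := ((hAanal.deriv) _ (hcball θ)).continuousAt
    have hcθ : ContinuousAt c θ := hccont.continuousAt
    have hconj : ContinuousAt (fun θ : ℝ => (starRingEnd ℂ) (c θ)) θ :=
      (Complex.continuous_conj.continuousAt).comp hcθ
    exact (((hcθ.mul (hconj.mul (hA'.comp hcθ))).sub (hconj.mul (hA.comp hcθ)))).norm
  have hint : IntervalIntegrable (fun θ : ℝ =>
      ‖c θ * ((starRingEnd ℂ (c θ)) * deriv A (c θ)) - (starRingEnd ℂ (c θ)) * A (c θ)‖)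
      MeasureTheory.volume 0 (2 * π) := hcont.intervalIntegrable _ _
  have h2pi : (0 : ℝ) ≤ 2 * π := by positivity
  calc (∫ θ in (0 : ℝ)..(2 * π),
        ‖c θ * ((starRingEnd ℂ (c θ)) * deriv A (c θ)) - (starRingEnd ℂ (c θ)) * A (c θ)‖)
      ≤ ∫ _ in (0 : ℝ)..(2 * π), C := by
        apply intervalIntegral.integral_mono_on h2pi hint (intervalIntegrable_const)
        intro θ _
        exact hbound θ
    _ = (2 * π) * C := by
        rw [intervalIntegral.integral_const]
        simp
    _ = 4 * π * M r * r ^ 2 / (1 - r) := by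
        rw [hCdef]
        field_simp
        ring
end

section
/- Let f(z) = z̄ A(z) + B(z) be a bi-analytic function on the unit disk U such that φ(z) = A(z)/z extends to a starlike analytic function on U (i.e. A(z) = z φ(z) with φ starlike analytic), B is analytic on U, and Re( z̄ A′(z) · conj(B′(z)) ) ≥ 0 for all z ∈ U. Then for every 0 < r < 1, the area integral of the Jacobian satisfies ∫₀^r ∫₀^{2π} ( |f_z(ρe^{iθ})|² − |f_{z̄}(ρe^{iθ})|² ) ρ dθ dρ ≥ π r⁶/3. -/
open Complex Metric Real Set

lemma mean_value_circle {f : ℂ → ℂ} {ρ : ℝ} (hρ : 0 < ρ)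
    (hf : DiffContOnCl ℂ f (ball (0:ℂ) ρ)) :
    ∫ θ in (0:ℝ)..(2*π), f ((ρ:ℂ) * Complex.exp (θ * Complex.I)) = 2 * π * f 0 := by
  have h0 : (0:ℂ) ∈ ball (0:ℂ) ρ := by simpa using hρ
  have key := hf.circleIntegral_sub_inv_smul h0
  rw [circleIntegral] at key
  simp only [deriv_circleMap, sub_zero, smul_eq_mul] at key
  have hne : ∀ θ : ℝ, circleMap 0 ρ θ ≠ 0 := fun θ => circleMap_ne_center hρ.ne'
  have heq : ∀ θ : ℝ, circleMap 0 ρ θ * Complex.I * ((circleMap 0 ρ θ)⁻¹ * f (circleMap 0 ρ θ))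
      = Complex.I * f (circleMap 0 ρ θ) := by
    intro θ; have h := hne θ; field_simp
  rw [intervalIntegral.integral_congr (fun θ _ => heq θ)] at key
  rw [intervalIntegral.integral_const_mul] at key
  have key2 : ∫ θ in (0:ℝ)..(2*π), f (circleMap 0 ρ θ) = 2 * π * f 0 :=
    mul_left_cancel₀ Complex.I_ne_zero (by rw [key]; ring)
  have hcm : ∀ θ : ℝ, circleMap 0 ρ θ = (ρ:ℂ) * Complex.exp (θ * Complex.I) := by
    intro θ; simp [circleMap]
  simpa only [hcm] using key2

/-- The Jacobian-type integrand. -/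
noncomputable def Jf (A B : ℂ → ℂ) (z : ℂ) : ℝ :=
  ‖(starRingEnd ℂ z) * deriv A z + deriv B z‖ ^ 2 - ‖A z‖ ^ 2

lemma normSq_lower (w : ℂ) : 2 * w.re - 1 ≤ Complex.normSq w := by
  have h := Complex.normSq_nonneg (w - 1)
  rw [Complex.normSq_sub] at h
  simp only [map_one, mul_one, Complex.normSq_one] at h
  linarith

/-- **Minimal area for bi-analytic functions `conj(z) A z + B z`.**
Let `f(z) = conj(z) A z + B z` with `A z = z φ z`, `φ` starlike analytic, `B` analytic,
and `Re(conj(z) A'(z) conj(B'(z))) ≥ 0` on the unit disk.  Then for `0 < r < 1` the area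
integral of the Jacobian `J_f = ‖f_z‖² - ‖f_z̄‖²` (with `f_z = conj(z) A' + B'`,
`f_z̄ = A`) over the disk of radius `r` is at least `π r⁶ / 3`. -/
theorem bianalytic_minimal_area
    (A B φ : ℂ → ℂ) (r : ℝ) (hr0 : 0 < r) (hr1 : r < 1)
    (hφanal : AnalyticOnNhd ℂ φ (ball (0 : ℂ) 1))
    (hφinj : Set.InjOn φ (ball (0 : ℂ) 1))
    (hφ0 : φ 0 = 0) (hφ1 : deriv φ 0 = 1)
    (hφstar : ∀ z ∈ ball (0 : ℂ) 1 \ {0}, 0 < (z * deriv φ z / φ z).re)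
    (hAφ : ∀ z ∈ ball (0 : ℂ) 1, A z = z * φ z)
    (hBanal : AnalyticOnNhd ℂ B (ball (0 : ℂ) 1))
    (hRe : ∀ z ∈ ball (0 : ℂ) 1,
      0 ≤ ((starRingEnd ℂ z) * deriv A z * (starRingEnd ℂ (deriv B z))).re) :
    π * r ^ 6 / 3 ≤
      ∫ ρ in (0 : ℝ)..r, ∫ θ in (0 : ℝ)..(2 * π),
        (‖(starRingEnd ℂ ((ρ : ℂ) * Complex.exp (θ * Complex.I))) *
              deriv A ((ρ : ℂ) * Complex.exp (θ * Complex.I)) +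
            deriv B ((ρ : ℂ) * Complex.exp (θ * Complex.I))‖ ^ 2 -
          ‖A ((ρ : ℂ) * Complex.exp (θ * Complex.I))‖ ^ 2) * ρ := by
  have hπ : (0:ℝ) < π := Real.pi_pos
  set U : Set ℂ := ball (0:ℂ) 1 with hU
  -- derivative of A on U
  have hA' : ∀ z ∈ U, deriv A z = φ z + z * deriv φ z := by
    intro z hz
    have hev : A =ᶠ[nhds z] fun w => w * φ w :=
      Filter.eventuallyEq_of_mem (isOpen_ball.mem_nhds hz) hAφ
    rw [hev.deriv_eq, deriv_fun_mul differentiableAt_fun_id (hφanal z hz).differentiableAt]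
    simp
  -- continuity facts
  have hcφ : ContinuousOn φ U := hφanal.continuousOn
  have hcφ' : ContinuousOn (deriv φ) U := hφanal.deriv.continuousOn
  have hcA : ContinuousOn A U := (continuousOn_id.mul hcφ).congr hAφ
  have hcA' : ContinuousOn (deriv A) U := (hcφ.add (continuousOn_id.mul hcφ')).congr hA'
  have hcB' : ContinuousOn (deriv B) U := hBanal.deriv.continuousOn
  have hcg : ContinuousOn (Jf A B) U :=
    (((Complex.continuous_conj.continuousOn.mul hcA').add hcB').norm.pow 2).sub
      ((hcA.norm).pow 2)
  -- norms to normSq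
  have nrm : ∀ w : ℂ, ‖w‖ ^ 2 = Complex.normSq w := fun w => by
    rw [Complex.sq_norm]
  -- φ nonvanishing away from 0
  have hφne : ∀ z ∈ U, z ≠ 0 → φ z ≠ 0 := by
    intro z hz hz0 h0
    have h := hφstar z ⟨hz, hz0⟩
    rw [h0, div_zero] at h
    simp at h
  -- key pointwise inequality
  have key1 : ∀ z ∈ U, z ≠ 0 →
      Complex.normSq z ^ 2 * Complex.normSq (deriv φ z) ≤ Jf A B z := by
    intro z hz hz0
    have hAz := hAφ z hz
    have hA'z := hA' z hz
    have hpne := hφne z hz hz0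
    set p := φ z with hp
    set q := deriv φ z with hq
    set b := deriv B z with hb
    have hcross1 : 0 ≤ ((starRingEnd ℂ z) * deriv A z * (starRingEnd ℂ b)).re := hRe z hz
    have hcross2 : 0 ≤ ((starRingEnd ℂ z) * p * (starRingEnd ℂ q)).re := by
      have hx : z * q / p * (Complex.normSq p : ℂ) = z * q * (starRingEnd ℂ p) := by
        rw [← Complex.mul_conj]; field_simp
      have h1 : (starRingEnd ℂ z) * p * (starRingEnd ℂ q)
          = starRingEnd ℂ (z * q / p * (Complex.normSq p : ℂ)) := by
        rw [hx]
        simp only [map_mul, Complex.conj_conj]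
        ring
      rw [h1, Complex.conj_re, Complex.mul_re, Complex.ofReal_re, Complex.ofReal_im, mul_zero,
        sub_zero]
      exact mul_nonneg (le_of_lt (hφstar z ⟨hz, hz0⟩)) (Complex.normSq_nonneg p)
    have e1 : ‖(starRingEnd ℂ z) * deriv A z + b‖ ^ 2
        = Complex.normSq ((starRingEnd ℂ z) * deriv A z) + Complex.normSq b
          + 2 * (((starRingEnd ℂ z) * deriv A z) * (starRingEnd ℂ b)).re := by
      rw [nrm, Complex.normSq_add]
    have e2 : Complex.normSq ((starRingEnd ℂ z) * deriv A z)
        = Complex.normSq (z * p + z ^ 2 * q) := by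
      rw [Complex.normSq_mul, Complex.normSq_conj, ← Complex.normSq_mul]
      congr 1
      rw [hA'z]; ring
    have e3 : Complex.normSq (z * p + z ^ 2 * q)
        = Complex.normSq (z * p) + Complex.normSq z ^ 2 * Complex.normSq q
          + 2 * ((z * p) * (starRingEnd ℂ (z ^ 2 * q))).re := by
      simp only [Complex.normSq_add, Complex.normSq_mul, map_pow]
    have e4 : ((z * p) * (starRingEnd ℂ (z ^ 2 * q))).re
        = Complex.normSq z * ((starRingEnd ℂ z) * p * (starRingEnd ℂ q)).re := by
      have h : (z * p) * (starRingEnd ℂ (z ^ 2 * q))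
          = (Complex.normSq z : ℂ) * ((starRingEnd ℂ z) * p * (starRingEnd ℂ q)) := by
        rw [← Complex.mul_conj]
        simp only [map_mul, map_pow]
        ring
      rw [h, Complex.mul_re, Complex.ofReal_re, Complex.ofReal_im, zero_mul, sub_zero]
    have e0 : ‖A z‖ ^ 2 = Complex.normSq (z * p) := by rw [hAz, nrm]
    have hb2 : 0 ≤ Complex.normSq b := Complex.normSq_nonneg b
    have hz2 : 0 ≤ Complex.normSq z := Complex.normSq_nonneg z
    unfold Jf
    rw [e1, e0, e2, e3, e4]
    nlinarith [mul_nonneg hz2 hcross2]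
  -- membership of circle points
  have hmem : ∀ (ρ θ : ℝ), |ρ| ≤ r → ((ρ:ℂ) * Complex.exp (θ * Complex.I)) ∈ U := by
    intro ρ θ h
    rw [hU, mem_ball, dist_zero_right, norm_mul, Complex.norm_real, Real.norm_eq_abs,
      Complex.norm_exp_ofReal_mul_I, mul_one]
    exact lt_of_le_of_lt h hr1
  -- inner integral estimate
  have inner_est : ∀ ρ ∈ Ioc (0:ℝ) r,
      2 * π * ρ ^ 5 ≤ ∫ θ in (0:ℝ)..(2*π), Jf A B ((ρ:ℂ) * Complex.exp (θ * Complex.I)) * ρ := by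
    intro ρ hρ
    obtain ⟨hρ0, hρr⟩ := hρ
    have hρ1 : ρ < 1 := lt_of_le_of_lt hρr hr1
    have hmemθ : ∀ θ : ℝ, ((ρ:ℂ) * Complex.exp (θ * Complex.I)) ∈ U := fun θ =>
      hmem ρ θ (by rw [abs_of_pos hρ0]; exact hρr)
    have hcz : Continuous fun θ : ℝ => (ρ:ℂ) * Complex.exp (θ * Complex.I) := by fun_prop
    have hne0 : ∀ θ : ℝ, ((ρ:ℂ) * Complex.exp (θ * Complex.I)) ≠ 0 := fun θ =>
      mul_ne_zero (Complex.ofReal_ne_zero.mpr hρ0.ne') (Complex.exp_ne_zero _)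
    have hu : Continuous fun θ : ℝ => Jf A B ((ρ:ℂ) * Complex.exp (θ * Complex.I)) * ρ :=
      (hcg.comp_continuous hcz hmemθ).mul continuous_const
    have hl : Continuous fun θ : ℝ =>
        ρ ^ 5 * (2 * (deriv φ ((ρ:ℂ) * Complex.exp (θ * Complex.I))).re - 1) :=
      continuous_const.mul (((continuous_const.mul
        (Complex.continuous_re.comp (hcφ'.comp_continuous hcz hmemθ)))).sub continuous_const)
    have hnsz : ∀ θ : ℝ, Complex.normSq ((ρ:ℂ) * Complex.exp (θ * Complex.I)) = ρ ^ 2 := by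
      intro θ
      rw [← Complex.sq_norm, norm_mul, Complex.norm_real, Real.norm_eq_abs, Complex.norm_exp_ofReal_mul_I, mul_one,
        _root_.sq_abs]
    have hpt : ∀ θ ∈ Icc (0:ℝ) (2*π),
        ρ ^ 5 * (2 * (deriv φ ((ρ:ℂ) * Complex.exp (θ * Complex.I))).re - 1)
          ≤ Jf A B ((ρ:ℂ) * Complex.exp (θ * Complex.I)) * ρ := by
      intro θ _
      have h1 := key1 _ (hmemθ θ) (hne0 θ)
      rw [hnsz θ] at h1
      have h2 := normSq_lower (deriv φ ((ρ:ℂ) * Complex.exp (θ * Complex.I)))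
      nlinarith [pow_pos hρ0 5, pow_pos hρ0 4]
    -- mean value for deriv φ
    have hdc : DiffContOnCl ℂ (deriv φ) (ball (0:ℂ) ρ) := by
      refine ⟨(hφanal.deriv.differentiableOn).mono (ball_subset_ball hρ1.le), hcφ'.mono ?_⟩
      rw [closure_ball (0:ℂ) hρ0.ne']
      exact closedBall_subset_ball hρ1
    have hmv : ∫ θ in (0:ℝ)..(2*π), deriv φ ((ρ:ℂ) * Complex.exp (θ * Complex.I))
        = 2 * π := by
      have := mean_value_circle hρ0 hdc
      rw [hφ1] at this
      simpa using this
    have hint : IntervalIntegrable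
        (fun θ : ℝ => deriv φ ((ρ:ℂ) * Complex.exp (θ * Complex.I))) MeasureTheory.volume
        0 (2*π) := (hcφ'.comp_continuous hcz hmemθ).intervalIntegrable _ _
    have hre : ∫ θ in (0:ℝ)..(2*π), (deriv φ ((ρ:ℂ) * Complex.exp (θ * Complex.I))).re
        = 2 * π := by
      have h := Complex.reCLM.intervalIntegral_comp_comm hint
      simp only [Complex.reCLM_apply] at h
      rw [h, hmv]
      simp
    have hreint : IntervalIntegrable
        (fun θ : ℝ => 2 * (deriv φ ((ρ:ℂ) * Complex.exp (θ * Complex.I))).re)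
        MeasureTheory.volume 0 (2*π) := by
      apply Continuous.intervalIntegrable
      exact continuous_const.mul (Complex.continuous_re.comp (hcφ'.comp_continuous hcz hmemθ))
    have hlow : ∫ θ in (0:ℝ)..(2*π),
        ρ ^ 5 * (2 * (deriv φ ((ρ:ℂ) * Complex.exp (θ * Complex.I))).re - 1) = 2 * π * ρ ^ 5 := by
      rw [intervalIntegral.integral_const_mul,
        intervalIntegral.integral_sub hreint intervalIntegrable_const,
        intervalIntegral.integral_const_mul, hre, intervalIntegral.integral_const]
      simp
      ring
    calc 2 * π * ρ ^ 5
        = ∫ θ in (0:ℝ)..(2*π),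
            ρ ^ 5 * (2 * (deriv φ ((ρ:ℂ) * Complex.exp (θ * Complex.I))).re - 1) := hlow.symm
      _ ≤ _ := intervalIntegral.integral_mono_on (by positivity)
          (hl.intervalIntegrable _ _) (hu.intervalIntegrable _ _) hpt
  -- the clamp and outer integrability
  set cl : ℝ → ℝ := fun ρ => min (max ρ 0) r with hcl_def
  have hcl : Continuous cl := (continuous_id.max continuous_const).min continuous_const
  have hclmem : ∀ ρ : ℝ, |cl ρ| ≤ r := by
    intro ρ
    have h0 : 0 ≤ cl ρ := le_min (le_max_right _ _) hr0.le
    have h1 : cl ρ ≤ r := min_le_right _ _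
    rw [_root_.abs_of_nonneg h0]; exact h1
  have hcleq : ∀ ρ ∈ Icc (0:ℝ) r, cl ρ = ρ := by
    intro ρ hρ
    simp only [hcl_def]
    rw [max_eq_left hρ.1, min_eq_left hρ.2]
  have hFc : Continuous (Function.uncurry fun ρ θ : ℝ =>
      Jf A B ((cl ρ : ℂ) * Complex.exp (θ * Complex.I)) * cl ρ) := by
    have hczz : Continuous fun p : ℝ × ℝ => ((cl p.1 : ℂ) * Complex.exp (p.2 * Complex.I)) := by
      fun_prop
    have hmapp : ∀ p : ℝ × ℝ, ((cl p.1 : ℂ) * Complex.exp (p.2 * Complex.I)) ∈ U := fun p =>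
      hmem _ _ (hclmem _)
    exact (hcg.comp_continuous hczz hmapp).mul (hcl.comp continuous_fst)
  have hIcont : Continuous fun ρ : ℝ => ∫ θ in (0:ℝ)..(2*π),
      Jf A B ((cl ρ : ℂ) * Complex.exp (θ * Complex.I)) * cl ρ :=
    intervalIntegral.continuous_parametric_intervalIntegral_of_continuous' hFc 0 (2*π)
  have hI0int : IntervalIntegrable
      (fun ρ : ℝ => ∫ θ in (0:ℝ)..(2*π), Jf A B ((ρ:ℂ) * Complex.exp (θ * Complex.I)) * ρ)
      MeasureTheory.volume 0 r := by
    rw [intervalIntegrable_iff_integrableOn_Ioc_of_le hr0.le]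
    refine (hIcont.integrableOn_Ioc).congr_fun ?_ measurableSet_Ioc
    intro ρ hρ
    have h := hcleq ρ (Ioc_subset_Icc_self hρ)
    simp only [h]
  have houter : ∀ ρ ∈ Icc (0:ℝ) r,
      2 * π * ρ ^ 5 ≤ ∫ θ in (0:ℝ)..(2*π), Jf A B ((ρ:ℂ) * Complex.exp (θ * Complex.I)) * ρ := by
    intro ρ hρ
    rcases eq_or_lt_of_le hρ.1 with h0 | h0
    · simp [← h0]
    · exact inner_est ρ ⟨h0, hρ.2⟩
  have hmono := intervalIntegral.integral_mono_on hr0.le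
    ((continuous_const.mul (continuous_pow 5)).intervalIntegrable _ _) hI0int houter
  have hlowval : ∫ ρ in (0:ℝ)..r, 2 * π * ρ ^ 5 = π * r ^ 6 / 3 := by
    rw [intervalIntegral.integral_const_mul, integral_pow]
    ring
  rw [← hlowval]
  exact hmono
end

section
/- Let F(z) = z̄ A(z) be a bi-analytic function on the unit disk U, where A is analytic on U, univalent, with A(0) = 0 and A′(0) = 1, and A(z) ≠ 0 for z ∈ U ∖ {0}. Define Φ(z) = z F(z) = |z|² A(z). Then the following are equivalent: (i) Re( z A′(z)/A(z) ) > 0 for all z ∈ U ∖ {0} (i.e. A is starlike); (ii) the Jacobian J_Φ(z) = |Φ_z(z)|² − |Φ_{z̄}(z)|² > 0 for all z ∈ U ∖ {0} and Re( (z Φ_z(z) − z̄ Φ_{z̄}(z))/Φ(z) ) > 0 for all z ∈ U ∖ {0} (i.e. Φ is starlike in the sense of complex-valued mappings). -/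
open Complex Metric Set

/-- **Starlikeness linkage between `A` and `Φ(z) = |z|² A z`.**
Let `F(z) = conj(z) A z` be bi-analytic on the unit disk, `A` analytic, univalent,
`A 0 = 0`, `A'(0) = 1` and `A z ≠ 0` for `z ≠ 0`.  With `Φ(z) = z F(z) = |z|² A z`
(so `Φ_z = conj(z) A z + z conj(z) A'(z)` and `Φ_z̄ = z A z`), the function `A` is
starlike iff `Φ` is starlike as a complex-valued mapping, i.e.
`J_Φ = ‖Φ_z‖² - ‖Φ_z̄‖² > 0` and `Re((z Φ_z - conj(z) Φ_z̄)/Φ) > 0` on `U ∖ {0}`. -/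
theorem bianalytic_starlike_iff
    (A : ℂ → ℂ)
    (hAanal : AnalyticOnNhd ℂ A (ball (0 : ℂ) 1))
    (hAinj : Set.InjOn A (ball (0 : ℂ) 1))
    (hA0 : A 0 = 0) (hA1 : deriv A 0 = 1)
    (hAne : ∀ z ∈ ball (0 : ℂ) 1 \ {0}, A z ≠ 0) :
    (∀ z ∈ ball (0 : ℂ) 1 \ {0}, 0 < (z * deriv A z / A z).re) ↔
      ((∀ z ∈ ball (0 : ℂ) 1 \ {0},
          0 < ‖(starRingEnd ℂ z) * A z + z * (starRingEnd ℂ z) * deriv A z‖ ^ 2 -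
            ‖z * A z‖ ^ 2) ∧
        (∀ z ∈ ball (0 : ℂ) 1 \ {0},
          0 < ((z * ((starRingEnd ℂ z) * A z + z * (starRingEnd ℂ z) * deriv A z) -
              (starRingEnd ℂ z) * (z * A z)) /
            (z * (starRingEnd ℂ z) * A z)).re)) := by
  have key : ∀ z ∈ ball (0 : ℂ) 1 \ {0},
      ((z * ((starRingEnd ℂ z) * A z + z * (starRingEnd ℂ z) * deriv A z) -
          (starRingEnd ℂ z) * (z * A z)) / (z * (starRingEnd ℂ z) * A z))
        = z * deriv A z / A z := by
    intro z hz
    have hz0 : z ≠ 0 := hz.2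
    have hcz : (starRingEnd ℂ z) ≠ 0 := by simpa using hz0
    have ha : A z ≠ 0 := hAne z hz
    field_simp
    ring
  constructor
  · intro h
    refine ⟨?_, ?_⟩
    · intro z hz
      have hz0 : z ≠ 0 := hz.2
      have ha : A z ≠ 0 := hAne z hz
      have hre : 0 < (z * deriv A z / A z).re := h z hz
      -- positivity of Re((z d) * conj a)
      have hdiv : z * deriv A z / A z
          = (z * deriv A z * (starRingEnd ℂ) (A z)) / ((Complex.normSq (A z) : ℝ) : ℂ) := by
        rw [div_eq_mul_inv, Complex.inv_def, div_eq_mul_inv, ← mul_assoc, Complex.ofReal_inv]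
      have hnsq : (0:ℝ) < Complex.normSq (A z) := Complex.normSq_pos.mpr ha
      have hcre : 0 < (z * deriv A z * (starRingEnd ℂ) (A z)).re := by
        rw [hdiv, Complex.div_ofReal_re] at hre
        exact (div_pos_iff.mp hre).resolve_right (fun h' => absurd hnsq (not_lt.mpr h'.2.le)) |>.1
      have h1 : (starRingEnd ℂ z) * A z + z * (starRingEnd ℂ z) * deriv A z
          = (starRingEnd ℂ z) * (A z + z * deriv A z) := by ring
      rw [h1]
      have hnorm : ‖(starRingEnd ℂ z) * (A z + z * deriv A z)‖ ^ 2 - ‖z * A z‖ ^ 2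
          = ‖z‖ ^ 2 * (‖A z + z * deriv A z‖ ^ 2 - ‖A z‖ ^ 2) := by
        simp only [norm_mul, mul_pow, RCLike.norm_conj]
        ring
      rw [hnorm]
      have hz2 : (0:ℝ) < ‖z‖ ^ 2 := pow_pos (norm_pos_iff.mpr hz0) 2
      refine mul_pos hz2 ?_
      have hexp : ‖A z + z * deriv A z‖ ^ 2 - ‖A z‖ ^ 2
          = ‖z * deriv A z‖ ^ 2 + 2 * (z * deriv A z * (starRingEnd ℂ) (A z)).re := by
        rw [Complex.sq_norm,
          Complex.sq_norm, Complex.sq_norm, Complex.normSq_add]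
        have : (A z * (starRingEnd ℂ) (z * deriv A z)).re
            = (z * deriv A z * (starRingEnd ℂ) (A z)).re := by
          simp [Complex.mul_re]; ring
        rw [this]; ring
      rw [hexp]
      have : (0:ℝ) ≤ ‖z * deriv A z‖ ^ 2 := by positivity
      linarith
    · intro z hz
      rw [key z hz]; exact h z hz
  · rintro ⟨h1, h2⟩ z hz
    have := h2 z hz
    rwa [key z hz] at this
end
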